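/- arXiv:2303.06992 — 7 statements merged into one kernel-verified Lean document; each statement's English description precedes it below -/
import Mathlib

section
/- (Improvement of the IWAE lower bound on log Z over the single-sample ELBO.) For every integer K ≥ 1, ELBO_IWAE(q,K) = ELBO(q) + ∫_{Ω^K} (∏_{k=1}^K q(z_k)) · KL(u ‖ ŵ(z)) dμ^K(z), where u = (1/K,…,1/K) and ŵ(z) are the SNIS weights. Moreover the correction term satisfies 0 ≤ ∫_{Ω^K} (∏_{k=1}^K q(z_k)) · KL(u ‖ ŵ(z)) dμ^K(z) ≤ ∫ q · log(q/p) dμ (the KL divergence of p from q), and consequently ELBO(q) ≤ ELBO_IWAE(q,K) ≤ log Z. -/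
open MeasureTheory Real

noncomputable section

namespace Stmt0

variable {Ω : Type*} [MeasurableSpace Ω]

/-- Importance ratio `r_k(z) = p̃(z_k) / q(z_k)`. -/
def ratio (q ptil : Ω → ℝ) {K : ℕ} (z : Fin K → Ω) (k : Fin K) : ℝ :=
  ptil (z k) / q (z k)

/-- Self-normalized importance-sampling weights `ŵ_s(z)`. -/
def snis (q ptil : Ω → ℝ) {K : ℕ} (z : Fin K → Ω) (s : Fin K) : ℝ :=
  ratio q ptil z s / ∑ k, ratio q ptil z k

/-- Single-sample evidence lower bound `ELBO(q) = ∫ q log(p̃/q) dμ`. -/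
def ELBO (μ : Measure Ω) (q ptil : Ω → ℝ) : ℝ :=
  ∫ ω, q ω * log (ptil ω / q ω) ∂μ

/-- Multi-sample IWAE lower bound on `log Z`. -/
def ELBO_IWAE (μ : Measure Ω) (q ptil : Ω → ℝ) (K : ℕ) : ℝ :=
  ∫ z : Fin K → Ω, (∏ k, q (z k)) * log ((1 / (K : ℝ)) * ∑ k, ratio q ptil z k)
    ∂(Measure.pi fun _ : Fin K => μ)

/-- `KL(u ‖ ŵ(z))`, the KL divergence of the uniform vector from the SNIS weights. -/
def KLuw (q ptil : Ω → ℝ) {K : ℕ} (z : Fin K → Ω) : ℝ :=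
  (1 / (K : ℝ)) * ∑ s, log (1 / ((K : ℝ) * snis q ptil z s))

lemma integral_pi_prod {K : ℕ} (μ : Measure Ω) [SigmaFinite μ] (f : Fin K → Ω → ℝ) :
    ∫ z : Fin K → Ω, ∏ k, f k (z k) ∂(Measure.pi fun _ : Fin K => μ) = ∏ k, ∫ x, f k x ∂μ := by
  letI : MeasureSpace Ω := ⟨μ⟩
  haveI : SigmaFinite (volume : Measure Ω) := ‹SigmaFinite μ›
  exact MeasureTheory.integral_fintype_prod_eq_prod (𝕜 := ℝ) f (μ := fun _ => μ)

lemma integrable_pi_prod {K : ℕ} (μ : Measure Ω) [SigmaFinite μ] {f : Fin K → Ω → ℝ}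
    (hf : ∀ k, Integrable (f k) μ) :
    Integrable (fun z : Fin K → Ω => ∏ k, f k (z k)) (Measure.pi fun _ : Fin K => μ) := by
  letI : MeasureSpace Ω := ⟨μ⟩
  haveI : SigmaFinite (volume : Measure Ω) := ‹SigmaFinite μ›
  exact MeasureTheory.Integrable.fintype_prod (𝕜 := ℝ) (f := f) hf

/-- Improvement of the IWAE lower bound on `log Z` over the single-sample ELBO. -/
theorem elbo_iwae_improvement
    (μ : Measure Ω) [SigmaFinite μ] (q ptil : Ω → ℝ)
    (hq_meas : Measurable q) (hq_nonneg : ∀ ω, 0 ≤ q ω)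
    (hq_pos : ∀ᵐ ω ∂μ, 0 < q ω) (hq_norm : ∫ ω, q ω ∂μ = 1)
    (hptil_meas : Measurable ptil) (hptil_pos : ∀ᵐ ω ∂μ, 0 < ptil ω)
    (hptil_int : Integrable ptil μ)
    (Z : ℝ) (hZ : Z = ∫ ω, ptil ω ∂μ) (hZ_pos : 0 < Z)
    (K : ℕ) (hK : 1 ≤ K)
    (h_int_elbo : Integrable (fun ω => q ω * log (ptil ω / q ω)) μ)
    (h_int_iwae : Integrable
      (fun z : Fin K → Ω => (∏ k, q (z k)) * log ((1 / (K : ℝ)) * ∑ k, ratio q ptil z k))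
      (Measure.pi fun _ : Fin K => μ))
    (h_int_corr : Integrable
      (fun z : Fin K → Ω => (∏ k, q (z k)) * KLuw q ptil z)
      (Measure.pi fun _ : Fin K => μ))
    (h_int_revkl : Integrable (fun ω => q ω * log (q ω / (ptil ω / Z))) μ) :
    ELBO_IWAE μ q ptil K
      = ELBO μ q ptil
        + ∫ z : Fin K → Ω, (∏ k, q (z k)) * KLuw q ptil z
            ∂(Measure.pi fun _ : Fin K => μ) ∧
    0 ≤ ∫ z : Fin K → Ω, (∏ k, q (z k)) * KLuw q ptil z
          ∂(Measure.pi fun _ : Fin K => μ) ∧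
    (∫ z : Fin K → Ω, (∏ k, q (z k)) * KLuw q ptil z
        ∂(Measure.pi fun _ : Fin K => μ))
      ≤ ∫ ω, q ω * log (q ω / (ptil ω / Z)) ∂μ ∧
    ELBO μ q ptil ≤ ELBO_IWAE μ q ptil K ∧
    ELBO_IWAE μ q ptil K ≤ log Z := by
  have hKpos : 0 < K := hK
  haveI : Nonempty (Fin K) := Fin.pos_iff_nonempty.mp hKpos
  have hKR : (0:ℝ) < (K:ℝ) := by exact_mod_cast hKpos
  have hq_int : Integrable q μ := integrable_of_integral_eq_one hq_norm
  have hZval : ∫ ω, ptil ω ∂μ = Z := hZ.symm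
  set P : Measure (Fin K → Ω) := Measure.pi fun _ : Fin K => μ with hP
  -- good set
  set S : Set Ω := {ω | 0 < q ω ∧ 0 < ptil ω} with hS_def
  have hS_ae : ∀ᵐ ω ∂μ, ω ∈ S := hq_pos.and hptil_pos
  have hSc : μ Sᶜ = 0 := by
    have := ae_iff.mp hS_ae
    simpa [Set.compl_def] using this
  have hgood : ∀ᵐ z ∂P, ∀ k, z k ∈ S := by
    rw [ae_all_iff]
    intro k
    rw [ae_iff]
    have hset : {z : Fin K → Ω | ¬ z k ∈ S}
        = Set.pi Set.univ (Function.update (fun _ : Fin K => (Set.univ : Set Ω)) k Sᶜ) := by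
      ext z
      simp only [Set.mem_setOf_eq, Set.mem_pi, Set.mem_univ, forall_true_left]
      constructor
      · intro h j
        rcases eq_or_ne j k with rfl | hj
        · simpa [Function.update_self] using h
        · simp [Function.update_of_ne hj]
      · intro h
        have := h k
        simpa [Function.update_self] using this
    rw [hP, hset, Measure.pi_pi]
    refine Finset.prod_eq_zero (Finset.mem_univ k) ?_
    simpa [Function.update_self] using hSc
  -- pointwise facts on the good set
  have hr_pos : ∀ z : Fin K → Ω, (∀ k, z k ∈ S) → ∀ k, 0 < ratio q ptil z k := by
    intro z hz k
    exact div_pos (hz k).2 (hz k).1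
  have hR_pos : ∀ z : Fin K → Ω, (∀ k, z k ∈ S) → 0 < ∑ k, ratio q ptil z k := by
    intro z hz
    exact Finset.sum_pos (fun k _ => hr_pos z hz k) Finset.univ_nonempty
  have hKL_eq : ∀ z : Fin K → Ω, (∀ k, z k ∈ S) →
      KLuw q ptil z = log ((1 / (K : ℝ)) * ∑ k, ratio q ptil z k)
        - (1 / (K : ℝ)) * ∑ s, log (ratio q ptil z s) := by
    intro z hz
    have hR := hR_pos z hz
    have hterm : ∀ s : Fin K, log (1 / ((K : ℝ) * snis q ptil z s))
        = log (∑ k, ratio q ptil z k) - log (K : ℝ) - log (ratio q ptil z s) := by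
      intro s
      have hrs := hr_pos z hz s
      have h1 : (1:ℝ) / ((K : ℝ) * snis q ptil z s)
          = (∑ k, ratio q ptil z k) / ((K : ℝ) * ratio q ptil z s) := by
        rw [snis]
        field_simp
      rw [h1, Real.log_div hR.ne' (by positivity), Real.log_mul hKR.ne' hrs.ne']
      ring
    rw [KLuw]
    rw [Finset.sum_congr rfl fun s _ => hterm s]
    rw [Finset.sum_sub_distrib, Finset.sum_sub_distrib, Finset.sum_const, Finset.sum_const,
      Finset.card_univ, Fintype.card_fin]
    rw [Real.log_mul (by positivity) hR.ne', Real.log_div one_ne_zero hKR.ne']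
    field_simp
    simp only [Real.log_one]; ring
  -- the middle function F
  set f : Fin K → Fin K → Ω → ℝ :=
    fun s k x => if k = s then q x * log (ptil x / q x) else q x with hf_def
  have hFpt : ∀ (s : Fin K) (z : Fin K → Ω),
      (∏ k, f s k (z k)) = (∏ k, q (z k)) * log (ratio q ptil z s) := by
    intro s z
    calc (∏ k, f s k (z k))
        = ∏ k, (q (z k) * (if k = s then log (ratio q ptil z s) else 1)) := by
          refine Finset.prod_congr rfl fun k _ => ?_
          rcases eq_or_ne k s with rfl | h
          · simp [hf_def, ratio]
          · simp [hf_def, h]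
      _ = (∏ k, q (z k)) * log (ratio q ptil z s) := by
          rw [Finset.prod_mul_distrib]
          simp
  have hf_int : ∀ s k, Integrable (f s k) μ := by
    intro s k
    rcases eq_or_ne k s with rfl | h
    · simpa [hf_def] using h_int_elbo
    · simpa [hf_def, h] using hq_int
  set F : (Fin K → Ω) → ℝ :=
    fun z => (1 / (K : ℝ)) * ∑ s, ∏ k, f s k (z k) with hF_def
  have hF_int : Integrable F P := by
    refine Integrable.const_mul ?_ _
    exact integrable_finset_sum _ fun s _ => integrable_pi_prod μ (hf_int s)
  have hF_val : ∫ z, F z ∂P = ELBO μ q ptil := by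
    rw [hF_def]
    simp only
    rw [integral_const_mul]
    rw [integral_finset_sum _ fun s _ => integrable_pi_prod μ (hf_int s)]
    have hone : ∀ s : Fin K, (∫ z : Fin K → Ω, ∏ k, f s k (z k) ∂P) = ELBO μ q ptil := by
      intro s
      rw [hP, integral_pi_prod μ (f s)]
      have : ∀ k : Fin K, (∫ x, f s k x ∂μ) = if k = s then ELBO μ q ptil else 1 := by
        intro k
        rcases eq_or_ne k s with rfl | h
        · simp [hf_def, ELBO]
        · simp [hf_def, h, hq_norm]
      rw [Finset.prod_congr rfl fun k _ => this k]
      simp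
    rw [Finset.sum_congr rfl fun s _ => hone s]
    rw [Finset.sum_const, Finset.card_univ, Fintype.card_fin, nsmul_eq_mul]
    field_simp
  have hFpt' : ∀ z : Fin K → Ω,
      F z = (∏ k, q (z k)) * ((1 / (K : ℝ)) * ∑ s, log (ratio q ptil z s)) := by
    intro z
    rw [hF_def]
    simp only
    rw [Finset.sum_congr rfl fun s _ => hFpt s z, ← Finset.mul_sum]
    ring
  -- A : the identity
  have hpt : ∀ᵐ z ∂P,
      (∏ k, q (z k)) * log ((1 / (K : ℝ)) * ∑ k, ratio q ptil z k)
        = (∏ k, q (z k)) * KLuw q ptil z + F z := by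
    filter_upwards [hgood] with z hz
    rw [hKL_eq z hz, hFpt' z]
    ring
  have hA : ELBO_IWAE μ q ptil K
      = ELBO μ q ptil + ∫ z, (∏ k, q (z k)) * KLuw q ptil z ∂P := by
    rw [ELBO_IWAE, ← hP, integral_congr_ae hpt, integral_add h_int_corr hF_int, hF_val]
    ring
  -- B : nonnegativity of the correction
  have hB : 0 ≤ ∫ z, (∏ k, q (z k)) * KLuw q ptil z ∂P := by
    refine integral_nonneg_of_ae ?_
    filter_upwards [hgood] with z hz
    refine mul_nonneg (Finset.prod_nonneg fun k _ => hq_nonneg _) ?_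
    rw [hKL_eq z hz, sub_nonneg]
    have hjen := (strictConcaveOn_log_Ioi.concaveOn).le_map_sum
      (t := Finset.univ) (w := fun _ : Fin K => 1 / (K : ℝ))
      (p := fun k => ratio q ptil z k)
      (fun i _ => by positivity)
      (by rw [Finset.sum_const, Finset.card_univ, Fintype.card_fin, nsmul_eq_mul]; field_simp)
      (fun i _ => hr_pos z hz i)
    simpa [smul_eq_mul, Finset.mul_sum] using hjen
  -- E : IWAE ≤ log Z
  set u : Fin K → Fin K → Ω → ℝ := fun s k x => if k = s then ptil x else q x with hu_def
  have hu_int : ∀ s k, Integrable (u s k) μ := by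
    intro s k
    rcases eq_or_ne k s with rfl | h
    · simpa [hu_def] using hptil_int
    · simpa [hu_def, h] using hq_int
  have hupt : ∀ (s : Fin K) (z : Fin K → Ω), (∀ k, z k ∈ S) →
      (∏ k, u s k (z k)) = (∏ k, q (z k)) * ratio q ptil z s := by
    intro s z hz
    calc (∏ k, u s k (z k))
        = ∏ k, (q (z k) * (if k = s then ratio q ptil z s else 1)) := by
          refine Finset.prod_congr rfl fun k _ => ?_
          rcases eq_or_ne k s with rfl | h
          · have hq0 : q (z k) ≠ 0 := (hz k).1.ne'
            simp only [hu_def, if_pos rfl, ratio, ↓reduceIte]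
            field_simp
          · simp [hu_def, h]
      _ = (∏ k, q (z k)) * ratio q ptil z s := by
          rw [Finset.prod_mul_distrib]
          simp
  set RHS : (Fin K → Ω) → ℝ := fun z =>
    (∏ k, q (z k)) * (log Z - 1)
      + (1 / Z) * ((1 / (K : ℝ)) * ∑ s, ∏ k, u s k (z k)) with hRHS_def
  have hRHS_int : Integrable RHS P := by
    refine Integrable.add ?_ ?_
    · exact (integrable_pi_prod μ fun k => hq_int).mul_const _
    · exact (integrable_finset_sum _ fun s _ => integrable_pi_prod μ (hu_int s)).const_mul _ |>.const_mul _
  have hRHS_val : ∫ z, RHS z ∂P = log Z := by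
    rw [hRHS_def]
    simp only
    rw [integral_add ((integrable_pi_prod μ fun k => hq_int).mul_const _)
      (((integrable_finset_sum _ fun s _ => integrable_pi_prod μ (hu_int s)).const_mul _).const_mul _)]
    rw [integral_mul_const, integral_const_mul, integral_const_mul,
      integral_finset_sum _ fun s _ => integrable_pi_prod μ (hu_int s)]
    have h1 : (∫ z : Fin K → Ω, ∏ k, q (z k) ∂P) = 1 := by
      rw [hP, integral_pi_prod]
      simp [hq_norm]
    have h2 : ∀ s : Fin K, (∫ z : Fin K → Ω, ∏ k, u s k (z k) ∂P) = Z := by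
      intro s
      rw [hP, integral_pi_prod μ (u s)]
      have : ∀ k : Fin K, (∫ x, u s k x ∂μ) = if k = s then Z else 1 := by
        intro k
        rcases eq_or_ne k s with rfl | h
        · simp [hu_def, hZval]
        · simp [hu_def, h, hq_norm]
      rw [Finset.prod_congr rfl fun k _ => this k]
      simp
    rw [h1, Finset.sum_congr rfl fun s _ => h2 s, Finset.sum_const, Finset.card_univ,
      Fintype.card_fin, nsmul_eq_mul]
    field_simp
    ring
  have hle : ∀ᵐ z ∂P,
      (∏ k, q (z k)) * log ((1 / (K : ℝ)) * ∑ k, ratio q ptil z k) ≤ RHS z := by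
    filter_upwards [hgood] with z hz
    have hR := hR_pos z hz
    have hG : 0 < (1 / (K : ℝ)) * ∑ k, ratio q ptil z k := by positivity
    have hlog : log ((1 / (K : ℝ)) * ∑ k, ratio q ptil z k)
        ≤ log Z - 1 + ((1 / (K : ℝ)) * ∑ k, ratio q ptil z k) / Z := by
      have h := Real.log_le_sub_one_of_pos (div_pos hG hZ_pos)
      rw [Real.log_div hG.ne' hZ_pos.ne'] at h
      linarith
    have hprodnn : (0:ℝ) ≤ ∏ k, q (z k) := Finset.prod_nonneg fun k _ => hq_nonneg _
    have hmul := mul_le_mul_of_nonneg_left hlog hprodnn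
    refine hmul.trans_eq ?_
    rw [hRHS_def]
    simp only
    rw [Finset.sum_congr rfl fun s _ => hupt s z hz, ← Finset.mul_sum]
    field_simp
  have hE : ELBO_IWAE μ q ptil K ≤ log Z := by
    rw [ELBO_IWAE, ← hP]
    calc ∫ z, (∏ k, q (z k)) * log ((1 / (K : ℝ)) * ∑ k, ratio q ptil z k) ∂P
        ≤ ∫ z, RHS z ∂P := integral_mono_ae h_int_iwae hRHS_int hle
      _ = log Z := hRHS_val
  -- reverse KL value
  have hrev : ∫ ω, q ω * log (q ω / (ptil ω / Z)) ∂μ = log Z - ELBO μ q ptil := by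
    have hptae : ∀ᵐ ω ∂μ, q ω * log (q ω / (ptil ω / Z))
        = q ω * log Z - q ω * log (ptil ω / q ω) := by
      filter_upwards [hq_pos, hptil_pos] with ω hqω hpω
      have h1 : q ω / (ptil ω / Z) = Z / (ptil ω / q ω) := by
        field_simp
      rw [h1, Real.log_div hZ_pos.ne' (div_pos hpω hqω).ne']
      ring
    rw [integral_congr_ae hptae,
      integral_sub (hq_int.mul_const _) h_int_elbo, integral_mul_const, hq_norm, ELBO]
    ring
  have hC : (∫ z, (∏ k, q (z k)) * KLuw q ptil z ∂P)
      ≤ ∫ ω, q ω * log (q ω / (ptil ω / Z)) ∂μ := by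
    rw [hrev]
    linarith [hA, hE]
  exact ⟨hA, hB, hC, by linarith [hA, hB], hE⟩


end Stmt0
end
end

section
/- (Improvement of the IWAE upper bound on log Z over the single-sample EUBO is at most log K.) For every integer K ≥ 1, EUBO_IWAE(q,K) = EUBO(q) − ∫_{Ω^K} p_tgt(z) · KL(ŵ(z) ‖ u) dμ^K(z), where u = (1/K,…,1/K), ŵ(z) are the SNIS weights, and p_tgt is the mixture target density. Moreover the correction term satisfies 0 ≤ ∫_{Ω^K} p_tgt(z) · KL(ŵ(z) ‖ u) dμ^K(z) ≤ log K, and consequently EUBO(q) − log K ≤ EUBO_IWAE(q,K) ≤ EUBO(q). -/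
open MeasureTheory Real

noncomputable section

namespace Stmt1

variable {Ω : Type*} [MeasurableSpace Ω]

/-- Importance ratio `r_k(z) = p̃(z_k) / q(z_k)`. -/
def ratio (q ptil : Ω → ℝ) {K : ℕ} (z : Fin K → Ω) (k : Fin K) : ℝ :=
  ptil (z k) / q (z k)

/-- Self-normalized importance-sampling weights `ŵ_s(z)`. -/
def snis (q ptil : Ω → ℝ) {K : ℕ} (z : Fin K → Ω) (s : Fin K) : ℝ :=
  ratio q ptil z s / ∑ k, ratio q ptil z k

/-- Single-sample evidence upper bound `EUBO(q) = ∫ p log(p̃/q) dμ`, `p = p̃/Z`. -/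
def EUBO (μ : Measure Ω) (q ptil : Ω → ℝ) (Z : ℝ) : ℝ :=
  ∫ ω, (ptil ω / Z) * log (ptil ω / q ω) ∂μ

/-- Multi-sample IWAE upper bound on `log Z`. -/
def EUBO_IWAE (μ : Measure Ω) (q ptil : Ω → ℝ) (Z : ℝ) (K : ℕ) [NeZero K] : ℝ :=
  ∫ z : Fin K → Ω,
    (ptil (z 0) / Z) * (∏ k ∈ Finset.univ.erase (0 : Fin K), q (z k)) *
      log ((1 / (K : ℝ)) * ∑ k, ratio q ptil z k)
    ∂(Measure.pi fun _ : Fin K => μ)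

/-- Mixture target density `p_tgt(z) = (1/K) Σ_s p(z_s) ∏_{k≠s} q(z_k)`. -/
def ptgt (q ptil : Ω → ℝ) (Z : ℝ) {K : ℕ} (z : Fin K → Ω) : ℝ :=
  (1 / (K : ℝ)) * ∑ s, (ptil (z s) / Z) * ∏ k ∈ Finset.univ.erase s, q (z k)

/-- `KL(ŵ(z) ‖ u)`, the KL divergence of the SNIS weights from the uniform vector. -/
def KLwu (q ptil : Ω → ℝ) {K : ℕ} (z : Fin K → Ω) : ℝ :=
  ∑ s, snis q ptil z s * log ((K : ℝ) * snis q ptil z s)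

/-- Auxiliary: integrability and integral of `f(z s) * ∏_{k ≠ s} g(z k)` over a pi measure. -/
lemma prod_aux (μ : Measure Ω) [SigmaFinite μ]
    {K : ℕ} (s : Fin K) (f g : Ω → ℝ) (hf : Integrable f μ) (hg : Integrable g μ)
    (hg1 : ∫ ω, g ω ∂μ = 1) :
    Integrable (fun z : Fin K → Ω => f (z s) * ∏ k ∈ Finset.univ.erase s, g (z k))
      (Measure.pi fun _ => μ) ∧
    (∫ z : Fin K → Ω, f (z s) * ∏ k ∈ Finset.univ.erase s, g (z k)
      ∂(Measure.pi fun _ => μ)) = ∫ ω, f ω ∂μ := by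
  letI : MeasureSpace Ω := ⟨μ⟩
  haveI : SigmaFinite (volume : Measure Ω) := ‹SigmaFinite μ›
  have hfun : (fun z : Fin K → Ω => f (z s) * ∏ k ∈ Finset.univ.erase s, g (z k))
      = fun z => ∏ k, (if k = s then f else g) (z k) := by
    funext z
    rw [← Finset.mul_prod_erase Finset.univ _ (Finset.mem_univ s)]
    rw [if_pos rfl]
    congr 1
    exact Finset.prod_congr rfl fun k hk => by rw [if_neg (Finset.ne_of_mem_erase hk)]
  have hpi : (Measure.pi fun _ : Fin K => μ) = (volume : Measure (Fin K → Ω)) := rfl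
  constructor
  · rw [hfun, hpi]
    exact Integrable.fintype_prod (f := fun k => if k = s then f else g)
      (fun k => by dsimp only; split <;> assumption)
  · rw [hfun, hpi]
    have h2 := MeasureTheory.integral_fintype_prod_volume_eq_prod (ι := Fin K)
      (fun k => if k = s then f else g)
    rw [h2, ← Finset.mul_prod_erase Finset.univ _ (Finset.mem_univ s), if_pos rfl]
    have : ∀ k ∈ Finset.univ.erase s, (∫ x, (if k = s then f else g) x) = 1 := by
      intro k hk; rw [if_neg (Finset.ne_of_mem_erase hk)]; exact hg1
    rw [Finset.prod_congr rfl this]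
    simp
    rfl

/-- Auxiliary: the IWAE-type integrand is invariant under moving the special index. -/
lemma perm_aux (μ : Measure Ω) [SigmaFinite μ]
    (q ptil : Ω → ℝ) (Z : ℝ) {K : ℕ} [NeZero K] (s : Fin K)
    (hint : Integrable (fun z : Fin K → Ω =>
        (ptil (z 0) / Z) * (∏ k ∈ Finset.univ.erase (0 : Fin K), q (z k)) *
          log ((1 / (K : ℝ)) * ∑ k, ratio q ptil z k)) (Measure.pi fun _ => μ)) :
    Integrable (fun z : Fin K → Ω =>
        (ptil (z s) / Z) * (∏ k ∈ Finset.univ.erase s, q (z k)) *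
          log ((1 / (K : ℝ)) * ∑ k, ratio q ptil z k)) (Measure.pi fun _ => μ) ∧
    (∫ z : Fin K → Ω, (ptil (z s) / Z) * (∏ k ∈ Finset.univ.erase s, q (z k)) *
          log ((1 / (K : ℝ)) * ∑ k, ratio q ptil z k) ∂(Measure.pi fun _ => μ))
      = ∫ z : Fin K → Ω, (ptil (z 0) / Z) * (∏ k ∈ Finset.univ.erase (0:Fin K), q (z k)) *
          log ((1 / (K : ℝ)) * ∑ k, ratio q ptil z k) ∂(Measure.pi fun _ => μ) := by
  classical
  set e : Fin K ≃ Fin K := Equiv.swap 0 s with he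
  set T := MeasurableEquiv.piCongrLeft (fun _ : Fin K => Ω) e with hTdef
  have MP : MeasurePreserving T (Measure.pi fun _ : Fin K => μ) (Measure.pi fun _ : Fin K => μ) :=
    MeasureTheory.measurePreserving_piCongrLeft (fun _ : Fin K => μ) e
  have hT : ∀ (z : Fin K → Ω) (k : Fin K), T z k = z (e k) := by
    intro z k
    have h1 : T z (e (e.symm k)) = z (e.symm k) := by
      rw [hTdef, MeasurableEquiv.coe_piCongrLeft]
      exact Equiv.piCongrLeft_apply_apply (fun _ : Fin K => Ω) e z (e.symm k)
    rw [e.apply_symm_apply] at h1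
    rw [h1, he, Equiv.symm_swap]
  have hes : e 0 = s := Equiv.swap_apply_left 0 s
  have hcomp : ∀ z : Fin K → Ω,
      (ptil ((T z) 0) / Z) * (∏ k ∈ Finset.univ.erase (0:Fin K), q ((T z) k)) *
        log ((1 / (K : ℝ)) * ∑ k, ratio q ptil (T z) k)
      = (ptil (z s) / Z) * (∏ k ∈ Finset.univ.erase s, q (z k)) *
        log ((1 / (K : ℝ)) * ∑ k, ratio q ptil z k) := by
    intro z
    have h0 : (T z) 0 = z s := by rw [hT, hes]
    have hsum : (∑ k, ratio q ptil (T z) k) = ∑ k, ratio q ptil z k := by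
      simp only [ratio, hT]
      exact e.sum_comp (fun j => ptil (z j) / q (z j))
    have hprodeq : (∏ k ∈ Finset.univ.erase (0:Fin K), q ((T z) k))
        = ∏ k ∈ Finset.univ.erase s, q (z k) := by
      simp only [hT]
      refine Finset.prod_nbij' (fun k => e k) (fun k => e.symm k) ?_ ?_ ?_ ?_ ?_
      · intro a ha
        simp only [Finset.mem_erase, Finset.mem_univ, and_true] at ha ⊢
        rw [← hes]
        exact fun hc => ha (e.injective hc)
      · intro a ha
        simp only [Finset.mem_erase, Finset.mem_univ, and_true] at ha ⊢
        intro hc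
        apply ha
        rw [← hes, ← hc, e.apply_symm_apply]
      · intro a _; exact e.symm_apply_apply a
      · intro a _; exact e.apply_symm_apply a
      · intro a _; rfl
    rw [h0, hsum, hprodeq]
  have hfeq : (fun z : Fin K → Ω =>
        (ptil (z 0) / Z) * (∏ k ∈ Finset.univ.erase (0 : Fin K), q (z k)) *
          log ((1 / (K : ℝ)) * ∑ k, ratio q ptil z k)) ∘ T
      = fun z : Fin K → Ω =>
        (ptil (z s) / Z) * (∏ k ∈ Finset.univ.erase s, q (z k)) *
          log ((1 / (K : ℝ)) * ∑ k, ratio q ptil z k) := funext fun z => hcomp z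
  constructor
  · rw [← hfeq]
    exact (MP.integrable_comp_emb T.measurableEmbedding).2 hint
  · have h3 := MP.integral_comp' (fun z : Fin K → Ω =>
        (ptil (z 0) / Z) * (∏ k ∈ Finset.univ.erase (0 : Fin K), q (z k)) *
          log ((1 / (K : ℝ)) * ∑ k, ratio q ptil z k))
    rw [← h3]
    exact integral_congr_ae (Filter.Eventually.of_forall fun z => (hcomp z).symm)

/-- Improvement of the IWAE upper bound on `log Z` over the single-sample EUBO
is at most `log K`. -/
theorem eubo_iwae_improvement
    (μ : Measure Ω) [SigmaFinite μ] (q ptil : Ω → ℝ)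
    (hq_meas : Measurable q) (hq_nonneg : ∀ ω, 0 ≤ q ω)
    (hq_pos : ∀ᵐ ω ∂μ, 0 < q ω) (hq_norm : ∫ ω, q ω ∂μ = 1)
    (hptil_meas : Measurable ptil) (hptil_pos : ∀ᵐ ω ∂μ, 0 < ptil ω)
    (hptil_int : Integrable ptil μ)
    (Z : ℝ) (hZ : Z = ∫ ω, ptil ω ∂μ) (hZ_pos : 0 < Z)
    (K : ℕ) [NeZero K]
    (h_int_eubo : Integrable (fun ω => (ptil ω / Z) * log (ptil ω / q ω)) μ)
    (h_int_iwae : Integrable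
      (fun z : Fin K → Ω =>
        (ptil (z 0) / Z) * (∏ k ∈ Finset.univ.erase (0 : Fin K), q (z k)) *
          log ((1 / (K : ℝ)) * ∑ k, ratio q ptil z k))
      (Measure.pi fun _ : Fin K => μ))
    (h_int_corr : Integrable
      (fun z : Fin K → Ω => ptgt q ptil Z z * KLwu q ptil z)
      (Measure.pi fun _ : Fin K => μ)) :
    EUBO_IWAE μ q ptil Z K
      = EUBO μ q ptil Z
        - ∫ z : Fin K → Ω, ptgt q ptil Z z * KLwu q ptil z
            ∂(Measure.pi fun _ : Fin K => μ) ∧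
    0 ≤ ∫ z : Fin K → Ω, ptgt q ptil Z z * KLwu q ptil z
          ∂(Measure.pi fun _ : Fin K => μ) ∧
    (∫ z : Fin K → Ω, ptgt q ptil Z z * KLwu q ptil z
        ∂(Measure.pi fun _ : Fin K => μ)) ≤ log K ∧
    EUBO μ q ptil Z - log K ≤ EUBO_IWAE μ q ptil Z K ∧
    EUBO_IWAE μ q ptil Z K ≤ EUBO μ q ptil Z := by
  classical
  haveI : Nonempty (Fin K) := ⟨⟨0, Nat.pos_of_ne_zero (NeZero.ne K)⟩⟩
  have hK0 : (K : ℝ) ≠ 0 := Nat.cast_ne_zero.2 (NeZero.ne K)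
  have hKpos : (0 : ℝ) < K := Nat.cast_pos.2 (Nat.pos_of_ne_zero (NeZero.ne K))
  set ν := (Measure.pi fun _ : Fin K => μ) with hν
  have hq_int : Integrable q μ := by
    by_contra h
    rw [integral_undef h] at hq_norm
    exact one_ne_zero hq_norm.symm
  have hZ1 : ∫ ω, ptil ω / Z ∂μ = 1 := by
    rw [integral_div, ← hZ, div_self hZ_pos.ne']
  -- the three families of integrands
  set H : Fin K → (Fin K → Ω) → ℝ := fun s z =>
    (ptil (z s) / Z) * (∏ k ∈ Finset.univ.erase s, q (z k)) * log (ratio q ptil z s)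
    with hHdef
  set G : Fin K → (Fin K → Ω) → ℝ := fun s z =>
    (ptil (z s) / Z) * (∏ k ∈ Finset.univ.erase s, q (z k)) *
      log ((1 / (K : ℝ)) * ∑ k, ratio q ptil z k) with hGdef
  set A : Fin K → (Fin K → Ω) → ℝ := fun s z =>
    (ptil (z s) / Z) * (∏ k ∈ Finset.univ.erase s, q (z k)) with hAdef
  -- H family : integrable with integral EUBO
  have hH : ∀ s : Fin K, Integrable (H s) ν ∧ (∫ z, H s z ∂ν) = EUBO μ q ptil Z := by
    intro s
    have hp := prod_aux μ s (fun ω => (ptil ω / Z) * log (ptil ω / q ω)) q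
      h_int_eubo hq_int hq_norm
    have heq : H s = fun z : Fin K → Ω =>
        ((ptil (z s) / Z) * log (ptil (z s) / q (z s))) *
          ∏ k ∈ Finset.univ.erase s, q (z k) := by
      funext z; simp only [hHdef, ratio]; ring
    rw [heq]
    exact hp
  -- A family : integrable with integral 1
  have hA : ∀ s : Fin K, Integrable (A s) ν ∧ (∫ z, A s z ∂ν) = 1 := by
    intro s
    have hp := prod_aux μ s (fun ω => ptil ω / Z) q (hptil_int.div_const Z) hq_int hq_norm
    exact ⟨hp.1, hp.2.trans hZ1⟩
  -- G family : integrable with integral EUBO_IWAE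
  have hG : ∀ s : Fin K, Integrable (G s) ν ∧ (∫ z, G s z ∂ν) = EUBO_IWAE μ q ptil Z K := by
    intro s
    have hp := perm_aux μ q ptil Z s h_int_iwae
    exact ⟨hp.1, hp.2⟩
  -- a.e. positivity of all coordinates
  have hB : μ {ω | ¬ (0 < q ω ∧ 0 < ptil ω)} = 0 := ae_iff.1 (hq_pos.and hptil_pos)
  have hpos : ∀ᵐ z ∂ν, ∀ k, 0 < q (z k) ∧ 0 < ptil (z k) := by
    rw [ae_all_iff]
    intro k
    rw [ae_iff]
    have hset : {z : Fin K → Ω | ¬(0 < q (z k) ∧ 0 < ptil (z k))}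
        = Set.pi Set.univ
            (fun j => if j = k then {ω | ¬(0 < q ω ∧ 0 < ptil ω)} else Set.univ) := by
      ext z
      simp only [Set.mem_setOf_eq, Set.mem_pi, Set.mem_univ, true_implies]
      constructor
      · intro h j
        by_cases hj : j = k
        · subst hj; simpa using h
        · simp [hj]
      · intro h
        have := h k
        simpa using this
    rw [hν, hset, Measure.pi_pi]
    exact Finset.prod_eq_zero (Finset.mem_univ k) (by simpa only [if_pos rfl, ↓reduceIte] using hB)
  -- pointwise facts at good points
  have key : ∀ z : Fin K → Ω, (∀ k, 0 < q (z k) ∧ 0 < ptil (z k)) →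
      (ptgt q ptil Z z * KLwu q ptil z
        = (1 / (K:ℝ)) * (∑ s, H s z) - (1 / (K:ℝ)) * (∑ s, G s z))
      ∧ 0 ≤ ptgt q ptil Z z ∧ 0 ≤ KLwu q ptil z ∧ KLwu q ptil z ≤ log K := by
    intro z hk
    have hr : ∀ k : Fin K, 0 < ratio q ptil z k := fun k => div_pos (hk k).2 (hk k).1
    set S := ∑ k, ratio q ptil z k with hSdef
    have hS : 0 < S := Finset.sum_pos (fun k _ => hr k) Finset.univ_nonempty
    have hP : 0 < ∏ k, q (z k) := Finset.prod_pos fun k _ => (hk k).1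
    set P := ∏ k, q (z k) with hPdef
    -- A s z in symmetric form
    have hA_eq : ∀ s : Fin K, A s z = (P / Z) * ratio q ptil z s := by
      intro s
      have h1 : P = q (z s) * ∏ k ∈ Finset.univ.erase s, q (z k) :=
        (Finset.mul_prod_erase Finset.univ _ (Finset.mem_univ s)).symm
      simp only [hAdef, ratio, h1]
      field_simp [(hk s).1.ne', hZ_pos.ne']
    have hptgt_eq : ptgt q ptil Z z = (1 / (K:ℝ)) * ((P / Z) * S) := by
      have : ptgt q ptil Z z = (1 / (K:ℝ)) * ∑ s, A s z := by
        simp only [ptgt, hAdef]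
      rw [this]
      congr 1
      rw [hSdef, Finset.mul_sum]
      exact Finset.sum_congr rfl fun s _ => hA_eq s
    have hw_pos : ∀ s : Fin K, 0 < snis q ptil z s := fun s => div_pos (hr s) hS
    have hw_sum : (∑ s, snis q ptil z s) = 1 := by
      simp only [snis, ← hSdef]
      rw [← Finset.sum_div, div_self hS.ne']
    have hw_le : ∀ s : Fin K, snis q ptil z s ≤ 1 := by
      intro s
      rw [snis, ← hSdef, div_le_one hS]
      exact Finset.single_le_sum (fun k _ => (hr k).le) (Finset.mem_univ s)
    have hlog : ∀ s : Fin K, log ((K:ℝ) * snis q ptil z s)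
        = log (ratio q ptil z s) - log ((1 / (K:ℝ)) * S) := by
      intro s
      have h1 : (K:ℝ) * snis q ptil z s = ratio q ptil z s / ((1 / (K:ℝ)) * S) := by
        rw [snis, ← hSdef]
        field_simp
      rw [h1, log_div (hr s).ne' (by positivity)]
    refine ⟨?_, ?_, ?_, ?_⟩
    · -- main identity
      have hterm : ∀ s : Fin K,
          ptgt q ptil Z z * (snis q ptil z s * log ((K:ℝ) * snis q ptil z s))
          = (1 / (K:ℝ)) * H s z - (1 / (K:ℝ)) * G s z := by
        intro s
        have hH_eq : H s z = (P / Z) * ratio q ptil z s * log (ratio q ptil z s) := by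
          simp only [hHdef]
          rw [show (ptil (z s) / Z) * (∏ k ∈ Finset.univ.erase s, q (z k)) = A s z from rfl,
            hA_eq s]
        have hG_eq : G s z = (P / Z) * ratio q ptil z s * log ((1 / (K:ℝ)) * S) := by
          simp only [hGdef, ← hSdef]
          rw [show (ptil (z s) / Z) * (∏ k ∈ Finset.univ.erase s, q (z k)) = A s z from rfl,
            hA_eq s]
        rw [hptgt_eq, hlog s, hH_eq, hG_eq, snis, ← hSdef]
        field_simp
      calc ptgt q ptil Z z * KLwu q ptil z
          = ∑ s, ptgt q ptil Z z * (snis q ptil z s * log ((K:ℝ) * snis q ptil z s)) := by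
            rw [KLwu, Finset.mul_sum]
        _ = ∑ s, ((1 / (K:ℝ)) * H s z - (1 / (K:ℝ)) * G s z) :=
            Finset.sum_congr rfl fun s _ => hterm s
        _ = (1 / (K:ℝ)) * (∑ s, H s z) - (1 / (K:ℝ)) * (∑ s, G s z) := by
            rw [Finset.sum_sub_distrib, Finset.mul_sum, Finset.mul_sum]
    · rw [hptgt_eq]; positivity
    · -- KL ≥ 0
      have hlow : ∀ s : Fin K, snis q ptil z s - 1 / (K:ℝ)
          ≤ snis q ptil z s * log ((K:ℝ) * snis q ptil z s) := by
        intro s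
        have hx : 0 < (K:ℝ) * snis q ptil z s := mul_pos hKpos (hw_pos s)
        have h1 := Real.log_le_sub_one_of_pos (x := ((K:ℝ) * snis q ptil z s)⁻¹) (by positivity)
        rw [Real.log_inv] at h1
        have h2 : 1 - ((K:ℝ) * snis q ptil z s)⁻¹ ≤ log ((K:ℝ) * snis q ptil z s) := by
          linarith
        have h3 := mul_le_mul_of_nonneg_left h2 (hw_pos s).le
        calc snis q ptil z s - 1 / (K:ℝ)
            = snis q ptil z s * (1 - ((K:ℝ) * snis q ptil z s)⁻¹) := by
              field_simp
              rw [mul_sub, mul_one_div, div_self (hw_pos s).ne']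
          _ ≤ _ := h3
      have hsum := Finset.sum_le_sum (fun s (_ : s ∈ Finset.univ) => hlow s)
      rw [Finset.sum_sub_distrib, hw_sum, Finset.sum_const, Finset.card_univ,
        Fintype.card_fin, nsmul_eq_mul] at hsum
      have : (1:ℝ) - (K:ℝ) * (1 / (K:ℝ)) = 0 := by field_simp; ring
      rw [KLwu]
      linarith
    · -- KL ≤ log K
      have hup : ∀ s : Fin K, snis q ptil z s * log ((K:ℝ) * snis q ptil z s)
          ≤ snis q ptil z s * log (K:ℝ) := by
        intro s
        have h1 : (K:ℝ) * snis q ptil z s ≤ (K:ℝ) := by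
          nlinarith [hw_le s, hw_pos s]
        have h2 : log ((K:ℝ) * snis q ptil z s) ≤ log (K:ℝ) := by
          gcongr
          exact mul_pos hKpos (hw_pos s)
        exact mul_le_mul_of_nonneg_left h2 (hw_pos s).le
      have hsum := Finset.sum_le_sum (fun s (_ : s ∈ Finset.univ) => hup s)
      rw [← Finset.sum_mul, hw_sum, one_mul] at hsum
      rw [KLwu]
      exact hsum
  -- integral identity
  have haeeq : (fun z : Fin K → Ω => ptgt q ptil Z z * KLwu q ptil z)
      =ᵐ[ν] fun z => (1 / (K:ℝ)) * (∑ s, H s z) - (1 / (K:ℝ)) * (∑ s, G s z) :=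
    hpos.mono fun z hz => (key z hz).1
  have hintH : Integrable (fun z => ∑ s, H s z) ν :=
    integrable_finset_sum _ fun s _ => (hH s).1
  have hintG : Integrable (fun z => ∑ s, G s z) ν :=
    integrable_finset_sum _ fun s _ => (hG s).1
  have hmain : (∫ z, ptgt q ptil Z z * KLwu q ptil z ∂ν)
      = EUBO μ q ptil Z - EUBO_IWAE μ q ptil Z K := by
    rw [integral_congr_ae haeeq,
      integral_sub (hintH.const_mul _) (hintG.const_mul _),
      integral_const_mul, integral_const_mul,
      integral_finset_sum _ (fun s _ => (hH s).1),
      integral_finset_sum _ (fun s _ => (hG s).1)]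
    have h1 : (∑ s : Fin K, ∫ z, H s z ∂ν) = (K:ℝ) * EUBO μ q ptil Z := by
      rw [Finset.sum_congr rfl fun s _ => (hH s).2, Finset.sum_const, Finset.card_univ,
        Fintype.card_fin, nsmul_eq_mul]
    have h2 : (∑ s : Fin K, ∫ z, G s z ∂ν) = (K:ℝ) * EUBO_IWAE μ q ptil Z K := by
      rw [Finset.sum_congr rfl fun s _ => (hG s).2, Finset.sum_const, Finset.card_univ,
        Fintype.card_fin, nsmul_eq_mul]
    rw [h1, h2]
    field_simp
  -- nonnegativity of the correction
  have hnonneg : 0 ≤ ∫ z, ptgt q ptil Z z * KLwu q ptil z ∂ν := by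
    refine integral_nonneg_of_ae (hpos.mono fun z hz => ?_)
    obtain ⟨-, h1, h2, -⟩ := key z hz
    exact mul_nonneg h1 h2
  -- ptgt integrates to 1
  have hptgt_int : Integrable (fun z : Fin K → Ω => ptgt q ptil Z z) ν := by
    have : (fun z : Fin K → Ω => ptgt q ptil Z z)
        = fun z => (1 / (K:ℝ)) * ∑ s, A s z := by
      funext z; simp only [ptgt, hAdef]
    rw [this]
    exact (integrable_finset_sum _ fun s _ => (hA s).1).const_mul _
  have hptgt_one : (∫ z, ptgt q ptil Z z ∂ν) = 1 := by
    have : (fun z : Fin K → Ω => ptgt q ptil Z z)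
        = fun z => (1 / (K:ℝ)) * ∑ s, A s z := by
      funext z; simp only [ptgt, hAdef]
    rw [this, integral_const_mul, integral_finset_sum _ (fun s _ => (hA s).1),
      Finset.sum_congr rfl fun s _ => (hA s).2, Finset.sum_const, Finset.card_univ,
      Fintype.card_fin, nsmul_eq_mul, mul_one]
    field_simp
  -- upper bound by log K
  have hub : (∫ z, ptgt q ptil Z z * KLwu q ptil z ∂ν) ≤ log K := by
    have hmono : (fun z : Fin K → Ω => ptgt q ptil Z z * KLwu q ptil z)
        ≤ᵐ[ν] fun z => ptgt q ptil Z z * log K :=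
      hpos.mono fun z hz => by
        obtain ⟨-, h1, -, h3⟩ := key z hz
        exact mul_le_mul_of_nonneg_left h3 h1
    calc (∫ z, ptgt q ptil Z z * KLwu q ptil z ∂ν)
        ≤ ∫ z, ptgt q ptil Z z * log K ∂ν :=
          integral_mono_ae h_int_corr (hptgt_int.mul_const _) hmono
      _ = log K := by rw [integral_mul_const, hptgt_one, one_mul]
  refine ⟨by linarith, hnonneg, hub, by linarith, by linarith⟩

end Stmt1
end
end

section
/- (IWAE mutual-information bounds improve on the Barber–Agakov bounds, with at most logarithmic improvement of the lower bound.) For every integer K ≥ 1: I_BA_L(q) ≤ I_IWAE_L(q,K) ≤ I_BA_L(q) + log K, and I_IWAE_U(q,K) ≤ I_BA_U(q). -/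
open MeasureTheory Real

noncomputable section

namespace Stmt2

variable {X Z : Type*} [MeasurableSpace X] [MeasurableSpace Z]

/-- Marginal density `p_X(x) = ∫ p(x,z) dμ_Z(z)`. -/
def pX (μZ : Measure Z) (p : X × Z → ℝ) (x : X) : ℝ := ∫ z, p (x, z) ∂μZ

/-- Marginal density `p_Z(z) = ∫ p(x,z) dμ_X(x)`. -/
def pZ (μX : Measure X) (p : X × Z → ℝ) (z : Z) : ℝ := ∫ x, p (x, z) ∂μX

/-- Barber–Agakov lower bound `I_BA_L(q) = ∫∫ p(x,z) log(q(z|x)/p_Z(z))`. -/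
def IBAL (μX : Measure X) (μZ : Measure Z) (p q : X × Z → ℝ) : ℝ :=
  ∫ w, p w * log (q w / pZ μX p w.2) ∂(μX.prod μZ)

/-- Barber–Agakov upper bound
`I_BA_U(q) = ∫∫ p_X(x) q(z|x) log(q(z|x)/p(x,z)) + ∫∫ p(x,z) log p(x|z)`. -/
def IBAU (μX : Measure X) (μZ : Measure Z) (p q : X × Z → ℝ) : ℝ :=
  (∫ w, pX μZ p w.1 * q w * log (q w / p w) ∂(μX.prod μZ))
    + ∫ w, p w * log (p w / pZ μX p w.2) ∂(μX.prod μZ)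

/-- `∫∫ p(x,z) log p(x|z)` with `p(x|z) = p(x,z)/p_Z(z)`. -/
def HXZ (μX : Measure X) (μZ : Measure Z) (p : X × Z → ℝ) : ℝ :=
  ∫ w, p w * log (p w / pZ μX p w.2) ∂(μX.prod μZ)

/-- Inner `Z^K`-integral of the IWAE lower bound on mutual information. -/
def iwaeInnerL (μZ : Measure Z) (p q : X × Z → ℝ) (K : ℕ) [NeZero K] (x : X) : ℝ :=
  ∫ z : Fin K → Z,
    (p (x, z 0) / pX μZ p x) * (∏ k ∈ Finset.univ.erase (0 : Fin K), q (x, z k)) *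
      log ((1 / (K : ℝ)) * ∑ k, p (x, z k) / q (x, z k))
    ∂(Measure.pi fun _ : Fin K => μZ)

/-- Inner `Z^K`-integral of the IWAE upper bound on mutual information. -/
def iwaeInnerU (μZ : Measure Z) (p q : X × Z → ℝ) (K : ℕ) (x : X) : ℝ :=
  ∫ z : Fin K → Z,
    (∏ k, q (x, z k)) * log ((1 / (K : ℝ)) * ∑ k, p (x, z k) / q (x, z k))
    ∂(Measure.pi fun _ : Fin K => μZ)

/-- IWAE lower bound on mutual information. -/
def IIWAEL (μX : Measure X) (μZ : Measure Z) (p q : X × Z → ℝ) (K : ℕ) [NeZero K] : ℝ :=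
  HXZ μX μZ p - ∫ x, pX μZ p x * iwaeInnerL μZ p q K x ∂μX

/-- IWAE upper bound on mutual information. -/
def IIWAEU (μX : Measure X) (μZ : Measure Z) (p q : X × Z → ℝ) (K : ℕ) : ℝ :=
  HXZ μX μZ p - ∫ x, pX μZ p x * iwaeInnerU μZ p q K x ∂μX


section Helpers
open Finset
set_option linter.unusedVariables false
set_option linter.unusedSectionVars false

variable {μ : Measure Z} [SigmaFinite μ] {K : ℕ}

private lemma ae_pi_eval {P : Z → Prop} (h : ∀ᵐ z ∂μ, P z) :
    ∀ᵐ z ∂(Measure.pi fun _ : Fin K => μ), ∀ k, P (z k) := by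
  rw [ae_all_iff]
  intro k
  obtain ⟨N, hNsub, hNm, hN0⟩ := exists_measurable_superset_of_null (ae_iff.1 h)
  rw [ae_iff]
  refine measure_mono_null (t := Set.univ.pi fun i => if i = k then N else Set.univ) ?_ ?_
  · intro z hz
    rw [Set.mem_pi]
    intro i _
    by_cases hik : i = k
    · subst hik; simpa using hNsub hz
    · simp [hik]
  · rw [Measure.pi_pi]
    exact Finset.prod_eq_zero (Finset.mem_univ k) (by simpa using hN0)

private lemma prod_aux {g h : Z → ℝ} (hg : Integrable g μ) (hgn : ∫ z, g z ∂μ = 1)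
    (hh : Integrable h μ) (j : Fin K) :
    Integrable (fun z : Fin K → Z => (∏ k ∈ univ.erase j, g (z k)) * h (z j))
      (Measure.pi fun _ : Fin K => μ) ∧
    ∫ z : Fin K → Z, (∏ k ∈ univ.erase j, g (z k)) * h (z j)
        ∂(Measure.pi fun _ : Fin K => μ) = ∫ z, h z ∂μ := by
  classical
  letI : MeasureSpace Z := ⟨μ⟩
  haveI : SigmaFinite (volume : Measure Z) := ‹SigmaFinite μ›
  have hvol : (Measure.pi fun _ : Fin K => μ) = (volume : Measure (Fin K → Z)) :=
    (volume_pi).symm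
  set F : Fin K → Z → ℝ := fun k => if k = j then h else g with hF
  have hFeq : ∀ z : Fin K → Z,
      (∏ k ∈ univ.erase j, g (z k)) * h (z j) = ∏ k, F k (z k) := by
    intro z
    rw [← Finset.mul_prod_erase univ (fun k => F k (z k)) (Finset.mem_univ j)]
    have : ∏ k ∈ univ.erase j, F k (z k) = ∏ k ∈ univ.erase j, g (z k) :=
      Finset.prod_congr rfl fun k hk => by
        simp [hF, (Finset.mem_erase.1 hk).1]
    rw [this]
    simp [hF, mul_comm]
  have hFi : ∀ k, Integrable (F k) volume := by
    intro k
    by_cases hk : k = j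
    · simp only [hF, if_pos hk]; exact hh
    · simp only [hF, if_neg hk]; exact hg
  constructor
  · rw [hvol]
    exact (Integrable.fintype_prod (𝕜 := ℝ) hFi).congr
      (Filter.Eventually.of_forall fun z => (hFeq z).symm)
  · rw [hvol]
    calc ∫ z : Fin K → Z, (∏ k ∈ univ.erase j, g (z k)) * h (z j)
        = ∫ z : Fin K → Z, ∏ k, F k (z k) := by simp_rw [hFeq]
      _ = ∏ k, ∫ z, F k z := integral_fintype_prod_eq_prod F
      _ = ∫ z, h z ∂μ := by
          rw [← Finset.mul_prod_erase univ (fun k => ∫ z, F k z) (Finset.mem_univ j)]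
          have : ∏ k ∈ univ.erase j, ∫ z, F k z = ∏ k ∈ univ.erase j, (1:ℝ) :=
            Finset.prod_congr rfl fun k hk => by
              simp only [hF, if_neg (Finset.mem_erase.1 hk).1]
              exact hgn
          rw [this]
          simp only [hF, if_pos rfl, Finset.prod_const_one, mul_one]
          rfl

private lemma piCongr_apply (σ : Equiv.Perm (Fin K)) (z : Fin K → Z) (i : Fin K) :
    (MeasurableEquiv.piCongrLeft (fun _ => Z) σ) z i = z (σ.symm i) := by
  rw [MeasurableEquiv.coe_piCongrLeft]
  conv_lhs => rw [show i = σ (σ.symm i) by simp]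
  exact Equiv.piCongrLeft_apply_apply (fun _ => Z) σ z (σ.symm i)

private lemma swap_T [NeZero K] {f g : Z → ℝ} (j : Fin K)
    (hT0 : Integrable (fun z : Fin K → Z =>
      f (z 0) * (∏ k ∈ univ.erase (0 : Fin K), g (z k)) *
        log ((1 / (K:ℝ)) * ∑ k, f (z k) / g (z k))) (Measure.pi fun _ : Fin K => μ)) :
    Integrable (fun z : Fin K → Z =>
      f (z j) * (∏ k ∈ univ.erase j, g (z k)) *
        log ((1 / (K:ℝ)) * ∑ k, f (z k) / g (z k))) (Measure.pi fun _ : Fin K => μ) ∧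
    (∫ z : Fin K → Z, f (z j) * (∏ k ∈ univ.erase j, g (z k)) *
        log ((1 / (K:ℝ)) * ∑ k, f (z k) / g (z k)) ∂(Measure.pi fun _ : Fin K => μ)) =
    ∫ z : Fin K → Z, f (z 0) * (∏ k ∈ univ.erase (0 : Fin K), g (z k)) *
        log ((1 / (K:ℝ)) * ∑ k, f (z k) / g (z k)) ∂(Measure.pi fun _ : Fin K => μ) := by
  classical
  set σ : Equiv.Perm (Fin K) := Equiv.swap 0 j with hσ
  set e := MeasurableEquiv.piCongrLeft (fun _ : Fin K => Z) σ with he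
  have mp : MeasurePreserving e (Measure.pi fun _ : Fin K => μ) (Measure.pi fun _ : Fin K => μ) :=
    MeasureTheory.measurePreserving_piCongrLeft (fun _ => μ) σ
  have happ : ∀ (z : Fin K → Z) (i : Fin K), e z i = z (σ i) := by
    intro z i
    rw [he, piCongr_apply σ z i, hσ, Equiv.symm_swap]
  have hσ0 : σ 0 = j := Equiv.swap_apply_left 0 j
  have key : ∀ z : Fin K → Z,
      f ((e z) 0) * (∏ k ∈ univ.erase (0 : Fin K), g ((e z) k)) *
        log ((1 / (K:ℝ)) * ∑ k, f ((e z) k) / g ((e z) k)) =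
      f (z j) * (∏ k ∈ univ.erase j, g (z k)) *
        log ((1 / (K:ℝ)) * ∑ k, f (z k) / g (z k)) := by
    intro z
    have hS : (∑ k, f ((e z) k) / g ((e z) k)) = ∑ k, f (z k) / g (z k) := by
      simp_rw [happ z]
      exact Equiv.sum_comp σ fun k => f (z k) / g (z k)
    have hP : (∏ k ∈ univ.erase (0 : Fin K), g ((e z) k)) = ∏ k ∈ univ.erase j, g (z k) := by
      simp_rw [happ z]
      refine Finset.prod_bij' (fun k _ => σ k) (fun k _ => σ.symm k) ?_ ?_ ?_ ?_ ?_
      · intro k hk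
        rw [Finset.mem_erase] at hk ⊢
        refine ⟨?_, Finset.mem_univ _⟩
        intro hkj
        exact hk.1 (by simpa [hσ, Equiv.symm_swap, Equiv.swap_apply_right] using congrArg σ.symm hkj)
      · intro k hk
        rw [Finset.mem_erase] at hk ⊢
        refine ⟨?_, Finset.mem_univ _⟩
        intro hk0
        exact hk.1 (by rw [← hσ0, ← hk0]; simp)
      · intro k _; simp
      · intro k _; simp
      · intro k _; rfl
    rw [happ z 0, hσ0, hS, hP]
  constructor
  · have h1 : Integrable ((fun z : Fin K → Z =>
        f (z 0) * (∏ k ∈ univ.erase (0 : Fin K), g (z k)) *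
          log ((1 / (K:ℝ)) * ∑ k, f (z k) / g (z k))) ∘ e)
        (Measure.pi fun _ : Fin K => μ) :=
      (mp.integrable_comp_emb e.measurableEmbedding).mpr hT0
    exact h1.congr (Filter.Eventually.of_forall fun z => key z)
  · conv_rhs => rw [← mp.integral_comp' (f := e)]
    exact integral_congr_ae (Filter.Eventually.of_forall fun z => (key z).symm)

private lemma lemU [NeZero K] {f g : Z → ℝ}
    (hfp : ∀ᵐ z ∂μ, 0 < f z) (hgp : ∀ᵐ z ∂μ, 0 < g z)
    (hgi : Integrable g μ) (hgn : ∫ z, g z ∂μ = 1)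
    (hgl : Integrable (fun z => g z * log (g z / f z)) μ)
    (hint : Integrable (fun z : Fin K → Z =>
      (∏ k, g (z k)) * log ((1 / (K:ℝ)) * ∑ k, f (z k) / g (z k)))
      (Measure.pi fun _ : Fin K => μ)) :
    - ∫ z, g z * log (g z / f z) ∂μ ≤
      ∫ z : Fin K → Z, (∏ k, g (z k)) * log ((1 / (K:ℝ)) * ∑ k, f (z k) / g (z k))
        ∂(Measure.pi fun _ : Fin K => μ) := by
  classical
  have hK : (K:ℝ) ≠ 0 := Nat.cast_ne_zero.mpr (NeZero.ne K)
  set h : Z → ℝ := fun t => g t * log (f t / g t) with hh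
  have hhi : Integrable h μ := by
    refine hgl.neg.congr ?_
    filter_upwards [hfp, hgp] with t htf htg
    simp only [hh, Pi.neg_apply]
    rw [Real.log_div htg.ne' htf.ne', Real.log_div htf.ne' htg.ne']
    ring
  have hhval : ∫ z, h z ∂μ = - ∫ z, g z * log (g z / f z) ∂μ := by
    rw [← integral_neg]
    refine integral_congr_ae ?_
    filter_upwards [hfp, hgp] with t htf htg
    simp only [hh]
    rw [Real.log_div htg.ne' htf.ne', Real.log_div htf.ne' htg.ne']
    ring
  set L : (Fin K → Z) → ℝ := fun z =>
    ∑ k, (1 / (K:ℝ)) * ((∏ i ∈ univ.erase k, g (z i)) * h (z k)) with hL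
  have hLi : Integrable L (Measure.pi fun _ : Fin K => μ) :=
    integrable_finset_sum _ fun k _ => ((prod_aux hgi hgn hhi k).1.const_mul _)
  have hLval : ∫ z, L z ∂(Measure.pi fun _ : Fin K => μ) = ∫ z, h z ∂μ := by
    rw [hL, integral_finset_sum _ fun k _ => ((prod_aux hgi hgn hhi k).1.const_mul _)]
    have : ∀ k : Fin K, (∫ z : Fin K → Z, (1 / (K:ℝ)) *
        ((∏ i ∈ univ.erase k, g (z i)) * h (z k)) ∂(Measure.pi fun _ : Fin K => μ))
        = (1 / (K:ℝ)) * ∫ z, h z ∂μ := by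
      intro k
      rw [integral_const_mul, (prod_aux hgi hgn hhi k).2]
    simp_rw [this]
    rw [Finset.sum_const, Finset.card_univ, Fintype.card_fin, nsmul_eq_mul]
    field_simp
  have hae : ∀ᵐ z ∂(Measure.pi fun _ : Fin K => μ),
      L z ≤ (∏ k, g (z k)) * log ((1 / (K:ℝ)) * ∑ k, f (z k) / g (z k)) := by
    filter_upwards [ae_pi_eval hfp, ae_pi_eval hgp] with z hfz hgz
    have hGpos : (0:ℝ) ≤ ∏ k, g (z k) := Finset.prod_nonneg fun k _ => (hgz k).le
    have hLz : L z = (∏ k, g (z k)) * ∑ k, (1 / (K:ℝ)) * log (f (z k) / g (z k)) := by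
      rw [hL, Finset.mul_sum]
      refine Finset.sum_congr rfl fun k _ => ?_
      rw [← Finset.mul_prod_erase univ (fun i => g (z i)) (Finset.mem_univ k)]
      simp only [hh]
      ring
    rw [hLz]
    refine mul_le_mul_of_nonneg_left ?_ hGpos
    have jensen := (strictConcaveOn_log_Ioi.concaveOn).le_map_sum
      (t := univ) (w := fun _ : Fin K => 1 / (K:ℝ)) (p := fun k => f (z k) / g (z k))
      (fun i _ => by positivity)
      (by rw [Finset.sum_const, Finset.card_univ, Fintype.card_fin, nsmul_eq_mul]; field_simp)
      (fun i _ => Set.mem_Ioi.mpr (div_pos (hfz i) (hgz i)))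
    simpa only [smul_eq_mul, Finset.mul_sum] using jensen
  calc - ∫ z, g z * log (g z / f z) ∂μ = ∫ z, h z ∂μ := hhval.symm
    _ = ∫ z, L z ∂(Measure.pi fun _ : Fin K => μ) := hLval.symm
    _ ≤ _ := integral_mono_ae hLi hint hae

private lemma lemL2 [NeZero K] {f g : Z → ℝ} {A : ℝ}
    (hfp : ∀ᵐ z ∂μ, 0 < f z) (hgp : ∀ᵐ z ∂μ, 0 < g z)
    (hgi : Integrable g μ) (hgn : ∫ z, g z ∂μ = 1) (hfi : Integrable f μ)
    (hA : A = ∫ z, f z ∂μ) (hApos : 0 < A)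
    (hfl : Integrable (fun z => f z * log (f z / g z)) μ)
    (hint : Integrable (fun z : Fin K → Z =>
      (f (z 0) / A) * (∏ k ∈ univ.erase (0 : Fin K), g (z k)) *
        log ((1 / (K:ℝ)) * ∑ k, f (z k) / g (z k))) (Measure.pi fun _ : Fin K => μ)) :
    (∫ z, f z * log (f z / g z) ∂μ) - A * log K ≤
      A * ∫ z : Fin K → Z, (f (z 0) / A) * (∏ k ∈ univ.erase (0 : Fin K), g (z k)) *
        log ((1 / (K:ℝ)) * ∑ k, f (z k) / g (z k)) ∂(Measure.pi fun _ : Fin K => μ) := by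
  classical
  have hK : (0:ℝ) < (K:ℝ) := by
    exact_mod_cast Nat.pos_of_ne_zero (NeZero.ne K)
  set T0 : (Fin K → Z) → ℝ := fun z =>
    f (z 0) * (∏ k ∈ univ.erase (0 : Fin K), g (z k)) *
      log ((1 / (K:ℝ)) * ∑ k, f (z k) / g (z k)) with hT0def
  have hT0eq : ∀ z : Fin K → Z, A * ((f (z 0) / A) * (∏ k ∈ univ.erase (0 : Fin K), g (z k)) *
      log ((1 / (K:ℝ)) * ∑ k, f (z k) / g (z k))) = T0 z := by
    intro z
    rw [hT0def]
    field_simp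
  have hT0i : Integrable T0 (Measure.pi fun _ : Fin K => μ) :=
    (hint.const_mul A).congr (Filter.Eventually.of_forall hT0eq)
  have hT0val : A * (∫ z : Fin K → Z, (f (z 0) / A) * (∏ k ∈ univ.erase (0 : Fin K), g (z k)) *
      log ((1 / (K:ℝ)) * ∑ k, f (z k) / g (z k)) ∂(Measure.pi fun _ : Fin K => μ))
      = ∫ z, T0 z ∂(Measure.pi fun _ : Fin K => μ) := by
    rw [← integral_const_mul]
    exact integral_congr_ae (Filter.Eventually.of_forall hT0eq)
  set Rl : (Fin K → Z) → ℝ := fun z =>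
    (∏ k ∈ univ.erase (0 : Fin K), g (z k)) * (f (z 0) * log (f (z 0) / g (z 0)))
      - log K * ((∏ k ∈ univ.erase (0 : Fin K), g (z k)) * f (z 0)) with hRl
  have hRli : Integrable Rl (Measure.pi fun _ : Fin K => μ) :=
    (prod_aux hgi hgn hfl 0).1.sub ((prod_aux hgi hgn hfi 0).1.const_mul (log K))
  have hRlval : ∫ z, Rl z ∂(Measure.pi fun _ : Fin K => μ)
      = (∫ z, f z * log (f z / g z) ∂μ) - A * log K := by
    rw [hRl, integral_sub (prod_aux hgi hgn hfl 0).1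
      ((prod_aux hgi hgn hfi 0).1.const_mul (log K)),
      (prod_aux hgi hgn hfl 0).2, integral_const_mul, (prod_aux hgi hgn hfi 0).2, ← hA]
    ring
  have hae : ∀ᵐ z ∂(Measure.pi fun _ : Fin K => μ), Rl z ≤ T0 z := by
    filter_upwards [ae_pi_eval hfp, ae_pi_eval hgp] with z hfz hgz
    have hCpos : (0:ℝ) ≤ f (z 0) * ∏ k ∈ univ.erase (0 : Fin K), g (z k) :=
      mul_nonneg (hfz 0).le (Finset.prod_nonneg fun k _ => (hgz k).le)
    have hw0 : 0 < f (z 0) / g (z 0) := div_pos (hfz 0) (hgz 0)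
    have hSge : (1 / (K:ℝ)) * (f (z 0) / g (z 0)) ≤
        (1 / (K:ℝ)) * ∑ k, f (z k) / g (z k) := by
      refine mul_le_mul_of_nonneg_left ?_ (by positivity)
      exact Finset.single_le_sum (f := fun k => f (z k) / g (z k))
        (fun k _ => (div_pos (hfz k) (hgz k)).le) (Finset.mem_univ 0)
    have hlog : log (f (z 0) / g (z 0)) - log K ≤
        log ((1 / (K:ℝ)) * ∑ k, f (z k) / g (z k)) := by
      have h1 : log ((1 / (K:ℝ)) * (f (z 0) / g (z 0)))
          = log (f (z 0) / g (z 0)) - log K := by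
        rw [Real.log_mul (by positivity) hw0.ne', one_div, Real.log_inv]
        ring
      rw [← h1]
      exact Real.log_le_log (by positivity) hSge
    have : Rl z = (f (z 0) * ∏ k ∈ univ.erase (0 : Fin K), g (z k)) *
        (log (f (z 0) / g (z 0)) - log K) := by rw [hRl]; ring
    rw [this, hT0def]
    calc (f (z 0) * ∏ k ∈ univ.erase (0 : Fin K), g (z k)) *
          (log (f (z 0) / g (z 0)) - log K)
        ≤ (f (z 0) * ∏ k ∈ univ.erase (0 : Fin K), g (z k)) *
          log ((1 / (K:ℝ)) * ∑ k, f (z k) / g (z k)) :=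
          mul_le_mul_of_nonneg_left hlog hCpos
      _ = _ := by ring
  calc (∫ z, f z * log (f z / g z) ∂μ) - A * log K
      = ∫ z, Rl z ∂(Measure.pi fun _ : Fin K => μ) := hRlval.symm
    _ ≤ ∫ z, T0 z ∂(Measure.pi fun _ : Fin K => μ) := integral_mono_ae hRli hT0i hae
    _ = _ := hT0val.symm

private lemma lemL1 [NeZero K] {f g : Z → ℝ} {A : ℝ}
    (hfp : ∀ᵐ z ∂μ, 0 < f z) (hgp : ∀ᵐ z ∂μ, 0 < g z)
    (hgi : Integrable g μ) (hgn : ∫ z, g z ∂μ = 1)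
    (hA : A = ∫ z, f z ∂μ) (hApos : 0 < A)
    (hfl : Integrable (fun z => f z * log (f z / g z)) μ)
    (hint : Integrable (fun z : Fin K → Z =>
      (f (z 0) / A) * (∏ k ∈ univ.erase (0 : Fin K), g (z k)) *
        log ((1 / (K:ℝ)) * ∑ k, f (z k) / g (z k))) (Measure.pi fun _ : Fin K => μ)) :
    A * (∫ z : Fin K → Z, (f (z 0) / A) * (∏ k ∈ univ.erase (0 : Fin K), g (z k)) *
        log ((1 / (K:ℝ)) * ∑ k, f (z k) / g (z k)) ∂(Measure.pi fun _ : Fin K => μ)) ≤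
      ∫ z, f z * log (f z / g z) ∂μ := by
  classical
  have hK : (0:ℝ) < (K:ℝ) := by exact_mod_cast Nat.pos_of_ne_zero (NeZero.ne K)
  set pm := (Measure.pi fun _ : Fin K => μ) with hpm
  set T : Fin K → (Fin K → Z) → ℝ := fun j z =>
    f (z j) * (∏ k ∈ univ.erase j, g (z k)) *
      log ((1 / (K:ℝ)) * ∑ k, f (z k) / g (z k)) with hT
  have hT0eq : ∀ z : Fin K → Z, A * ((f (z 0) / A) * (∏ k ∈ univ.erase (0 : Fin K), g (z k)) *
      log ((1 / (K:ℝ)) * ∑ k, f (z k) / g (z k))) = T 0 z := by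
    intro z; rw [hT]; field_simp
  have hT0i : Integrable (T 0) pm :=
    (hint.const_mul A).congr (Filter.Eventually.of_forall hT0eq)
  have hT0val : A * (∫ z : Fin K → Z, (f (z 0) / A) * (∏ k ∈ univ.erase (0 : Fin K), g (z k)) *
      log ((1 / (K:ℝ)) * ∑ k, f (z k) / g (z k)) ∂pm) = ∫ z, T 0 z ∂pm := by
    rw [← integral_const_mul]
    exact integral_congr_ae (Filter.Eventually.of_forall hT0eq)
  have hTji : ∀ j : Fin K, Integrable (T j) pm := fun j => (swap_T j hT0i).1
  have hTjval : ∀ j : Fin K, ∫ z, T j z ∂pm = ∫ z, T 0 z ∂pm := fun j => (swap_T j hT0i).2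
  -- LHS function
  set Lz : (Fin K → Z) → ℝ := fun z => (1 / (K:ℝ)) * ∑ j, T j z with hLz
  have hLzi : Integrable Lz pm :=
    (integrable_finset_sum _ fun j _ => hTji j).const_mul _
  have hLzval : ∫ z, Lz z ∂pm = ∫ z, T 0 z ∂pm := by
    rw [hLz, integral_const_mul, integral_finset_sum _ fun j _ => hTji j]
    simp_rw [hTjval]
    rw [Finset.sum_const, Finset.card_univ, Fintype.card_fin, nsmul_eq_mul]
    field_simp
  -- RHS function
  set Rz : (Fin K → Z) → ℝ := fun z =>
    ∑ j, (1 / (K:ℝ)) * ((∏ k ∈ univ.erase j, g (z k)) *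
      (f (z j) * log (f (z j) / g (z j)))) with hRz
  have hRzi : Integrable Rz pm :=
    integrable_finset_sum _ fun j _ => ((prod_aux hgi hgn hfl j).1.const_mul _)
  have hRzval : ∫ z, Rz z ∂pm = ∫ z, f z * log (f z / g z) ∂μ := by
    rw [hRz, integral_finset_sum _ fun j _ => ((prod_aux hgi hgn hfl j).1.const_mul _)]
    have : ∀ j : Fin K, (∫ z : Fin K → Z, (1 / (K:ℝ)) * ((∏ k ∈ univ.erase j, g (z k)) *
        (f (z j) * log (f (z j) / g (z j)))) ∂pm)
        = (1 / (K:ℝ)) * ∫ z, f z * log (f z / g z) ∂μ := fun j => by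
      rw [integral_const_mul, (prod_aux hgi hgn hfl j).2]
    simp_rw [← hpm, this]
    rw [Finset.sum_const, Finset.card_univ, Fintype.card_fin, nsmul_eq_mul]
    field_simp
  -- pointwise bound
  have hae : ∀ᵐ z ∂pm, Lz z ≤ Rz z := by
    filter_upwards [ae_pi_eval hfp, ae_pi_eval hgp] with z hfz hgz
    set w : Fin K → ℝ := fun k => f (z k) / g (z k) with hw
    have hwpos : ∀ k, 0 < w k := fun k => div_pos (hfz k) (hgz k)
    set G : ℝ := ∏ k, g (z k) with hG
    have hGpos : 0 ≤ G := Finset.prod_nonneg fun k _ => (hgz k).le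
    set S : ℝ := (1 / (K:ℝ)) * ∑ k, w k with hS
    have hTj : ∀ j, T j z = G * (w j * log S) := by
      intro j
      simp only [hT, hS, hw, hG]
      rw [← Finset.mul_prod_erase univ (fun k => g (z k)) (Finset.mem_univ j)]
      field_simp [(hgz j).ne']
    have hLzz : Lz z = G * (S * log S) := by
      rw [hLz]
      simp_rw [hTj]
      rw [← Finset.mul_sum, ← Finset.sum_mul, hS]
      ring
    have hRzz : Rz z = G * ∑ j, (1 / (K:ℝ)) * (w j * log (w j)) := by
      rw [hRz, Finset.mul_sum]
      refine Finset.sum_congr rfl fun j _ => ?_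
      simp only [hw, hG]
      rw [← Finset.mul_prod_erase univ (fun k => g (z k)) (Finset.mem_univ j)]
      field_simp [(hgz j).ne', hK.ne']
    rw [hLzz, hRzz]
    refine mul_le_mul_of_nonneg_left ?_ hGpos
    have jensen := Real.convexOn_mul_log.map_sum_le
      (t := univ) (w := fun _ : Fin K => 1 / (K:ℝ)) (p := w)
      (fun i _ => by positivity)
      (by rw [Finset.sum_const, Finset.card_univ, Fintype.card_fin, nsmul_eq_mul]; field_simp)
      (fun i _ => (hwpos i).le)
    have hSsum : S = ∑ j, (1 / (K:ℝ)) • w j := by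
      rw [hS, Finset.mul_sum]; simp [smul_eq_mul]
    calc S * log S = (∑ j, (1 / (K:ℝ)) • w j) * log (∑ j, (1 / (K:ℝ)) • w j) := by
          rw [← hSsum]
      _ ≤ ∑ j, (1 / (K:ℝ)) • (w j * log (w j)) := jensen
      _ = ∑ j, (1 / (K:ℝ)) * (w j * log (w j)) := by simp [smul_eq_mul]
  calc A * (∫ z : Fin K → Z, (f (z 0) / A) * (∏ k ∈ univ.erase (0 : Fin K), g (z k)) *
        log ((1 / (K:ℝ)) * ∑ k, f (z k) / g (z k)) ∂pm) = ∫ z, T 0 z ∂pm := hT0val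
    _ = ∫ z, Lz z ∂pm := hLzval.symm
    _ ≤ ∫ z, Rz z ∂pm := integral_mono_ae hLzi hRzi hae
    _ = ∫ z, f z * log (f z / g z) ∂μ := hRzval

private lemma integral_pos_of_ae_pos {α : Type*} [MeasurableSpace α] {ν : Measure α}
    (hν : ν ≠ 0) {f : α → ℝ} (hf : ∀ᵐ a ∂ν, 0 < f a) (hfi : Integrable f ν) :
    0 < ∫ a, f a ∂ν := by
  rw [integral_pos_iff_support_of_nonneg_ae (hf.mono fun a ha => ha.le) hfi]
  have hc : ν (Function.support f)ᶜ = 0 := by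
    refine measure_mono_null ?_ (ae_iff.1 hf)
    intro a ha
    simp only [Set.mem_compl_iff, Function.mem_support, not_not] at ha
    simp [ha]
  by_contra hle
  push_neg at hle
  have hs0 : ν (Function.support f) = 0 := nonpos_iff_eq_zero.mp hle
  have h2 := measure_union_le (μ := ν) (Function.support f) (Function.support f)ᶜ
  rw [Set.union_compl_self, hs0, hc] at h2
  exact hν (Measure.measure_univ_eq_zero.mp (nonpos_iff_eq_zero.mp (by simpa using h2)))

private lemma ae_prod_snd {α β : Type*} [MeasurableSpace α] [MeasurableSpace β]
    (μ' : Measure α) (ν : Measure β) [SigmaFinite ν] {P : β → Prop} (h : ∀ᵐ b ∂ν, P b) :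
    ∀ᵐ w ∂(μ'.prod ν), P w.2 := by
  obtain ⟨N, hsub, hm, h0⟩ := exists_measurable_superset_of_null (ae_iff.1 h)
  rw [ae_iff]
  refine measure_mono_null (t := Set.univ ×ˢ N) ?_ ?_
  · intro w hw
    exact Set.mem_prod.mpr ⟨trivial, hsub hw⟩
  · rw [Measure.prod_prod, h0, mul_zero]

private lemma ae_prod_fst {α β : Type*} [MeasurableSpace α] [MeasurableSpace β]
    (μ' : Measure α) (ν : Measure β) [SigmaFinite ν] {P : α → Prop} (h : ∀ᵐ a ∂μ', P a) :
    ∀ᵐ w ∂(μ'.prod ν), P w.1 := by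
  obtain ⟨N, hsub, hm, h0⟩ := exists_measurable_superset_of_null (ae_iff.1 h)
  rw [ae_iff]
  refine measure_mono_null (t := N ×ˢ Set.univ) ?_ ?_
  · intro w hw
    exact Set.mem_prod.mpr ⟨hsub hw, trivial⟩
  · rw [Measure.prod_prod, h0, zero_mul]

end Helpers

/-- IWAE mutual-information bounds improve on the Barber–Agakov bounds, with at most
logarithmic improvement of the lower bound. -/
theorem iwae_mi_vs_ba
    (μX : Measure X) (μZ : Measure Z) [SigmaFinite μX] [SigmaFinite μZ]
    (p q : X × Z → ℝ)
    (hp_meas : Measurable p)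
    (hp_pos : ∀ᵐ w ∂(μX.prod μZ), 0 < p w)
    (hp_int : Integrable p (μX.prod μZ))
    (hp_norm : ∫ w, p w ∂(μX.prod μZ) = 1)
    (hq_meas : Measurable q)
    (hq_pos : ∀ᵐ w ∂(μX.prod μZ), 0 < q w)
    (hq_norm : ∀ x, ∫ z, q (x, z) ∂μZ = 1)
    (K : ℕ) [NeZero K]
    (h_int_ba : Integrable (fun w => p w * log (q w / pZ μX p w.2)) (μX.prod μZ))
    (h_int_bau : Integrable (fun w => pX μZ p w.1 * q w * log (q w / p w)) (μX.prod μZ))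
    (h_int_h : Integrable (fun w => p w * log (p w / pZ μX p w.2)) (μX.prod μZ))
    (h_int_innerL : ∀ x, Integrable
      (fun z : Fin K → Z =>
        (p (x, z 0) / pX μZ p x) * (∏ k ∈ Finset.univ.erase (0 : Fin K), q (x, z k)) *
          log ((1 / (K : ℝ)) * ∑ k, p (x, z k) / q (x, z k)))
      (Measure.pi fun _ : Fin K => μZ))
    (h_int_outerL : Integrable (fun x => pX μZ p x * iwaeInnerL μZ p q K x) μX)
    (h_int_innerU : ∀ x, Integrable
      (fun z : Fin K → Z =>
        (∏ k, q (x, z k)) * log ((1 / (K : ℝ)) * ∑ k, p (x, z k) / q (x, z k)))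
      (Measure.pi fun _ : Fin K => μZ))
    (h_int_outerU : Integrable (fun x => pX μZ p x * iwaeInnerU μZ p q K x) μX) :
    IBAL μX μZ p q ≤ IIWAEL μX μZ p q K ∧
    IIWAEL μX μZ p q K ≤ IBAL μX μZ p q + log K ∧
    IIWAEU μX μZ p q K ≤ IBAU μX μZ p q := by
    classical
  have hK0 : (K:ℝ) ≠ 0 := Nat.cast_ne_zero.mpr (NeZero.ne K)
  have hμZ : μZ ≠ 0 := by
    intro h
    rw [h, Measure.prod_zero] at hp_norm
    simp at hp_norm
  have hμX : μX ≠ 0 := by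
    intro h
    rw [h, Measure.zero_prod] at hp_norm
    simp at hp_norm
  -- q slices are integrable
  have hq_int : ∀ x, Integrable (fun z => q (x, z)) μZ := by
    intro x
    by_contra h
    have := hq_norm x
    rw [integral_undef h] at this
    exact one_ne_zero this.symm
  -- a.e. slice facts
  have hpp := Measure.ae_ae_of_ae_prod hp_pos
  have hqq := Measure.ae_ae_of_ae_prod hq_pos
  have hpi := hp_int.prod_right_ae
  have hPQae' := hp_int
  -- positivity of pX
  have hpX_pos : ∀ᵐ x ∂μX, 0 < pX μZ p x := by
    filter_upwards [hpp, hpi] with x hx hxi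
    exact integral_pos_of_ae_pos hμZ hx hxi
  -- positivity of pZ
  have hswap_pos : ∀ᵐ w ∂(μZ.prod μX), 0 < p (w.2, w.1) := by
    rw [← Measure.prod_swap]
    have hmeas2 : Measurable fun w : Z × X => p (w.2, w.1) :=
      hp_meas.comp (measurable_snd.prodMk measurable_fst)
    have hms : MeasurableSet {w : Z × X | 0 < p (w.2, w.1)} :=
      measurableSet_lt measurable_const hmeas2
    rw [MeasureTheory.ae_map_iff measurable_swap.aemeasurable hms]
    exact hp_pos.mono fun w hw => hw
  have hpZ_pos_ae : ∀ᵐ z ∂μZ, 0 < pZ μX p z := by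
    filter_upwards [Measure.ae_ae_of_ae_prod hswap_pos, hp_int.swap.prod_right_ae] with z hz hzi
    exact integral_pos_of_ae_pos hμX hz hzi
  have hpZpos := ae_prod_snd μX μZ hpZ_pos_ae
  -- integrability of p log(p/q)
  have h_pq_int : Integrable (fun w => p w * log (p w / q w)) (μX.prod μZ) := by
    refine (h_int_h.sub h_int_ba).congr ?_
    filter_upwards [hp_pos, hq_pos, hpZpos] with w h1 h2 h3
    simp only [Pi.sub_apply]
    rw [Real.log_div h1.ne' h3.ne', Real.log_div h2.ne' h3.ne', Real.log_div h1.ne' h2.ne']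
    ring
  have hPQae := h_pq_int.prod_right_ae
  have hJint : Integrable (fun x => ∫ z, p (x, z) * log (p (x, z) / q (x, z)) ∂μZ) μX :=
    h_pq_int.integral_prod_left
  have hpXint : Integrable (pX μZ p) μX := hp_int.integral_prod_left
  have hIntOne : ∫ x, pX μZ p x ∂μX = 1 := by
    rw [← hp_norm, integral_prod _ hp_int]
    rfl
  have hHB : HXZ μX μZ p - IBAL μX μZ p q
      = ∫ x, ∫ z, p (x, z) * log (p (x, z) / q (x, z)) ∂μZ ∂μX := by
    rw [HXZ, IBAL, ← integral_sub h_int_h h_int_ba]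
    have heq : ∫ w, (p w * log (p w / pZ μX p w.2) - p w * log (q w / pZ μX p w.2))
        ∂(μX.prod μZ) = ∫ w, p w * log (p w / q w) ∂(μX.prod μZ) := by
      refine integral_congr_ae ?_
      filter_upwards [hp_pos, hq_pos, hpZpos] with w h1 h2 h3
      rw [Real.log_div h1.ne' h3.ne', Real.log_div h2.ne' h3.ne', Real.log_div h1.ne' h2.ne']
      ring
    rw [heq, integral_prod _ h_pq_int]
  -- key 1
  have key1 : ∫ x, pX μZ p x * iwaeInnerL μZ p q K x ∂μX
      ≤ ∫ x, ∫ z, p (x, z) * log (p (x, z) / q (x, z)) ∂μZ ∂μX := by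
    refine integral_mono_ae h_int_outerL hJint ?_
    filter_upwards [hpp, hqq, hPQae, hpX_pos] with x hx1 hx2 hx3 hx4
    exact lemL1 (μ := μZ) (K := K) (f := fun z => p (x, z)) (g := fun z => q (x, z))
      (A := pX μZ p x) hx1 hx2 (hq_int x) (hq_norm x) rfl hx4 hx3 (h_int_innerL x)
  -- key 2
  have key2 : ∫ x, ((∫ z, p (x, z) * log (p (x, z) / q (x, z)) ∂μZ) - pX μZ p x * log K) ∂μX
      ≤ ∫ x, pX μZ p x * iwaeInnerL μZ p q K x ∂μX := by
    refine integral_mono_ae (hJint.sub (hpXint.mul_const _)) h_int_outerL ?_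
    filter_upwards [hpp, hqq, hpi, hPQae, hpX_pos] with x hx1 hx2 hx0 hx3 hx4
    exact lemL2 (μ := μZ) (K := K) (f := fun z => p (x, z)) (g := fun z => q (x, z))
      (A := pX μZ p x) hx1 hx2 (hq_int x) (hq_norm x) hx0 rfl hx4 hx3 (h_int_innerL x)
  have key2' : ∫ x, ((∫ z, p (x, z) * log (p (x, z) / q (x, z)) ∂μZ) - pX μZ p x * log K) ∂μX
      = (∫ x, ∫ z, p (x, z) * log (p (x, z) / q (x, z)) ∂μZ ∂μX) - log K := by
    rw [integral_sub hJint (hpXint.mul_const _), integral_mul_const, hIntOne, one_mul]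
  -- key 3
  have hpull : ∀ x, (∫ z, pX μZ p x * q (x, z) * log (q (x, z) / p (x, z)) ∂μZ)
      = pX μZ p x * ∫ z, q (x, z) * log (q (x, z) / p (x, z)) ∂μZ := by
    intro x
    rw [← integral_const_mul]
    exact integral_congr_ae (Filter.Eventually.of_forall fun z => by ring)
  have hBau_eq : (∫ w, pX μZ p w.1 * q w * log (q w / p w) ∂(μX.prod μZ))
      = ∫ x, pX μZ p x * ∫ z, q (x, z) * log (q (x, z) / p (x, z)) ∂μZ ∂μX := by
    rw [integral_prod _ h_int_bau]
    exact integral_congr_ae (Filter.Eventually.of_forall fun x => hpull x)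
  have hBauInt : Integrable
      (fun x => pX μZ p x * ∫ z, q (x, z) * log (q (x, z) / p (x, z)) ∂μZ) μX :=
    h_int_bau.integral_prod_left.congr (Filter.Eventually.of_forall fun x => hpull x)
  have hMae := h_int_bau.prod_right_ae
  have key3 : - ∫ x, pX μZ p x * iwaeInnerU μZ p q K x ∂μX
      ≤ ∫ x, pX μZ p x * ∫ z, q (x, z) * log (q (x, z) / p (x, z)) ∂μZ ∂μX := by
    rw [← integral_neg]
    refine integral_mono_ae h_int_outerU.neg hBauInt ?_
    filter_upwards [hpp, hqq, hpX_pos, hMae] with x h1 h2 h3 h4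
    have hql : Integrable (fun z => q (x, z) * log (q (x, z) / p (x, z))) μZ := by
      refine (h4.const_mul (pX μZ p x)⁻¹).congr (Filter.Eventually.of_forall fun z => ?_)
      have : (pX μZ p x)⁻¹ * (pX μZ p x * q (x, z) * log (q (x, z) / p (x, z)))
          = q (x, z) * log (q (x, z) / p (x, z)) := by
        rw [show (pX μZ p x)⁻¹ * (pX μZ p x * q (x, z) * log (q (x, z) / p (x, z)))
            = ((pX μZ p x)⁻¹ * pX μZ p x) * (q (x, z) * log (q (x, z) / p (x, z))) by ring,
          inv_mul_cancel₀ h3.ne', one_mul]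
      exact this
    have hU := lemU (μ := μZ) (K := K) (f := fun z => p (x, z)) (g := fun z => q (x, z))
      h1 h2 (hq_int x) (hq_norm x) hql (h_int_innerU x)
    have h5 : pX μZ p x * (- ∫ z, q (x, z) * log (q (x, z) / p (x, z)) ∂μZ)
        ≤ pX μZ p x * iwaeInnerU μZ p q K x := mul_le_mul_of_nonneg_left hU h3.le
    rw [mul_neg] at h5
    linarith
  refine ⟨?_, ?_, ?_⟩
  · unfold IIWAEL
    linarith [key1, hHB]
  · unfold IIWAEL
    linarith [key2, key2', hHB]
  · unfold IIWAEU IBAU HXZ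
    linarith [key3, hBau_eq]

end Stmt2
end
end

section
/- (Gap between IWAE and GIWAE log-partition-function bounds.) For every integer K ≥ 1 and every measurable critic T : Ω → ℝ: (i) ELBO_IWAE(q,K) = ELBO_GIWAE(q,T,K) + ∫_{Ω^K} (∏_{k=1}^K q(z_k)) · Σ_{s=1}^K v_s(z)·log(v_s(z)/ŵ_s(z)) dμ^K(z); (ii) EUBO_IWAE(q,K) = EUBO_GIWAE(q,T,K) − ∫_{Ω^K} p_tgt(z) · Σ_{s=1}^K ŵ_s(z)·log(ŵ_s(z)/v_s(z)) dμ^K(z). In particular, ELBO_GIWAE(q,T,K) ≤ ELBO_IWAE(q,K) and EUBO_IWAE(q,K) ≤ EUBO_GIWAE(q,T,K). -/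
open MeasureTheory Real

noncomputable section

namespace Stmt3

variable {Ω : Type*} [MeasurableSpace Ω]

/-- Importance ratio `r_k(z) = p̃(z_k) / q(z_k)`. -/
def ratio (q ptil : Ω → ℝ) {K : ℕ} (z : Fin K → Ω) (k : Fin K) : ℝ :=
  ptil (z k) / q (z k)

/-- Self-normalized importance-sampling weights `ŵ_s(z)`. -/
def snis (q ptil : Ω → ℝ) {K : ℕ} (z : Fin K → Ω) (s : Fin K) : ℝ :=
  ratio q ptil z s / ∑ k, ratio q ptil z k

/-- Softmax (variational SNIS) weights `v_s(z) = e^{T(z_s)} / Σ_k e^{T(z_k)}`. -/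
def softmaxW (T : Ω → ℝ) {K : ℕ} (z : Fin K → Ω) (s : Fin K) : ℝ :=
  exp (T (z s)) / ∑ k, exp (T (z k))

/-- GIWAE integrand
`B_s(z) = log(p̃(z_s)/q(z_s)) − T(z_s) + log((1/K) Σ_k e^{T(z_k)})`. -/
def giwaeB (q ptil T : Ω → ℝ) {K : ℕ} (z : Fin K → Ω) (s : Fin K) : ℝ :=
  log (ptil (z s) / q (z s)) - T (z s) + log ((1 / (K : ℝ)) * ∑ k, exp (T (z k)))

/-- Mixture target density `p_tgt(z) = (1/K) Σ_s p(z_s) ∏_{k≠s} q(z_k)`. -/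
def ptgt (q ptil : Ω → ℝ) (Z : ℝ) {K : ℕ} (z : Fin K → Ω) : ℝ :=
  (1 / (K : ℝ)) * ∑ s, (ptil (z s) / Z) * ∏ k ∈ Finset.univ.erase s, q (z k)

/-- Multi-sample IWAE lower bound on `log Z`. -/
def ELBO_IWAE (μ : Measure Ω) (q ptil : Ω → ℝ) (K : ℕ) : ℝ :=
  ∫ z : Fin K → Ω, (∏ k, q (z k)) * log ((1 / (K : ℝ)) * ∑ k, ratio q ptil z k)
    ∂(Measure.pi fun _ : Fin K => μ)

/-- Multi-sample IWAE upper bound on `log Z`. -/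
def EUBO_IWAE (μ : Measure Ω) (q ptil : Ω → ℝ) (Z : ℝ) (K : ℕ) [NeZero K] : ℝ :=
  ∫ z : Fin K → Ω,
    (ptil (z 0) / Z) * (∏ k ∈ Finset.univ.erase (0 : Fin K), q (z k)) *
      log ((1 / (K : ℝ)) * ∑ k, ratio q ptil z k)
    ∂(Measure.pi fun _ : Fin K => μ)

/-- GIWAE lower bound on `log Z`. -/
def ELBO_GIWAE (μ : Measure Ω) (q ptil T : Ω → ℝ) (K : ℕ) : ℝ :=
  ∫ z : Fin K → Ω, (∏ k, q (z k)) * ∑ s, softmaxW T z s * giwaeB q ptil T z s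
    ∂(Measure.pi fun _ : Fin K => μ)

/-- GIWAE upper bound on `log Z`. -/
def EUBO_GIWAE (μ : Measure Ω) (q ptil T : Ω → ℝ) (Z : ℝ) (K : ℕ) : ℝ :=
  ∫ z : Fin K → Ω,
    ∑ s, (1 / (K : ℝ)) * (ptil (z s) / Z) * (∏ k ∈ Finset.univ.erase s, q (z k)) *
      giwaeB q ptil T z s
    ∂(Measure.pi fun _ : Fin K => μ)


/-! ### Auxiliary lemmas -/

lemma gibbs {K : ℕ} (a b : Fin K → ℝ) (ha : ∀ s, 0 < a s) (hb : ∀ s, 0 < b s)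
    (hsa : ∑ s, a s = 1) (hsb : ∑ s, b s = 1) :
    0 ≤ ∑ s, a s * log (a s / b s) := by
  have key : ∑ s, a s * log (b s / a s) ≤ 0 := by
    calc ∑ s, a s * log (b s / a s) ≤ ∑ s, (b s - a s) := by
          refine Finset.sum_le_sum fun s _ => ?_
          have h := Real.log_le_sub_one_of_pos (div_pos (hb s) (ha s))
          have := mul_le_mul_of_nonneg_left h (ha s).le
          calc a s * log (b s / a s) ≤ a s * (b s / a s - 1) := this
            _ = b s - a s := by rw [mul_sub, mul_one, mul_div_cancel₀ _ (ha s).ne']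
      _ = 0 := by rw [Finset.sum_sub_distrib, hsa, hsb, sub_self]
  have heq : ∀ s, a s * log (a s / b s) = -(a s * log (b s / a s)) := by
    intro s
    rw [Real.log_div (ha s).ne' (hb s).ne', Real.log_div (hb s).ne' (ha s).ne']
    ring
  rw [Finset.sum_congr rfl fun s _ => heq s, Finset.sum_neg_distrib]
  linarith

section PW
variable {q ptil T : Ω → ℝ} {K : ℕ} [NeZero K] {Z : ℝ} {z : Fin K → Ω}
variable (hz : ∀ k, 0 < q (z k) ∧ 0 < ptil (z k))

include hz

lemma ratio_pos (k : Fin K) : 0 < ratio q ptil z k :=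
  div_pos (hz k).2 (hz k).1

lemma sumr_pos : 0 < ∑ k, ratio q ptil z k :=
  Finset.sum_pos (fun k _ => ratio_pos hz k)
    (Finset.univ_nonempty (α := Fin K))

lemma snis_pos (s : Fin K) : 0 < snis q ptil z s :=
  div_pos (ratio_pos hz s) (sumr_pos hz)

lemma snis_sum : ∑ s, snis q ptil z s = 1 := by
  unfold snis
  rw [← Finset.sum_div, div_self (sumr_pos hz).ne']

omit hz

lemma sumE_pos : 0 < ∑ k, exp (T (z k)) :=
  Finset.sum_pos (fun _ _ => exp_pos _) (Finset.univ_nonempty (α := Fin K))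

lemma softmaxW_pos (s : Fin K) : 0 < softmaxW T z s :=
  div_pos (exp_pos _) sumE_pos

lemma softmaxW_sum : ∑ s, softmaxW T z s = 1 := by
  unfold softmaxW
  rw [← Finset.sum_div, div_self (sumE_pos (T := T) (z := z)).ne']

include hz

lemma B_eq (s : Fin K) :
    giwaeB q ptil T z s
      = log ((1 / (K:ℝ)) * ∑ k, ratio q ptil z k)
        + log (snis q ptil z s / softmaxW T z s) := by
  have hS := sumr_pos hz
  have hE : 0 < ∑ k, exp (T (z k)) := sumE_pos (T := T) (z := z)
  have hr := ratio_pos hz s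
  have hK : (0:ℝ) < (K:ℝ) := by exact_mod_cast Nat.pos_of_ne_zero (NeZero.ne K)
  have h1K : (0:ℝ) < 1 / (K:ℝ) := by positivity
  have hx : snis q ptil z s / softmaxW T z s
      = (ratio q ptil z s * ∑ k, exp (T (z k))) / ((∑ k, ratio q ptil z k) * exp (T (z s))) := by
    unfold snis softmaxW
    field_simp
  rw [hx, Real.log_mul h1K.ne' hS.ne',
    Real.log_div (mul_pos hr hE).ne' (mul_pos hS (exp_pos _)).ne',
    Real.log_mul hr.ne' hE.ne', Real.log_mul hS.ne' (exp_pos _).ne', Real.log_exp]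
  unfold giwaeB ratio
  rw [Real.log_mul h1K.ne' hE.ne']
  ring

lemma elbo_pw :
    ∑ s, softmaxW T z s * giwaeB q ptil T z s
      = log ((1 / (K:ℝ)) * ∑ k, ratio q ptil z k)
        - ∑ s, softmaxW T z s * log (softmaxW T z s / snis q ptil z s) := by
  have h : ∀ s : Fin K, softmaxW T z s * giwaeB q ptil T z s
      = softmaxW T z s * log ((1 / (K:ℝ)) * ∑ k, ratio q ptil z k)
        - softmaxW T z s * log (softmaxW T z s / snis q ptil z s) := by
    intro s
    rw [B_eq hz s, Real.log_div (snis_pos hz s).ne' (softmaxW_pos (T := T) s).ne',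
      Real.log_div (softmaxW_pos (T := T) (z := z) s).ne' (snis_pos hz s).ne']
    ring
  rw [Finset.sum_congr rfl fun s _ => h s, Finset.sum_sub_distrib, ← Finset.sum_mul,
    softmaxW_sum, one_mul]

lemma ptil_prod_eq (s : Fin K) :
    (ptil (z s) / Z) * ∏ k ∈ Finset.univ.erase s, q (z k)
      = (1 / Z) * ratio q ptil z s * ∏ k, q (z k) := by
  rw [← Finset.mul_prod_erase Finset.univ (fun k => q (z k)) (Finset.mem_univ s)]
  unfold ratio
  linear_combination (-(1/Z) * ptil (z s) * ∏ k ∈ Finset.univ.erase s, q (z k)) *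
    mul_inv_cancel₀ (hz s).1.ne'

lemma ptgt_eq :
    ptgt q ptil Z z = (1 / (K:ℝ)) * (1 / Z) * (∑ k, ratio q ptil z k) * ∏ k, q (z k) := by
  unfold ptgt
  rw [Finset.sum_congr rfl fun s _ => ptil_prod_eq hz s, ← Finset.sum_mul, ← Finset.mul_sum]
  ring

lemma eubo_pw :
    ∑ s, (1 / (K:ℝ)) * (ptil (z s) / Z) * (∏ k ∈ Finset.univ.erase s, q (z k))
        * giwaeB q ptil T z s
      = ptgt q ptil Z z * log ((1 / (K:ℝ)) * ∑ k, ratio q ptil z k)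
        + ptgt q ptil Z z * ∑ s, snis q ptil z s * log (snis q ptil z s / softmaxW T z s) := by
  have hS := sumr_pos hz
  have h : ∀ s : Fin K, (1 / (K:ℝ)) * (ptil (z s) / Z) * (∏ k ∈ Finset.univ.erase s, q (z k))
        * giwaeB q ptil T z s
      = ptgt q ptil Z z * (snis q ptil z s * log ((1 / (K:ℝ)) * ∑ k, ratio q ptil z k))
        + ptgt q ptil Z z * (snis q ptil z s * log (snis q ptil z s / softmaxW T z s)) := by
    intro s
    have hc : (1 / (K:ℝ)) * (ptil (z s) / Z) * (∏ k ∈ Finset.univ.erase s, q (z k))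
        = ptgt q ptil Z z * snis q ptil z s := by
      rw [ptgt_eq hz, mul_assoc, ptil_prod_eq hz s]
      unfold snis
      linear_combination (-(1/(K:ℝ)) * (1/Z) * ratio q ptil z s * ∏ k, q (z k)) *
        mul_inv_cancel₀ hS.ne'
    rw [B_eq hz s, hc]
    ring
  rw [Finset.sum_congr rfl fun s _ => h s, Finset.sum_add_distrib, ← Finset.mul_sum,
    ← Finset.mul_sum, ← Finset.sum_mul, snis_sum hz, one_mul]

end PW

lemma G_swap (q ptil : Ω → ℝ) (Z : ℝ) {K : ℕ} [NeZero K] (s : Fin K) (z : Fin K → Ω) :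
    (ptil (z (Equiv.swap (0 : Fin K) s 0)) / Z) *
        (∏ k ∈ Finset.univ.erase (0 : Fin K), q (z (Equiv.swap (0 : Fin K) s k))) *
        log ((1 / (K : ℝ)) * ∑ k, ratio q ptil (fun b => z (Equiv.swap (0 : Fin K) s b)) k)
      = (ptil (z s) / Z) * (∏ k ∈ Finset.univ.erase s, q (z k)) *
        log ((1 / (K : ℝ)) * ∑ k, ratio q ptil z k) := by
  have h1 : Equiv.swap (0 : Fin K) s 0 = s := Equiv.swap_apply_left _ _
  have h2 : (∏ k ∈ Finset.univ.erase (0 : Fin K), q (z (Equiv.swap (0 : Fin K) s k)))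
      = ∏ k ∈ Finset.univ.erase s, q (z k) := by
    rw [show (∏ k ∈ Finset.univ.erase (0 : Fin K), q (z (Equiv.swap (0 : Fin K) s k)))
        = ∏ k ∈ (Finset.univ.erase (0 : Fin K)).image (Equiv.swap (0 : Fin K) s), q (z k) from
        (Finset.prod_image (f := fun j => q (z j))
          fun a _ b _ h => (Equiv.swap (0 : Fin K) s).injective h).symm,
      Finset.image_erase (Equiv.swap (0 : Fin K) s).injective, Finset.image_univ_equiv, h1]
  have h3 : (∑ k, ratio q ptil (fun b => z (Equiv.swap (0 : Fin K) s b)) k)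
      = ∑ k, ratio q ptil z k := by
    simp only [ratio]
    exact Equiv.sum_comp (Equiv.swap (0 : Fin K) s) (fun j => ptil (z j) / q (z j))
  rw [h1, h2, h3]

/-- Gap between IWAE and GIWAE log-partition-function bounds. -/
theorem iwae_giwae_gap
    (μ : Measure Ω) [SigmaFinite μ] (q ptil : Ω → ℝ)
    (hq_meas : Measurable q) (hq_nonneg : ∀ ω, 0 ≤ q ω)
    (hq_pos : ∀ᵐ ω ∂μ, 0 < q ω) (hq_norm : ∫ ω, q ω ∂μ = 1)
    (hptil_meas : Measurable ptil) (hptil_pos : ∀ᵐ ω ∂μ, 0 < ptil ω)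
    (hptil_int : Integrable ptil μ)
    (Z : ℝ) (hZ : Z = ∫ ω, ptil ω ∂μ) (hZ_pos : 0 < Z)
    (K : ℕ) [NeZero K]
    (T : Ω → ℝ) (hT_meas : Measurable T)
    (h_int_elbo_iwae : Integrable
      (fun z : Fin K → Ω => (∏ k, q (z k)) * log ((1 / (K : ℝ)) * ∑ k, ratio q ptil z k))
      (Measure.pi fun _ : Fin K => μ))
    (h_int_eubo_iwae : Integrable
      (fun z : Fin K → Ω =>
        (ptil (z 0) / Z) * (∏ k ∈ Finset.univ.erase (0 : Fin K), q (z k)) *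
          log ((1 / (K : ℝ)) * ∑ k, ratio q ptil z k))
      (Measure.pi fun _ : Fin K => μ))
    (h_int_elbo_giwae : Integrable
      (fun z : Fin K → Ω => (∏ k, q (z k)) * ∑ s, softmaxW T z s * giwaeB q ptil T z s)
      (Measure.pi fun _ : Fin K => μ))
    (h_int_eubo_giwae : Integrable
      (fun z : Fin K → Ω =>
        ∑ s, (1 / (K : ℝ)) * (ptil (z s) / Z) * (∏ k ∈ Finset.univ.erase s, q (z k)) *
          giwaeB q ptil T z s)
      (Measure.pi fun _ : Fin K => μ))
    (h_int_corr1 : Integrable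
      (fun z : Fin K → Ω =>
        (∏ k, q (z k)) * ∑ s, softmaxW T z s * log (softmaxW T z s / snis q ptil z s))
      (Measure.pi fun _ : Fin K => μ))
    (h_int_corr2 : Integrable
      (fun z : Fin K → Ω =>
        ptgt q ptil Z z * ∑ s, snis q ptil z s * log (snis q ptil z s / softmaxW T z s))
      (Measure.pi fun _ : Fin K => μ)) :
    ELBO_IWAE μ q ptil K
      = ELBO_GIWAE μ q ptil T K
        + ∫ z : Fin K → Ω,
            (∏ k, q (z k)) * ∑ s, softmaxW T z s * log (softmaxW T z s / snis q ptil z s)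
            ∂(Measure.pi fun _ : Fin K => μ) ∧
    EUBO_IWAE μ q ptil Z K
      = EUBO_GIWAE μ q ptil T Z K
        - ∫ z : Fin K → Ω,
            ptgt q ptil Z z * ∑ s, snis q ptil z s * log (snis q ptil z s / softmaxW T z s)
            ∂(Measure.pi fun _ : Fin K => μ) ∧
    ELBO_GIWAE μ q ptil T K ≤ ELBO_IWAE μ q ptil K ∧
    EUBO_IWAE μ q ptil Z K ≤ EUBO_GIWAE μ q ptil T Z K := by
  have hμK : True := trivial
  -- a.e. positivity of all coordinates
  have hG : ∀ᵐ z ∂(Measure.pi fun _ : Fin K => μ), ∀ k, 0 < q (z k) ∧ 0 < ptil (z k) := by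
    rw [ae_all_iff]
    intro k
    rw [ae_iff]
    have hset : {z : Fin K → Ω | ¬ (0 < q (z k) ∧ 0 < ptil (z k))}
        = Function.eval k ⁻¹' {ω : Ω | ¬ (0 < q ω ∧ 0 < ptil ω)} := rfl
    rw [hset]
    exact Measure.pi_eval_preimage_null (μ := fun _ : Fin K => μ)
      (ae_iff.mp (hq_pos.and hptil_pos))
  have hK : (0:ℝ) < (K:ℝ) := by exact_mod_cast Nat.pos_of_ne_zero (NeZero.ne K)
  -- ELBO identity
  have h1 : ELBO_IWAE μ q ptil K
      = ELBO_GIWAE μ q ptil T K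
        + ∫ z : Fin K → Ω,
            (∏ k, q (z k)) * ∑ s, softmaxW T z s * log (softmaxW T z s / snis q ptil z s)
            ∂(Measure.pi fun _ : Fin K => μ) := by
    have hae : (fun z : Fin K → Ω =>
          (∏ k, q (z k)) * log ((1 / (K : ℝ)) * ∑ k, ratio q ptil z k))
        =ᵐ[(Measure.pi fun _ : Fin K => μ)]
        (fun z => (∏ k, q (z k)) * ∑ s, softmaxW T z s * giwaeB q ptil T z s
          + (∏ k, q (z k)) * ∑ s, softmaxW T z s * log (softmaxW T z s / snis q ptil z s)) := by
      filter_upwards [hG] with z hz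
      rw [elbo_pw hz]
      ring
    rw [ELBO_IWAE, integral_congr_ae hae, integral_add h_int_elbo_giwae h_int_corr1]
    rfl
  -- EUBO: symmetrization
  set L : (Fin K → Ω) → ℝ := fun z => log ((1 / (K : ℝ)) * ∑ k, ratio q ptil z k) with hL
  set G : Fin K → (Fin K → Ω) → ℝ := fun s z =>
    (ptil (z s) / Z) * (∏ k ∈ Finset.univ.erase s, q (z k)) * L z with hGdef
  have hswap : ∀ s : Fin K,
      Integrable (G s) (Measure.pi fun _ : Fin K => μ) ∧
      (∫ z, G s z ∂(Measure.pi fun _ : Fin K => μ))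
        = ∫ z, G 0 z ∂(Measure.pi fun _ : Fin K => μ) := by
    intro s
    have hmp := measurePreserving_piCongrLeft (fun _ : Fin K => μ) (Equiv.swap (0 : Fin K) s)
    set ϕ := MeasurableEquiv.piCongrLeft (fun _ : Fin K => Ω) (Equiv.swap (0 : Fin K) s) with hϕdef
    have hϕz : ∀ z : Fin K → Ω, ϕ z = fun b => z (Equiv.swap (0 : Fin K) s b) := by
      intro z
      funext b
      simp [hϕdef, MeasurableEquiv.piCongrLeft, Equiv.piCongrLeft]
    have hcomp : (fun z => G 0 (ϕ z)) = G s := by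
      funext z
      rw [hϕz z]
      simp only [hGdef, hL]
      exact G_swap q ptil Z s z
    have hG0 : Integrable (G 0) (Measure.pi fun _ : Fin K => μ) := h_int_eubo_iwae
    constructor
    · have := (hmp.integrable_comp_emb ϕ.measurableEmbedding (g := G 0)).mpr hG0
      rwa [show G 0 ∘ ϕ = G s from hcomp] at this
    · calc ∫ z, G s z ∂(Measure.pi fun _ : Fin K => μ)
            = ∫ z, G 0 (ϕ z) ∂(Measure.pi fun _ : Fin K => μ) := by rw [← hcomp]
        _ = ∫ z, G 0 z ∂(Measure.pi fun _ : Fin K => μ) :=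
            hmp.integral_comp ϕ.measurableEmbedding (G 0)
  have hEU0 : EUBO_IWAE μ q ptil Z K = ∫ z, G 0 z ∂(Measure.pi fun _ : Fin K => μ) := rfl
  have hptgtL : (fun z : Fin K → Ω => ptgt q ptil Z z * L z)
      = fun z => (1 / (K:ℝ)) * ∑ s, G s z := by
    funext z
    simp only [hGdef, ptgt]
    rw [mul_assoc, Finset.sum_mul]
  have hint_ptgtL : ∫ z, ptgt q ptil Z z * L z ∂(Measure.pi fun _ : Fin K => μ)
      = EUBO_IWAE μ q ptil Z K := by
    rw [hptgtL, integral_const_mul, integral_finset_sum _ fun s _ => (hswap s).1,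
      Finset.sum_congr rfl fun s _ => (hswap s).2, Finset.sum_const, Finset.card_univ,
      Fintype.card_fin, nsmul_eq_mul, hEU0]
    field_simp
  -- EUBO identity
  have h2 : EUBO_IWAE μ q ptil Z K
      = EUBO_GIWAE μ q ptil T Z K
        - ∫ z : Fin K → Ω,
            ptgt q ptil Z z * ∑ s, snis q ptil z s * log (snis q ptil z s / softmaxW T z s)
            ∂(Measure.pi fun _ : Fin K => μ) := by
    have hae : (fun z : Fin K → Ω => ptgt q ptil Z z * L z)
        =ᵐ[(Measure.pi fun _ : Fin K => μ)]
        (fun z =>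
          (∑ s, (1 / (K : ℝ)) * (ptil (z s) / Z) * (∏ k ∈ Finset.univ.erase s, q (z k)) *
            giwaeB q ptil T z s)
          - ptgt q ptil Z z * ∑ s, snis q ptil z s * log (snis q ptil z s / softmaxW T z s)) := by
      filter_upwards [hG] with z hz
      rw [eubo_pw hz]
      ring
    rw [← hint_ptgtL, integral_congr_ae hae, integral_sub h_int_eubo_giwae h_int_corr2]
    rfl
  -- nonnegativity of the correction terms
  have hcorr1 : 0 ≤ ∫ z : Fin K → Ω,
      (∏ k, q (z k)) * ∑ s, softmaxW T z s * log (softmaxW T z s / snis q ptil z s)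
      ∂(Measure.pi fun _ : Fin K => μ) := by
    refine integral_nonneg_of_ae ?_
    filter_upwards [hG] with z hz
    refine mul_nonneg (Finset.prod_nonneg fun k _ => hq_nonneg _) ?_
    exact gibbs _ _ (fun s => softmaxW_pos s) (fun s => snis_pos hz s)
      softmaxW_sum (snis_sum hz)
  have hcorr2 : 0 ≤ ∫ z : Fin K → Ω,
      ptgt q ptil Z z * ∑ s, snis q ptil z s * log (snis q ptil z s / softmaxW T z s)
      ∂(Measure.pi fun _ : Fin K => μ) := by
    refine integral_nonneg_of_ae ?_
    filter_upwards [hG] with z hz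
    refine mul_nonneg ?_
      (gibbs _ _ (fun s => snis_pos hz s) (fun s => softmaxW_pos s)
        (snis_sum hz) softmaxW_sum)
    rw [ptgt_eq hz]
    have h1 : (0:ℝ) ≤ ∑ k, ratio q ptil z k := (sumr_pos hz).le
    have h2 : (0:ℝ) ≤ ∏ k, q (z k) := Finset.prod_nonneg fun k _ => hq_nonneg _
    have h3 : (0:ℝ) ≤ 1 / Z := by positivity
    positivity
  exact ⟨h1, h2, by linarith, by linarith⟩

end Stmt3
end
end

section
/- (Improvement of IWAE over GIWAE mutual-information lower bounds.) For every integer K ≥ 1 and every measurable critic T : X × Z → ℝ, I_IWAE_L(q,K) = I_GIWAE_L(q,T,K) + ∫ p_X(x) ∫_{Z^K} p_tgt(z₁,…,z_K | x) · Σ_{s=1}^K ŵ^p_s(x,z)·log(ŵ^p_s(x,z)/ŵ^T_s(x,z)) dμ_Z^K dμ_X, where p_tgt(z₁,…,z_K | x) := (1/K)·Σ_{s=1}^K p(z_s|x)·∏_{k≠s} q(z_k|x), ŵ^p_s(x,z) := (p(x,z_s)/q(z_s|x)) / (Σ_{k=1}^K p(x,z_k)/q(z_k|x)) are the true self-normalized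 importance weights, and ŵ^T_s(x,z) := e^{T(x,z_s)} / (Σ_{k=1}^K e^{T(x,z_k)}) are the critic's softmax weights. In particular I_GIWAE_L(q,T,K) ≤ I_IWAE_L(q,K). -/
open MeasureTheory Real

noncomputable section

namespace Stmt4

variable {X Z : Type*} [MeasurableSpace X] [MeasurableSpace Z]

/-- Marginal density `p_X(x) = ∫ p(x,z) dμ_Z(z)`. -/
def pX (μZ : Measure Z) (p : X × Z → ℝ) (x : X) : ℝ := ∫ z, p (x, z) ∂μZ

/-- Marginal density `p_Z(z) = ∫ p(x,z) dμ_X(x)`. -/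
def pZ (μX : Measure X) (p : X × Z → ℝ) (z : Z) : ℝ := ∫ x, p (x, z) ∂μX

/-- Barber–Agakov lower bound `I_BA_L(q) = ∫∫ p(x,z) log(q(z|x)/p_Z(z))`. -/
def IBAL (μX : Measure X) (μZ : Measure Z) (p q : X × Z → ℝ) : ℝ :=
  ∫ w, p w * log (q w / pZ μX p w.2) ∂(μX.prod μZ)

/-- `∫∫ p(x,z) log p(x|z)` with `p(x|z) = p(x,z)/p_Z(z)`. -/
def HXZ (μX : Measure X) (μZ : Measure Z) (p : X × Z → ℝ) : ℝ :=
  ∫ w, p w * log (p w / pZ μX p w.2) ∂(μX.prod μZ)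

/-- Inner `Z^K`-integral of the IWAE lower bound on mutual information. -/
def iwaeInner (μZ : Measure Z) (p q : X × Z → ℝ) (K : ℕ) [NeZero K] (x : X) : ℝ :=
  ∫ z : Fin K → Z,
    (p (x, z 0) / pX μZ p x) * (∏ k ∈ Finset.univ.erase (0 : Fin K), q (x, z k)) *
      log ((1 / (K : ℝ)) * ∑ k, p (x, z k) / q (x, z k))
    ∂(Measure.pi fun _ : Fin K => μZ)

/-- IWAE lower bound on mutual information. -/
def IIWAEL (μX : Measure X) (μZ : Measure Z) (p q : X × Z → ℝ) (K : ℕ) [NeZero K] : ℝ :=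
  HXZ μX μZ p - ∫ x, pX μZ p x * iwaeInner μZ p q K x ∂μX

/-- Inner `Z^K`-integral of the GIWAE contrastive term. -/
def giwaeInner (μZ : Measure Z) (p q T : X × Z → ℝ) (K : ℕ) [NeZero K] (x : X) : ℝ :=
  ∫ z : Fin K → Z,
    (p (x, z 0) / pX μZ p x) * (∏ k ∈ Finset.univ.erase (0 : Fin K), q (x, z k)) *
      log (exp (T (x, z 0)) / ((1 / (K : ℝ)) * ∑ k, exp (T (x, z k))))
    ∂(Measure.pi fun _ : Fin K => μZ)

/-- GIWAE lower bound on mutual information. -/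
def IGIWAEL (μX : Measure X) (μZ : Measure Z) (p q T : X × Z → ℝ) (K : ℕ) [NeZero K] : ℝ :=
  IBAL μX μZ p q + ∫ x, pX μZ p x * giwaeInner μZ p q T K x ∂μX

/-- True self-normalized importance weights `ŵ^p_s(x,z)`. -/
def wp (p q : X × Z → ℝ) (x : X) {K : ℕ} (z : Fin K → Z) (s : Fin K) : ℝ :=
  (p (x, z s) / q (x, z s)) / ∑ k, p (x, z k) / q (x, z k)

/-- Critic softmax weights `ŵ^T_s(x,z)`. -/
def wT (T : X × Z → ℝ) (x : X) {K : ℕ} (z : Fin K → Z) (s : Fin K) : ℝ :=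
  exp (T (x, z s)) / ∑ k, exp (T (x, z k))

/-- Conditional mixture target density `p_tgt(z₁,…,z_K | x)`. -/
def ptgtx (μZ : Measure Z) (p q : X × Z → ℝ) (x : X) {K : ℕ} (z : Fin K → Z) : ℝ :=
  (1 / (K : ℝ)) * ∑ s, (p (x, z s) / pX μZ p x) * ∏ k ∈ Finset.univ.erase s, q (x, z k)

/-- Inner `Z^K`-integral of the KL gap between IWAE and GIWAE. -/
def klInner (μZ : Measure Z) (p q T : X × Z → ℝ) (K : ℕ) (x : X) : ℝ :=
  ∫ z : Fin K → Z,
    ptgtx μZ p q x z * ∑ s, wp p q x z s * log (wp p q x z s / wT T x z s)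
    ∂(Measure.pi fun _ : Fin K => μZ)

lemma gibbs {K : ℕ} (a b : Fin K → ℝ) (ha : ∀ s, 0 < a s) (hb : ∀ s, 0 < b s)
    (hsa : ∑ s, a s = 1) (hsb : ∑ s, b s = 1) :
    0 ≤ ∑ s, a s * log (a s / b s) := by
  have h : ∀ s : Fin K, a s - b s ≤ a s * log (a s / b s) := by
    intro s
    have h1 : log (b s / a s) ≤ b s / a s - 1 := Real.log_le_sub_one_of_pos (div_pos (hb s) (ha s))
    have e1 : log (a s / b s) = log (a s) - log (b s) := Real.log_div (ha s).ne' (hb s).ne'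
    have e2 : log (b s / a s) = log (b s) - log (a s) := Real.log_div (hb s).ne' (ha s).ne'
    have e3 : a s * (b s / a s) = b s := by field_simp [(ha s).ne']
    have h2 := mul_le_mul_of_nonneg_left h1 (ha s).le
    rw [e2, e1] at *
    nlinarith
  have : (0:ℝ) = ∑ s, (a s - b s) := by rw [Finset.sum_sub_distrib, hsa, hsb]; ring
  rw [this]
  exact Finset.sum_le_sum (fun s _ => h s)

lemma integral_pos_of_ae_pos {α : Type*} [MeasurableSpace α] {μ : Measure α} (hμ : μ ≠ 0)
    {f : α → ℝ} (hf : Integrable f μ) (h : ∀ᵐ a ∂μ, 0 < f a) : 0 < ∫ a, f a ∂μ := by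
  rw [integral_pos_iff_support_of_nonneg_ae (h.mono fun a ha => ha.le) hf]
  have hcompl : μ (Function.support f)ᶜ = 0 := by
    refine measure_mono_null ?_ (ae_iff.mp h)
    intro a ha
    simp only [Set.mem_compl_iff, Function.mem_support, not_not] at ha
    simp [ha]
  by_contra h0
  push_neg at h0
  have hs0 : μ (Function.support f) = 0 := le_antisymm h0 zero_le
  have : μ Set.univ = 0 := by
    have := measure_union_le (μ := μ) (Function.support f) (Function.support f)ᶜ
    rw [Set.union_compl_self] at this
    simpa [hs0, hcompl] using this
  exact hμ (Measure.measure_univ_eq_zero.mp this)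

lemma ae_pi_of_ae {Z : Type*} [MeasurableSpace Z] {K : ℕ} {μ : Measure Z} [SigmaFinite μ]
    {P : Z → Prop} (h : ∀ᵐ z ∂μ, P z) :
    ∀ᵐ z ∂(Measure.pi fun _ : Fin K => μ), ∀ k, P (z k) := by
  rw [ae_all_iff]
  intro k
  exact MeasureTheory.Measure.tendsto_eval_ae_ae.eventually h

lemma inner_identity (μZ : Measure Z) [SigmaFinite μZ] (p q T : X × Z → ℝ)
    (K : ℕ) [NeZero K] (x : X)
    (hfpos : ∀ᵐ z ∂μZ, 0 < p (x, z)) (hgpos : ∀ᵐ z ∂μZ, 0 < q (x, z))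
    (hc : 0 < pX μZ p x)
    (hg_int : Integrable (fun z => q (x, z)) μZ)
    (hq1 : ∫ z, q (x, z) ∂μZ = 1)
    (hL_int : Integrable (fun z => p (x, z) * log (p (x, z) / q (x, z))) μZ)
    (hiwae : Integrable (fun z : Fin K → Z =>
        (p (x, z 0) / pX μZ p x) * (∏ k ∈ Finset.univ.erase (0 : Fin K), q (x, z k)) *
          log ((1 / (K : ℝ)) * ∑ k, p (x, z k) / q (x, z k)))
      (Measure.pi fun _ : Fin K => μZ))
    (hgiwae : Integrable (fun z : Fin K → Z =>
        (p (x, z 0) / pX μZ p x) * (∏ k ∈ Finset.univ.erase (0 : Fin K), q (x, z k)) *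
          log (exp (T (x, z 0)) / ((1 / (K : ℝ)) * ∑ k, exp (T (x, z k)))))
      (Measure.pi fun _ : Fin K => μZ)) :
    pX μZ p x * klInner μZ p q T K x
      = (∫ z, p (x, z) * log (p (x, z) / q (x, z)) ∂μZ)
        - pX μZ p x * iwaeInner μZ p q K x - pX μZ p x * giwaeInner μZ p q T K x := by
  letI : MeasureSpace Z := ⟨μZ⟩
  haveI : SigmaFinite (volume : Measure Z) := ‹SigmaFinite μZ›
  have hKpos : (0:ℝ) < (K : ℝ) := by
    have := Nat.pos_of_ne_zero (NeZero.ne K); exact_mod_cast this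
  set c : ℝ := pX μZ p x with hcdef
  have hcne : c ≠ 0 := hc.ne'
  -- the family of integrands
  set FF : Fin K → (Fin K → Z) → ℝ := fun s z =>
      (p (x, z s) * log (p (x, z s) / q (x, z s)) / c) * ∏ k ∈ Finset.univ.erase s, q (x, z k)
      - ((p (x, z s) / c) * (∏ k ∈ Finset.univ.erase s, q (x, z k)) *
          log ((1 / (K : ℝ)) * ∑ k, p (x, z k) / q (x, z k))
        + (p (x, z s) / c) * (∏ k ∈ Finset.univ.erase s, q (x, z k)) *
          log (exp (T (x, z s)) / ((1 / (K : ℝ)) * ∑ k, exp (T (x, z k))))) with hFF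
  have hvol : (Measure.pi fun _ : Fin K => μZ) = (volume : Measure (Fin K → Z)) := rfl
  -- integrability of A1
  classical
  set h : Fin K → Z → ℝ := fun i => if i = 0 then
      (fun y => p (x, y) * log (p (x, y) / q (x, y)) / c) else (fun y => q (x, y)) with hh
  have h_int : ∀ i, Integrable (h i) volume := by
    intro i
    by_cases hi : i = 0
    · simp only [hh, hi, ↓reduceIte]; exact hL_int.div_const c
    · simp only [hh, hi, ↓reduceIte]; exact hg_int
  have hprod_eq : ∀ z : Fin K → Z, (∏ i, h i (z i)) =
      (p (x, z 0) * log (p (x, z 0) / q (x, z 0)) / c) *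
        ∏ k ∈ Finset.univ.erase (0 : Fin K), q (x, z k) := by
    intro z
    rw [← Finset.mul_prod_erase Finset.univ _ (Finset.mem_univ (0 : Fin K))]
    rw [Finset.prod_congr rfl (fun k hk =>
      (by simp [hh, Finset.ne_of_mem_erase hk] : h k (z k) = q (x, z k)))]
    simp [hh]
  have hA1_int : Integrable (fun z : Fin K → Z =>
      (p (x, z 0) * log (p (x, z 0) / q (x, z 0)) / c) *
        ∏ k ∈ Finset.univ.erase (0 : Fin K), q (x, z k)) volume := by
    refine (Integrable.fintype_prod_dep h_int).congr (Filter.Eventually.of_forall ?_)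
    exact hprod_eq
  have hA1_val : (∫ z : Fin K → Z,
      (p (x, z 0) * log (p (x, z 0) / q (x, z 0)) / c) *
        ∏ k ∈ Finset.univ.erase (0 : Fin K), q (x, z k)) =
      (∫ z, p (x, z) * log (p (x, z) / q (x, z)) ∂μZ) / c := by
    rw [show (fun z : Fin K → Z =>
      (p (x, z 0) * log (p (x, z 0) / q (x, z 0)) / c) *
        ∏ k ∈ Finset.univ.erase (0 : Fin K), q (x, z k)) = fun z => ∏ i, h i (z i)
      from funext fun z => (hprod_eq z).symm]
    rw [show (∫ z : Fin K → Z, ∏ i, h i (z i)) = ∏ i, ∫ y, h i y from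
      MeasureTheory.integral_fintype_prod_eq_prod h]
    rw [← Finset.mul_prod_erase Finset.univ _ (Finset.mem_univ (0 : Fin K))]
    have : ∀ k ∈ Finset.univ.erase (0 : Fin K), (∫ y, h k y) = 1 := by
      intro k hk
      simp only [hh, if_neg (Finset.ne_of_mem_erase hk)]
      exact hq1
    rw [Finset.prod_congr rfl this, Finset.prod_const_one, mul_one]
    simp only [hh, if_pos rfl]
    rw [integral_div]
    rfl
  -- integrability and value of FF 0
  have hIG : Integrable (fun z : Fin K → Z =>
      (p (x, z 0) / c) * (∏ k ∈ Finset.univ.erase (0 : Fin K), q (x, z k)) *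
        log ((1 / (K : ℝ)) * ∑ k, p (x, z k) / q (x, z k))
      + (p (x, z 0) / c) * (∏ k ∈ Finset.univ.erase (0 : Fin K), q (x, z k)) *
        log (exp (T (x, z 0)) / ((1 / (K : ℝ)) * ∑ k, exp (T (x, z k))))) volume :=
    hiwae.add hgiwae
  have hF0_int : Integrable (FF 0) volume := hA1_int.sub hIG
  have hF0_val : ∫ z, FF 0 z =
      (∫ z, p (x, z) * log (p (x, z) / q (x, z)) ∂μZ) / c
        - iwaeInner μZ p q K x - giwaeInner μZ p q T K x := by
    have h1 : (∫ z : Fin K → Z,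
        ((p (x, z 0) * log (p (x, z 0) / q (x, z 0)) / c) *
          ∏ k ∈ Finset.univ.erase (0 : Fin K), q (x, z k)
        - ((p (x, z 0) / c) * (∏ k ∈ Finset.univ.erase (0 : Fin K), q (x, z k)) *
            log ((1 / (K : ℝ)) * ∑ k, p (x, z k) / q (x, z k))
          + (p (x, z 0) / c) * (∏ k ∈ Finset.univ.erase (0 : Fin K), q (x, z k)) *
            log (exp (T (x, z 0)) / ((1 / (K : ℝ)) * ∑ k, exp (T (x, z k)))))))
        = (∫ z : Fin K → Z,
            (p (x, z 0) * log (p (x, z 0) / q (x, z 0)) / c) *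
              ∏ k ∈ Finset.univ.erase (0 : Fin K), q (x, z k))
          - ∫ z : Fin K → Z,
            ((p (x, z 0) / c) * (∏ k ∈ Finset.univ.erase (0 : Fin K), q (x, z k)) *
              log ((1 / (K : ℝ)) * ∑ k, p (x, z k) / q (x, z k))
            + (p (x, z 0) / c) * (∏ k ∈ Finset.univ.erase (0 : Fin K), q (x, z k)) *
              log (exp (T (x, z 0)) / ((1 / (K : ℝ)) * ∑ k, exp (T (x, z k))))) :=
      integral_sub hA1_int hIG
    have h2 : (∫ z : Fin K → Z,
        ((p (x, z 0) / c) * (∏ k ∈ Finset.univ.erase (0 : Fin K), q (x, z k)) *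
            log ((1 / (K : ℝ)) * ∑ k, p (x, z k) / q (x, z k))
          + (p (x, z 0) / c) * (∏ k ∈ Finset.univ.erase (0 : Fin K), q (x, z k)) *
            log (exp (T (x, z 0)) / ((1 / (K : ℝ)) * ∑ k, exp (T (x, z k))))))
        = (∫ z : Fin K → Z,
            (p (x, z 0) / c) * (∏ k ∈ Finset.univ.erase (0 : Fin K), q (x, z k)) *
              log ((1 / (K : ℝ)) * ∑ k, p (x, z k) / q (x, z k)))
          + ∫ z : Fin K → Z,
            (p (x, z 0) / c) * (∏ k ∈ Finset.univ.erase (0 : Fin K), q (x, z k)) *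
              log (exp (T (x, z 0)) / ((1 / (K : ℝ)) * ∑ k, exp (T (x, z k)))) :=
      integral_add hiwae hgiwae
    simp only [hFF]
    rw [h1, h2, hA1_val, iwaeInner, giwaeInner, hvol]
    ring
  -- permutation invariance
  have hperm : ∀ s : Fin K, Integrable (FF s) volume ∧ (∫ z, FF s z) = ∫ z, FF 0 z := by
    intro s
    set σ : Equiv.Perm (Fin K) := Equiv.swap 0 s with hσ
    have hmp := MeasureTheory.volume_measurePreserving_piCongrLeft (fun _ : Fin K => Z) σ
    set e := MeasurableEquiv.piCongrLeft (fun _ : Fin K => Z) σ with he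
    have hσ0 : σ 0 = s := by simp [hσ]
    have hσs : σ s = 0 := by simp [hσ]
    have happ : ∀ (z : Fin K → Z) (i : Fin K), e z i = z (σ i) := by
      intro z i
      conv_lhs => rw [show i = σ (σ i) by simp [hσ, Equiv.swap_apply_self]]
      exact MeasurableEquiv.piCongrLeft_apply_apply (β := fun _ : Fin K => Z) σ z (σ i)
    have hcomp : ∀ z : Fin K → Z, FF 0 (e z) = FF s z := by
      intro z
      have h0 : e z 0 = z s := by rw [happ, hσ0]
      have hprod : (∏ k ∈ Finset.univ.erase (0 : Fin K), q (x, e z k)) =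
          ∏ k ∈ Finset.univ.erase s, q (x, z k) := by
        refine Finset.prod_bij' (fun k _ => σ k) (fun k _ => σ k) ?_ ?_ ?_ ?_ ?_
        · intro a ha
          simp only [Finset.mem_erase, Finset.mem_univ, and_true] at ha ⊢
          exact fun hcon => ha (σ.injective (hcon.trans hσ0.symm))
        · intro a ha
          simp only [Finset.mem_erase, Finset.mem_univ, and_true] at ha ⊢
          exact fun hcon => ha (σ.injective (hcon.trans hσs.symm))
        · intro a _; simp [hσ, Equiv.swap_apply_self]
        · intro a _; simp [hσ, Equiv.swap_apply_self]
        · intro a _; rw [happ]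
      have hsum1 : (∑ k, p (x, e z k) / q (x, e z k)) = ∑ k, p (x, z k) / q (x, z k) := by
        simp_rw [happ]
        exact Equiv.sum_comp σ fun k => p (x, z k) / q (x, z k)
      have hsum2 : (∑ k, exp (T (x, e z k))) = ∑ k, exp (T (x, z k)) := by
        simp_rw [happ]
        exact Equiv.sum_comp σ fun k => exp (T (x, z k))
      simp only [hFF, h0, hprod, hsum1, hsum2]
    constructor
    · have : Integrable (FF 0 ∘ e) volume :=
        (hmp.integrable_comp_emb e.measurableEmbedding).mpr hF0_int
      exact this.congr (Filter.Eventually.of_forall fun z => hcomp z)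
    · rw [show (fun z => FF s z) = fun z => FF 0 (e z) from funext fun z => (hcomp z).symm]
      exact hmp.integral_comp' (FF 0)
  -- pointwise identity with the kl integrand
  have hae : ∀ᵐ z ∂(volume : Measure (Fin K → Z)), ∀ k, 0 < p (x, z k) ∧ 0 < q (x, z k) := by
    have := ae_pi_of_ae (K := K) (hfpos.and hgpos)
    exact this
  have hptwise : ∀ z : Fin K → Z, (∀ k, 0 < p (x, z k) ∧ 0 < q (x, z k)) →
      ptgtx μZ p q x z * ∑ s, wp p q x z s * log (wp p q x z s / wT T x z s)
        = (1 / (K : ℝ)) * ∑ s, FF s z := by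
    intro z hz
    have hfz : ∀ k, 0 < p (x, z k) := fun k => (hz k).1
    have hgz : ∀ k, 0 < q (x, z k) := fun k => (hz k).2
    have hS : 0 < ∑ k, p (x, z k) / q (x, z k) :=
      Finset.sum_pos (fun k _ => div_pos (hfz k) (hgz k)) ⟨0, Finset.mem_univ 0⟩
    have hE : 0 < ∑ k, exp (T (x, z k)) :=
      Finset.sum_pos (fun k _ => exp_pos _) ⟨0, Finset.mem_univ 0⟩
    have hptgt : ptgtx μZ p q x z =
        (1 / ((K : ℝ) * c)) * (∏ k, q (x, z k)) * (∑ k, p (x, z k) / q (x, z k)) := by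
      rw [ptgtx, Finset.mul_sum, Finset.mul_sum]
      refine Finset.sum_congr rfl fun s _ => ?_
      rw [← Finset.mul_prod_erase Finset.univ (fun k => q (x, z k)) (Finset.mem_univ s)]
      field_simp [hcne, (hgz s).ne', hKpos.ne', ← hcdef]
      ring
    conv_lhs => rw [hptgt, Finset.mul_sum]
    conv_rhs => rw [Finset.mul_sum]
    refine Finset.sum_congr rfl fun s _ => ?_
    have hwp : wp p q x z s = (p (x, z s) / q (x, z s)) / ∑ k, p (x, z k) / q (x, z k) := rfl
    have hwT : wT T x z s = exp (T (x, z s)) / ∑ k, exp (T (x, z k)) := rfl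
    have hlog : log (wp p q x z s / wT T x z s)
        = log (p (x, z s) / q (x, z s))
          - log ((1 / (K : ℝ)) * ∑ k, p (x, z k) / q (x, z k))
          - log (exp (T (x, z s)) / ((1 / (K : ℝ)) * ∑ k, exp (T (x, z k)))) := by
      have hr : (0:ℝ) < p (x, z s) / q (x, z s) := div_pos (hfz s) (hgz s)
      have ht : (0:ℝ) < exp (T (x, z s)) := exp_pos _
      have hK' : (0:ℝ) < 1 / (K:ℝ) := by positivity
      rw [hwp, hwT, Real.log_div (div_pos hr hS).ne' (div_pos ht hE).ne',
        Real.log_div hr.ne' hS.ne', Real.log_div ht.ne' hE.ne',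
        Real.log_mul hK'.ne' hS.ne',
        Real.log_div ht.ne' (mul_pos hK' hE).ne', Real.log_mul hK'.ne' hE.ne']
      ring
    rw [hlog, hwp]
    simp only [hFF]
    rw [← Finset.mul_prod_erase Finset.univ (fun k => q (x, z k)) (Finset.mem_univ s)]
    field_simp [hcne, (hgz s).ne', hKpos.ne', hS.ne']
    ring
  -- conclude
  have hkl : klInner μZ p q T K x =
      (∫ z, p (x, z) * log (p (x, z) / q (x, z)) ∂μZ) / c
        - iwaeInner μZ p q K x - giwaeInner μZ p q T K x := by
    rw [klInner, hvol]
    rw [integral_congr_ae (hae.mono fun z hz => hptwise z hz)]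
    rw [integral_const_mul, integral_finset_sum _ (fun s _ => (hperm s).1)]
    have : ∀ s ∈ Finset.univ, (∫ z, FF s z) = ∫ z, FF 0 z := fun s _ => (hperm s).2
    rw [Finset.sum_congr rfl this, Finset.sum_const, Finset.card_univ, Fintype.card_fin,
      nsmul_eq_mul, ← mul_assoc]
    rw [one_div, inv_mul_cancel₀ (by exact_mod_cast hKpos.ne')]
    rw [one_mul, hF0_val]
  rw [hkl]
  field_simp

/-- Improvement of IWAE over GIWAE mutual-information lower bounds. -/
theorem iwae_vs_giwae_mi
    (μX : Measure X) (μZ : Measure Z) [SigmaFinite μX] [SigmaFinite μZ]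
    (p q T : X × Z → ℝ)
    (hp_meas : Measurable p)
    (hp_pos : ∀ᵐ w ∂(μX.prod μZ), 0 < p w)
    (hp_int : Integrable p (μX.prod μZ))
    (hp_norm : ∫ w, p w ∂(μX.prod μZ) = 1)
    (hq_meas : Measurable q)
    (hq_pos : ∀ᵐ w ∂(μX.prod μZ), 0 < q w)
    (hq_norm : ∀ x, ∫ z, q (x, z) ∂μZ = 1)
    (hT_meas : Measurable T)
    (K : ℕ) [NeZero K]
    (h_int_ba : Integrable (fun w => p w * log (q w / pZ μX p w.2)) (μX.prod μZ))
    (h_int_h : Integrable (fun w => p w * log (p w / pZ μX p w.2)) (μX.prod μZ))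
    (h_int_iwae_inner : ∀ x, Integrable
      (fun z : Fin K → Z =>
        (p (x, z 0) / pX μZ p x) * (∏ k ∈ Finset.univ.erase (0 : Fin K), q (x, z k)) *
          log ((1 / (K : ℝ)) * ∑ k, p (x, z k) / q (x, z k)))
      (Measure.pi fun _ : Fin K => μZ))
    (h_int_iwae_outer : Integrable (fun x => pX μZ p x * iwaeInner μZ p q K x) μX)
    (h_int_giwae_inner : ∀ x, Integrable
      (fun z : Fin K → Z =>
        (p (x, z 0) / pX μZ p x) * (∏ k ∈ Finset.univ.erase (0 : Fin K), q (x, z k)) *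
          log (exp (T (x, z 0)) / ((1 / (K : ℝ)) * ∑ k, exp (T (x, z k)))))
      (Measure.pi fun _ : Fin K => μZ))
    (h_int_giwae_outer : Integrable (fun x => pX μZ p x * giwaeInner μZ p q T K x) μX)
    (h_int_kl_inner : ∀ x, Integrable
      (fun z : Fin K → Z =>
        ptgtx μZ p q x z * ∑ s, wp p q x z s * log (wp p q x z s / wT T x z s))
      (Measure.pi fun _ : Fin K => μZ))
    (h_int_kl_outer : Integrable (fun x => pX μZ p x * klInner μZ p q T K x) μX) :
    IIWAEL μX μZ p q K
      = IGIWAEL μX μZ p q T K + ∫ x, pX μZ p x * klInner μZ p q T K x ∂μX ∧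
    IGIWAEL μX μZ p q T K ≤ IIWAEL μX μZ p q K := by
  have hprodne : μX.prod μZ ≠ 0 := by
    intro h; rw [h] at hp_norm; simp at hp_norm
  have hμX : μX ≠ 0 := by
    intro h; exact hprodne (by rw [h, Measure.zero_prod])
  have hμZ : μZ ≠ 0 := by
    intro h; exact hprodne (by rw [h, Measure.prod_zero])
  have hswap_pos : ∀ᵐ z ∂μZ, ∀ᵐ x' ∂μX, 0 < p (x', z) := by
    have h1 : ∀ᵐ w : Z × X ∂(μZ.prod μX), 0 < p (Prod.swap w) :=
      Measure.measurePreserving_swap.quasiMeasurePreserving.ae hp_pos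
    exact Measure.ae_ae_of_ae_prod h1
  have hswap_int : ∀ᵐ z ∂μZ, Integrable (fun x' => p (x', z)) μX :=
    hp_int.swap.prod_right_ae
  have hpZ_posZ : ∀ᵐ z ∂μZ, 0 < pZ μX p z := by
    filter_upwards [hswap_pos, hswap_int] with z h1 h2
    exact integral_pos_of_ae_pos hμX h2 h1
  have hpZ_pos : ∀ᵐ w ∂(μX.prod μZ), 0 < pZ μX p w.2 :=
    Measure.quasiMeasurePreserving_snd.ae hpZ_posZ
  have hplq_ae : (fun w => p w * log (p w / pZ μX p w.2) - p w * log (q w / pZ μX p w.2))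
      =ᵐ[μX.prod μZ] fun w => p w * log (p w / q w) := by
    filter_upwards [hp_pos, hq_pos, hpZ_pos] with w h1 h2 h3
    rw [Real.log_div h1.ne' h3.ne', Real.log_div h2.ne' h3.ne', Real.log_div h1.ne' h2.ne']
    ring
  have hplq_int : Integrable (fun w => p w * log (p w / q w)) (μX.prod μZ) :=
    (h_int_h.sub h_int_ba).congr hplq_ae
  have hplq_val : HXZ μX μZ p - IBAL μX μZ p q
      = ∫ w, p w * log (p w / q w) ∂(μX.prod μZ) := by
    rw [← integral_congr_ae hplq_ae, integral_sub h_int_h h_int_ba]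
    rfl
  have hfub : (∫ w, p w * log (p w / q w) ∂(μX.prod μZ))
      = ∫ x, ∫ z, p (x, z) * log (p (x, z) / q (x, z)) ∂μZ ∂μX :=
    integral_prod _ hplq_int
  have houter_int : Integrable (fun x => ∫ z, p (x, z) * log (p (x, z) / q (x, z)) ∂μZ) μX :=
    hplq_int.integral_prod_left
  have hinner_int : ∀ᵐ x ∂μX,
      Integrable (fun z => p (x, z) * log (p (x, z) / q (x, z))) μZ :=
    hplq_int.prod_right_ae
  have hpprod_pos := Measure.ae_ae_of_ae_prod hp_pos
  have hqprod_pos := Measure.ae_ae_of_ae_prod hq_pos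
  have hp_int_x := hp_int.prod_right_ae
  have hpX_pos : ∀ᵐ x ∂μX, 0 < pX μZ p x := by
    filter_upwards [hpprod_pos, hp_int_x] with x h1 h2
    exact integral_pos_of_ae_pos hμZ h2 h1
  have hq_intx : ∀ x, Integrable (fun z => q (x, z)) μZ := by
    intro x
    by_contra hcon
    have h := hq_norm x
    rw [integral_undef hcon] at h
    exact one_ne_zero h.symm
  have hmain : ∀ᵐ x ∂μX,
      pX μZ p x * klInner μZ p q T K x
        = (∫ z, p (x, z) * log (p (x, z) / q (x, z)) ∂μZ)
          - pX μZ p x * iwaeInner μZ p q K x - pX μZ p x * giwaeInner μZ p q T K x := by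
    filter_upwards [hpprod_pos, hqprod_pos, hpX_pos, hinner_int] with x h1 h2 h3 h4
    exact inner_identity μZ p q T K x h1 h2 h3 (hq_intx x) (hq_norm x) h4
      (h_int_iwae_inner x) (h_int_giwae_inner x)
  have e1 : (∫ x, ((∫ z, p (x, z) * log (p (x, z) / q (x, z)) ∂μZ)
        - pX μZ p x * iwaeInner μZ p q K x - pX μZ p x * giwaeInner μZ p q T K x) ∂μX)
      = ((∫ x, (∫ z, p (x, z) * log (p (x, z) / q (x, z)) ∂μZ) ∂μX)
          - ∫ x, pX μZ p x * iwaeInner μZ p q K x ∂μX)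
        - ∫ x, pX μZ p x * giwaeInner μZ p q T K x ∂μX := by
    have h2 : (∫ x, ((∫ z, p (x, z) * log (p (x, z) / q (x, z)) ∂μZ)
          - pX μZ p x * iwaeInner μZ p q K x - pX μZ p x * giwaeInner μZ p q T K x) ∂μX)
        = (∫ x, ((∫ z, p (x, z) * log (p (x, z) / q (x, z)) ∂μZ)
            - pX μZ p x * iwaeInner μZ p q K x) ∂μX)
          - ∫ x, pX μZ p x * giwaeInner μZ p q T K x ∂μX :=
      integral_sub (houter_int.sub h_int_iwae_outer) h_int_giwae_outer
    have h3 : (∫ x, ((∫ z, p (x, z) * log (p (x, z) / q (x, z)) ∂μZ)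
          - pX μZ p x * iwaeInner μZ p q K x) ∂μX)
        = (∫ x, (∫ z, p (x, z) * log (p (x, z) / q (x, z)) ∂μZ) ∂μX)
          - ∫ x, pX μZ p x * iwaeInner μZ p q K x ∂μX :=
      integral_sub houter_int h_int_iwae_outer
    rw [h2, h3]
  have hKL : (∫ x, pX μZ p x * klInner μZ p q T K x ∂μX)
      = (HXZ μX μZ p - IBAL μX μZ p q)
        - (∫ x, pX μZ p x * iwaeInner μZ p q K x ∂μX)
        - ∫ x, pX μZ p x * giwaeInner μZ p q T K x ∂μX := by
    rw [integral_congr_ae hmain, e1, ← hfub, ← hplq_val]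
  have hKL_nonneg : 0 ≤ ∫ x, pX μZ p x * klInner μZ p q T K x ∂μX := by
    apply integral_nonneg_of_ae
    filter_upwards [hpX_pos, hpprod_pos, hqprod_pos] with x h3 h1 h2
    have hkl0 : 0 ≤ klInner μZ p q T K x := by
      unfold klInner
      apply integral_nonneg_of_ae
      filter_upwards [ae_pi_of_ae (K := K) (h1.and h2)] with z hz
      have hfz : ∀ k, 0 < p (x, z k) := fun k => (hz k).1
      have hgz : ∀ k, 0 < q (x, z k) := fun k => (hz k).2
      have hS : 0 < ∑ k, p (x, z k) / q (x, z k) :=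
        Finset.sum_pos (fun k _ => div_pos (hfz k) (hgz k)) ⟨0, Finset.mem_univ 0⟩
      have hE : 0 < ∑ k, exp (T (x, z k)) :=
        Finset.sum_pos (fun k _ => exp_pos _) ⟨0, Finset.mem_univ 0⟩
      have hpt : 0 ≤ ptgtx μZ p q x z := by
        apply mul_nonneg (by positivity)
        refine Finset.sum_nonneg fun s _ => ?_
        exact mul_nonneg (div_nonneg (hfz s).le h3.le)
          (Finset.prod_nonneg fun k _ => (hgz k).le)
      refine mul_nonneg hpt ?_
      refine gibbs (wp p q x z) (wT T x z)
        (fun s => div_pos (div_pos (hfz s) (hgz s)) hS)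
        (fun s => div_pos (exp_pos _) hE) ?_ ?_
      · simp only [wp]
        rw [← Finset.sum_div, div_self hS.ne']
      · simp only [wT]
        rw [← Finset.sum_div, div_self hE.ne']
    exact mul_nonneg h3.le hkl0
  have heq : IIWAEL μX μZ p q K
      = IGIWAEL μX μZ p q T K + ∫ x, pX μZ p x * klInner μZ p q T K x ∂μX := by
    rw [IIWAEL, IGIWAEL, hKL]
    ring
  refine ⟨heq, ?_⟩
  rw [heq]
  linarith


end Stmt4
end
end

section
/- (The optimal GIWAE critic yields IWAE.) Let c : X → ℝ be measurable and suppose the critic has the form T(x,z) = log(p(x,z)/q(z|x)) + c(x). Then for every integer K ≥ 1 the critic's softmax weights equal the true self-normalized importance weights, e^{T(x,z_s)}/Σ_{k=1}^K e^{T(x,z_k)} = (p(x,z_s)/q(z_s|x))/Σ_{k=1}^K (p(x,z_k)/q(z_k|x)) for all x, z₁,…,z_K, and consequently I_GIWAE_L(q,T,K) = I_IWAE_L(q,K). -/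
open MeasureTheory Real

noncomputable section

namespace Stmt5

variable {X Z : Type*} [MeasurableSpace X] [MeasurableSpace Z]

/-- Marginal density `p_X(x) = ∫ p(x,z) dμ_Z(z)`. -/
def pX (μZ : Measure Z) (p : X × Z → ℝ) (x : X) : ℝ := ∫ z, p (x, z) ∂μZ

/-- Marginal density `p_Z(z) = ∫ p(x,z) dμ_X(x)`. -/
def pZ (μX : Measure X) (p : X × Z → ℝ) (z : Z) : ℝ := ∫ x, p (x, z) ∂μX

/-- Barber–Agakov lower bound `I_BA_L(q) = ∫∫ p(x,z) log(q(z|x)/p_Z(z))`. -/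
def IBAL (μX : Measure X) (μZ : Measure Z) (p q : X × Z → ℝ) : ℝ :=
  ∫ w, p w * log (q w / pZ μX p w.2) ∂(μX.prod μZ)

/-- `∫∫ p(x,z) log p(x|z)` with `p(x|z) = p(x,z)/p_Z(z)`. -/
def HXZ (μX : Measure X) (μZ : Measure Z) (p : X × Z → ℝ) : ℝ :=
  ∫ w, p w * log (p w / pZ μX p w.2) ∂(μX.prod μZ)

/-- Inner `Z^K`-integral of the IWAE lower bound on mutual information. -/
def iwaeInner (μZ : Measure Z) (p q : X × Z → ℝ) (K : ℕ) [NeZero K] (x : X) : ℝ :=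
  ∫ z : Fin K → Z,
    (p (x, z 0) / pX μZ p x) * (∏ k ∈ Finset.univ.erase (0 : Fin K), q (x, z k)) *
      log ((1 / (K : ℝ)) * ∑ k, p (x, z k) / q (x, z k))
    ∂(Measure.pi fun _ : Fin K => μZ)

/-- IWAE lower bound on mutual information. -/
def IIWAEL (μX : Measure X) (μZ : Measure Z) (p q : X × Z → ℝ) (K : ℕ) [NeZero K] : ℝ :=
  HXZ μX μZ p - ∫ x, pX μZ p x * iwaeInner μZ p q K x ∂μX

/-- Inner `Z^K`-integral of the GIWAE contrastive term. -/
def giwaeInner (μZ : Measure Z) (p q T : X × Z → ℝ) (K : ℕ) [NeZero K] (x : X) : ℝ :=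
  ∫ z : Fin K → Z,
    (p (x, z 0) / pX μZ p x) * (∏ k ∈ Finset.univ.erase (0 : Fin K), q (x, z k)) *
      log (exp (T (x, z 0)) / ((1 / (K : ℝ)) * ∑ k, exp (T (x, z k))))
    ∂(Measure.pi fun _ : Fin K => μZ)

/-- GIWAE lower bound on mutual information. -/
def IGIWAEL (μX : Measure X) (μZ : Measure Z) (p q T : X × Z → ℝ) (K : ℕ) [NeZero K] : ℝ :=
  IBAL μX μZ p q + ∫ x, pX μZ p x * giwaeInner μZ p q T K x ∂μX

/-- The optimal GIWAE critic `T(x,z) = log(p(x,z)/q(z|x)) + c(x)` yields IWAE. -/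
theorem optimal_giwae_critic
    (μX : Measure X) (μZ : Measure Z) [SigmaFinite μX] [SigmaFinite μZ]
    (p q T : X × Z → ℝ)
    (hp_meas : Measurable p)
    (hp_pos : ∀ w, 0 < p w)
    (hp_int : Integrable p (μX.prod μZ))
    (hp_norm : ∫ w, p w ∂(μX.prod μZ) = 1)
    (hq_meas : Measurable q)
    (hq_pos : ∀ w, 0 < q w)
    (hq_norm : ∀ x, ∫ z, q (x, z) ∂μZ = 1)
    (c : X → ℝ) (hc_meas : Measurable c)
    (hT : ∀ x z, T (x, z) = log (p (x, z) / q (x, z)) + c x)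
    (K : ℕ) [NeZero K]
    (h_int_ba : Integrable (fun w => p w * log (q w / pZ μX p w.2)) (μX.prod μZ))
    (h_int_h : Integrable (fun w => p w * log (p w / pZ μX p w.2)) (μX.prod μZ))
    (h_int_iwae_inner : ∀ x, Integrable
      (fun z : Fin K → Z =>
        (p (x, z 0) / pX μZ p x) * (∏ k ∈ Finset.univ.erase (0 : Fin K), q (x, z k)) *
          log ((1 / (K : ℝ)) * ∑ k, p (x, z k) / q (x, z k)))
      (Measure.pi fun _ : Fin K => μZ))
    (h_int_iwae_outer : Integrable (fun x => pX μZ p x * iwaeInner μZ p q K x) μX)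
    (h_int_giwae_inner : ∀ x, Integrable
      (fun z : Fin K → Z =>
        (p (x, z 0) / pX μZ p x) * (∏ k ∈ Finset.univ.erase (0 : Fin K), q (x, z k)) *
          log (exp (T (x, z 0)) / ((1 / (K : ℝ)) * ∑ k, exp (T (x, z k)))))
      (Measure.pi fun _ : Fin K => μZ))
    (h_int_giwae_outer : Integrable (fun x => pX μZ p x * giwaeInner μZ p q T K x) μX) :
    (∀ (x : X) (z : Fin K → Z) (s : Fin K),
      exp (T (x, z s)) / (∑ k, exp (T (x, z k)))
        = (p (x, z s) / q (x, z s)) / ∑ k, p (x, z k) / q (x, z k)) ∧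
    IGIWAEL μX μZ p q T K = IIWAEL μX μZ p q K := by

  have hkey : ∀ w : X × Z, exp (T w) = (p w / q w) * exp (c w.1) := by
    rintro ⟨x, z⟩
    rw [hT, exp_add, exp_log (div_pos (hp_pos _) (hq_pos _))]
  constructor
  · intro x z s
    simp only [hkey]
    rw [← Finset.sum_mul]
    exact mul_div_mul_right _ _ (exp_ne_zero (c x))
  · -- degenerate cases
    by_cases hμX : μX = 0
    · subst hμX
      simp [IGIWAEL, IIWAEL, IBAL, HXZ, Measure.zero_prod, integral_zero_measure]
    by_cases hμZ : μZ = 0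
    · subst hμZ
      have hpX0 : ∀ x : X, pX (0 : Measure Z) p x = 0 := fun x => integral_zero_measure _
      simp [IGIWAEL, IIWAEL, IBAL, HXZ, Measure.prod_zero, integral_zero_measure, hpX0]
    -- main case
    have hKpos : (0 : ℝ) < 1 / (K : ℝ) := by
      have : (0 : ℝ) < (K : ℝ) := by
        exact_mod_cast Nat.pos_of_ne_zero (NeZero.ne K)
      positivity
    -- pointwise log identity
    have hlog : ∀ (x : X) (z : Fin K → Z),
        log (exp (T (x, z 0)) / ((1 / (K : ℝ)) * ∑ k, exp (T (x, z k))))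
          = log (p (x, z 0) / q (x, z 0))
            - log ((1 / (K : ℝ)) * ∑ k, p (x, z k) / q (x, z k)) := by
      intro x z
      have hS : 0 < ∑ k, p (x, z k) / q (x, z k) :=
        Finset.sum_pos (fun k _ => div_pos (hp_pos _) (hq_pos _)) Finset.univ_nonempty
      have hfrac : exp (T (x, z 0)) / ((1 / (K : ℝ)) * ∑ k, exp (T (x, z k)))
          = (p (x, z 0) / q (x, z 0)) / ((1 / (K : ℝ)) * ∑ k, p (x, z k) / q (x, z k)) := by
        simp only [hkey]
        rw [← Finset.sum_mul,
          show (1 / (K : ℝ)) * ((∑ k, p (x, z k) / q (x, z k)) * exp (c x))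
              = ((1 / (K : ℝ)) * ∑ k, p (x, z k) / q (x, z k)) * exp (c x) from by ring]
        exact mul_div_mul_right _ _ (exp_ne_zero (c x))
      rw [hfrac, log_div (div_pos (hp_pos _) (hq_pos _)).ne' (mul_pos hKpos hS).ne']
    -- a.e. positivity of pX
    have hpXpos : ∀ᵐ x ∂μX, 0 < pX μZ p x := by
      filter_upwards [hp_int.prod_right_ae] with x hx
      have hsupp : Function.support (fun z => p (x, z)) = Set.univ :=
        Set.eq_univ_of_forall fun z => (hp_pos (x, z)).ne'
      have := (integral_pos_iff_support_of_nonneg (fun z => (hp_pos (x, z)).le) hx).2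
      exact this (by rw [hsupp]; exact Measure.measure_univ_pos.2 hμZ)
    -- a.e. positivity of pZ
    have hpZpos : ∀ᵐ z ∂μZ, 0 < pZ μX p z := by
      filter_upwards [hp_int.swap.prod_right_ae] with z hz
      have hsupp : Function.support (fun x => p (x, z)) = Set.univ :=
        Set.eq_univ_of_forall fun x => (hp_pos (x, z)).ne'
      have := (integral_pos_iff_support_of_nonneg (fun x => (hp_pos (x, z)).le) hz).2
      exact this (by rw [hsupp]; exact Measure.measure_univ_pos.2 hμX)
    have hpZprod : ∀ᵐ w ∂(μX.prod μZ), 0 < pZ μX p w.2 :=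
      Measure.quasiMeasurePreserving_snd.tendsto_ae.eventually hpZpos
    -- Step C : HXZ - IBAL
    have hHB : HXZ μX μZ p - IBAL μX μZ p q
        = ∫ w, p w * log (p w / q w) ∂(μX.prod μZ) := by
      rw [HXZ, IBAL, ← integral_sub h_int_h h_int_ba]
      refine integral_congr_ae ?_
      filter_upwards [hpZprod] with w hw
      rw [← mul_sub, log_div (hp_pos w).ne' hw.ne', log_div (hq_pos w).ne' hw.ne',
        log_div (hp_pos w).ne' (hq_pos w).ne']
      ring
    have h_int_pq : Integrable (fun w => p w * log (p w / q w)) (μX.prod μZ) := by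
      refine (h_int_h.sub h_int_ba).congr ?_
      filter_upwards [hpZprod] with w hw
      simp only [Pi.sub_apply]
      rw [← mul_sub, log_div (hp_pos w).ne' hw.ne', log_div (hq_pos w).ne' hw.ne',
        log_div (hp_pos w).ne' (hq_pos w).ne']
      ring
    have hD : ∫ w, p w * log (p w / q w) ∂(μX.prod μZ)
        = ∫ x, ∫ z, p (x, z) * log (p (x, z) / q (x, z)) ∂μZ ∂μX :=
      integral_prod _ h_int_pq
    -- the "F" integral
    set J : X → ℝ := fun x =>
      ∫ z : Fin K → Z,
        (p (x, z 0) / pX μZ p x) * (∏ k ∈ Finset.univ.erase (0 : Fin K), q (x, z k)) *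
          log (p (x, z 0) / q (x, z 0)) ∂(Measure.pi fun _ : Fin K => μZ) with hJdef
    have hFint : ∀ x, Integrable
        (fun z : Fin K → Z =>
          (p (x, z 0) / pX μZ p x) * (∏ k ∈ Finset.univ.erase (0 : Fin K), q (x, z k)) *
            log (p (x, z 0) / q (x, z 0)))
        (Measure.pi fun _ : Fin K => μZ) := by
      intro x
      refine ((h_int_giwae_inner x).add (h_int_iwae_inner x)).congr
        (Filter.Eventually.of_forall fun z => ?_)
      simp only [Pi.add_apply]
      rw [hlog x z]; ring
    have hGsplit : ∀ x, giwaeInner μZ p q T K x = J x - iwaeInner μZ p q K x := by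
      intro x
      rw [giwaeInner, iwaeInner, hJdef, ← integral_sub (hFint x) (h_int_iwae_inner x)]
      refine integral_congr_ae (Filter.Eventually.of_forall fun z => ?_)
      dsimp only
      rw [hlog x z]; ring
    have hJint : Integrable (fun x => pX μZ p x * J x) μX := by
      refine (h_int_giwae_outer.add h_int_iwae_outer).congr
        (Filter.Eventually.of_forall fun x => ?_)
      simp only [Pi.add_apply]
      rw [hGsplit x]; ring
    have hOuter : ∫ x, pX μZ p x * giwaeInner μZ p q T K x ∂μX
        = (∫ x, pX μZ p x * J x ∂μX) - ∫ x, pX μZ p x * iwaeInner μZ p q K x ∂μX := by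
      rw [← integral_sub hJint h_int_iwae_outer]
      refine integral_congr_ae (Filter.Eventually.of_forall fun x => ?_)
      dsimp only
      rw [hGsplit x]; ring
    -- Step E : compute pX x * J x a.e.
    have hJ : ∀ᵐ x ∂μX, pX μZ p x * J x
        = ∫ z, p (x, z) * log (p (x, z) / q (x, z)) ∂μZ := by
      filter_upwards [hpXpos] with x hx
      classical
      set G : Fin K → Z → ℝ := fun i t =>
        if i = 0 then (p (x, t) / pX μZ p x) * log (p (x, t) / q (x, t)) else q (x, t) with hGdef
      have h1 : J x = ∫ z : Fin K → Z, ∏ i, G i (z i) ∂(Measure.pi fun _ : Fin K => μZ) := by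
        rw [hJdef]
        refine integral_congr_ae (Filter.Eventually.of_forall fun z => ?_)
        dsimp only
        rw [← Finset.mul_prod_erase Finset.univ (fun i => G i (z i)) (Finset.mem_univ 0),
          Finset.prod_congr rfl (fun i hi => show G i (z i) = q (x, z i) by
            simp only [hGdef, if_neg (Finset.ne_of_mem_erase hi)])]
        simp only [hGdef, if_pos rfl]
        ring
      have h2 : ∫ z : Fin K → Z, ∏ i, G i (z i) ∂(Measure.pi fun _ : Fin K => μZ)
          = ∏ i, ∫ t, G i t ∂μZ := by
        letI mZ : MeasureSpace Z := ⟨μZ⟩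
        letI : SigmaFinite (volume : Measure Z) := ‹SigmaFinite μZ›
        have h := MeasureTheory.integral_fintype_prod_eq_prod (𝕜 := ℝ) (ι := Fin K) (E := fun _ : Fin K => Z) G (μ := fun _ => μZ)
        exact h
      have h3 : ∏ i, ∫ t, G i t ∂μZ
          = (∫ t, (p (x, t) / pX μZ p x) * log (p (x, t) / q (x, t)) ∂μZ) := by
        rw [← Finset.mul_prod_erase Finset.univ (fun i => ∫ t, G i t ∂μZ) (Finset.mem_univ 0)]
        have : ∏ i ∈ Finset.univ.erase (0 : Fin K), ∫ t, G i t ∂μZ = 1 := by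
          refine Finset.prod_eq_one fun i hi => ?_
          simp only [hGdef, if_neg (Finset.ne_of_mem_erase hi)]
          exact hq_norm x
        simp only [hGdef, if_pos rfl] at *
        rw [this, mul_one]
      have h4 : ∫ t, (p (x, t) / pX μZ p x) * log (p (x, t) / q (x, t)) ∂μZ
          = (pX μZ p x)⁻¹ * ∫ t, p (x, t) * log (p (x, t) / q (x, t)) ∂μZ := by
        rw [← integral_const_mul]
        refine integral_congr_ae (Filter.Eventually.of_forall fun t => ?_)
        dsimp only
        ring
      rw [h1, h2, h3, h4, ← mul_assoc, mul_inv_cancel₀ hx.ne', one_mul]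
    have hE : ∫ x, pX μZ p x * J x ∂μX = HXZ μX μZ p - IBAL μX μZ p q := by
      rw [hHB, hD]
      exact integral_congr_ae hJ
    rw [IGIWAEL, IIWAEL, hOuter, hE]
    ring

end Stmt5
end
end

section
/- (Logarithmic improvement of GIWAE over the Barber–Agakov bound.) For every integer K ≥ 1: (i) for every measurable critic T : X × Z → ℝ, I_GIWAE_L(q,T,K) ≤ I_IWAE_L(q,K) ≤ I_BA_L(q) + log K; (ii) if T is constant, i.e. T(x,z) = c for all (x,z) and some c ∈ ℝ, then I_GIWAE_L(q,T,K) = I_BA_L(q). Consequently, the supremum of I_GIWAE_L(q,T,K) over any family of measurable critics containing a constant critic lies in the interval [I_BA_L(q), I_BA_L(q) + log K]. -/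
open MeasureTheory Real

noncomputable section

namespace Stmt6

variable {X Z : Type*} [MeasurableSpace X] [MeasurableSpace Z]

/-- Marginal density `p_X(x) = ∫ p(x,z) dμ_Z(z)`. -/
def pX (μZ : Measure Z) (p : X × Z → ℝ) (x : X) : ℝ := ∫ z, p (x, z) ∂μZ

/-- Marginal density `p_Z(z) = ∫ p(x,z) dμ_X(x)`. -/
def pZ (μX : Measure X) (p : X × Z → ℝ) (z : Z) : ℝ := ∫ x, p (x, z) ∂μX

/-- Barber–Agakov lower bound `I_BA_L(q) = ∫∫ p(x,z) log(q(z|x)/p_Z(z))`. -/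
def IBAL (μX : Measure X) (μZ : Measure Z) (p q : X × Z → ℝ) : ℝ :=
  ∫ w, p w * log (q w / pZ μX p w.2) ∂(μX.prod μZ)

/-- `∫∫ p(x,z) log p(x|z)` with `p(x|z) = p(x,z)/p_Z(z)`. -/
def HXZ (μX : Measure X) (μZ : Measure Z) (p : X × Z → ℝ) : ℝ :=
  ∫ w, p w * log (p w / pZ μX p w.2) ∂(μX.prod μZ)

/-- Inner `Z^K`-integral of the IWAE lower bound on mutual information. -/
def iwaeInner (μZ : Measure Z) (p q : X × Z → ℝ) (K : ℕ) [NeZero K] (x : X) : ℝ :=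
  ∫ z : Fin K → Z,
    (p (x, z 0) / pX μZ p x) * (∏ k ∈ Finset.univ.erase (0 : Fin K), q (x, z k)) *
      log ((1 / (K : ℝ)) * ∑ k, p (x, z k) / q (x, z k))
    ∂(Measure.pi fun _ : Fin K => μZ)

/-- IWAE lower bound on mutual information. -/
def IIWAEL (μX : Measure X) (μZ : Measure Z) (p q : X × Z → ℝ) (K : ℕ) [NeZero K] : ℝ :=
  HXZ μX μZ p - ∫ x, pX μZ p x * iwaeInner μZ p q K x ∂μX

/-- Inner `Z^K`-integral of the GIWAE contrastive term. -/
def giwaeInner (μZ : Measure Z) (p q T : X × Z → ℝ) (K : ℕ) [NeZero K] (x : X) : ℝ :=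
  ∫ z : Fin K → Z,
    (p (x, z 0) / pX μZ p x) * (∏ k ∈ Finset.univ.erase (0 : Fin K), q (x, z k)) *
      log (exp (T (x, z 0)) / ((1 / (K : ℝ)) * ∑ k, exp (T (x, z k))))
    ∂(Measure.pi fun _ : Fin K => μZ)

/-- GIWAE lower bound on mutual information. -/
def IGIWAEL (μX : Measure X) (μZ : Measure Z) (p q T : X × Z → ℝ) (K : ℕ) [NeZero K] : ℝ :=
  IBAL μX μZ p q + ∫ x, pX μZ p x * giwaeInner μZ p q T K x ∂μX

namespace Stmt6Aux

variable {Z : Type*} [MeasurableSpace Z]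

/-- Product-formula integral over `Z^K` for an integrand depending on coordinate 0 times a
product of `g` over the other coordinates, when `∫ g = 1`. -/
theorem pi_integral_eval0 (ν : Measure Z) [SigmaFinite ν] (K : ℕ) [NeZero K]
    (F0 g : Z → ℝ) (hg1 : ∫ z, g z ∂ν = 1) :
    ∫ z : Fin K → Z, F0 (z 0) * ∏ k ∈ Finset.univ.erase (0 : Fin K), g (z k)
      ∂(Measure.pi fun _ : Fin K => ν) = ∫ z, F0 z ∂ν := by
  letI : MeasureSpace Z := ⟨ν⟩
  haveI : SigmaFinite (volume : Measure Z) := ‹SigmaFinite ν›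
  have key : ∫ z : Fin K → Z, ∏ k : Fin K, (fun k => if k = 0 then F0 else g) k (z k)
      = ∏ k : Fin K, ∫ z, (fun k => if k = 0 then F0 else g) k z :=
    integral_fintype_prod_eq_prod (ι := Fin K) _
  have h1 : ∀ z : Fin K → Z, (∏ k : Fin K, (fun k => if k = 0 then F0 else g) k (z k))
      = F0 (z 0) * ∏ k ∈ Finset.univ.erase (0 : Fin K), g (z k) := by
    intro z
    rw [← Finset.mul_prod_erase Finset.univ _ (Finset.mem_univ (0 : Fin K))]
    simp only [if_pos rfl]
    congr 1
    exact Finset.prod_congr rfl fun k hk => by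
      simp [if_neg (Finset.ne_of_mem_erase hk)]
  have h2 : (∏ k : Fin K, ∫ z, (fun k => if k = 0 then F0 else g) k z)
      = ∫ z, F0 z ∂ν := by
    rw [← Finset.mul_prod_erase Finset.univ _ (Finset.mem_univ (0 : Fin K))]
    simp only [if_pos rfl]
    have : ∀ k ∈ Finset.univ.erase (0 : Fin K),
        (∫ z, (if k = 0 then F0 else g) z) = 1 := by
      intro k hk
      rw [if_neg (Finset.ne_of_mem_erase hk)]
      exact hg1
    rw [Finset.prod_congr rfl this]
    simp
    rfl
  have hvol : (Measure.pi fun _ : Fin K => ν) = (volume : Measure (Fin K → Z)) := rfl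
  calc ∫ z : Fin K → Z, F0 (z 0) * ∏ k ∈ Finset.univ.erase (0 : Fin K), g (z k)
      ∂(Measure.pi fun _ : Fin K => ν)
      = ∫ z : Fin K → Z, ∏ k : Fin K, (fun k => if k = 0 then F0 else g) k (z k)
          ∂(Measure.pi fun _ : Fin K => ν) :=
        integral_congr_ae (Filter.Eventually.of_forall fun z => (h1 z).symm)
    _ = ∫ z, F0 z ∂ν := by rw [hvol, key, h2]

theorem pi_integrable_eval0 (ν : Measure Z) [SigmaFinite ν] (K : ℕ) [NeZero K]
    (F0 g : Z → ℝ) (hF0 : Integrable F0 ν) (hg : Integrable g ν) :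
    Integrable (fun z : Fin K → Z =>
      F0 (z 0) * ∏ k ∈ Finset.univ.erase (0 : Fin K), g (z k))
      (Measure.pi fun _ : Fin K => ν) := by
  letI : MeasureSpace Z := ⟨ν⟩
  haveI : SigmaFinite (volume : Measure Z) := ‹SigmaFinite ν›
  have key : Integrable (fun z : Fin K → Z =>
      ∏ k : Fin K, (fun k => if k = 0 then F0 else g) k (z k)) (volume) :=
    Integrable.fintype_prod (fun k => by
      by_cases h : k = 0
      · simp only [h, if_pos]; exact hF0
      · simp only [if_neg h]; exact hg)
  have : (fun z : Fin K → Z => ∏ k : Fin K, (fun k => if k = 0 then F0 else g) k (z k))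
      = fun z => F0 (z 0) * ∏ k ∈ Finset.univ.erase (0 : Fin K), g (z k) := by
    funext z
    rw [← Finset.mul_prod_erase Finset.univ _ (Finset.mem_univ (0 : Fin K))]
    simp only [if_pos rfl]
    congr 1
    exact Finset.prod_congr rfl fun k hk => by
      simp [if_neg (Finset.ne_of_mem_erase hk)]
  rw [this] at key
  exact key


theorem integral_pos_of_ae_pos {α : Type*} [MeasurableSpace α] {μ : Measure α}
    (hμ : μ ≠ 0) {f : α → ℝ} (hf : Integrable f μ) (hpos : ∀ᵐ a ∂μ, 0 < f a) :
    0 < ∫ a, f a ∂μ := by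
  rw [integral_pos_iff_support_of_nonneg_ae (hpos.mono fun a h => h.le) hf]
  by_contra h
  push_neg at h
  have h0 : μ (Function.support f) = 0 := le_antisymm h (zero_le)
  have hN : μ {a | ¬ 0 < f a} = 0 := ae_iff.mp hpos
  have huniv : μ Set.univ ≤ μ (Function.support f) + μ {a | ¬ 0 < f a} := by
    refine le_trans (measure_mono ?_) (measure_union_le _ _)
    intro a _
    by_cases hfa : 0 < f a
    · exact Or.inl (by simp [Function.mem_support, hfa.ne'])
    · exact Or.inr hfa
  rw [h0, hN, add_zero] at huniv
  exact hμ (Measure.measure_univ_eq_zero.mp (le_antisymm huniv (zero_le)))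


/-- Change of variables along a coordinate permutation for `Measure.pi` with identical factors. -/
theorem pi_integral_perm (ν : Measure Z) [SigmaFinite ν] (K : ℕ)
    (e : Equiv.Perm (Fin K)) (F : (Fin K → Z) → ℝ) :
    ∫ z : Fin K → Z, F (fun i => z (e.symm i)) ∂(Measure.pi fun _ : Fin K => ν)
      = ∫ z : Fin K → Z, F z ∂(Measure.pi fun _ : Fin K => ν) := by
  have h := (MeasureTheory.measurePreserving_piCongrLeft
    (fun _ : Fin K => ν) e).integral_comp' (f := MeasurableEquiv.piCongrLeft (fun _ => Z) e) F
  rw [← h]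
  refine integral_congr_ae (Filter.Eventually.of_forall fun z => ?_)
  show F _ = F _
  congr 1
  funext j
  have h2 : (MeasurableEquiv.piCongrLeft (fun _ : Fin K => Z) e) z j = z (e.symm j) := by
    rw [MeasurableEquiv.coe_piCongrLeft]
    conv_lhs => rw [show j = e (e.symm j) from (e.apply_symm_apply j).symm]
    rw [Equiv.piCongrLeft_apply_apply]
  rw [h2]

/-- Lift an a.e. property of `ν` to all coordinates of `Measure.pi`. -/
theorem pi_ae_all (ν : Measure Z) [SigmaFinite ν] (K : ℕ) {P : Z → Prop}
    (h : ∀ᵐ z ∂ν, P z) :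
    ∀ᵐ z : Fin K → Z ∂(Measure.pi fun _ : Fin K => ν), ∀ k, P (z k) := by
  rw [MeasureTheory.ae_all_iff]
  intro k
  exact (MeasureTheory.Measure.tendsto_eval_ae_ae (i := k)).eventually h


theorem pi_integrable_perm (ν : Measure Z) [SigmaFinite ν] (K : ℕ)
    (e : Equiv.Perm (Fin K)) (F : (Fin K → Z) → ℝ)
    (h : Integrable (fun z : Fin K → Z => F (fun i => z (e.symm i)))
      (Measure.pi fun _ : Fin K => ν)) :
    Integrable F (Measure.pi fun _ : Fin K => ν) := by
  have hmp := MeasureTheory.measurePreserving_piCongrLeft (fun _ : Fin K => ν) e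
  have hemb := (MeasurableEquiv.piCongrLeft (fun _ : Fin K => Z) e).measurableEmbedding
  rw [← hmp.integrable_comp_emb hemb]
  refine h.congr (Filter.Eventually.of_forall fun z => ?_)
  show F _ = F _
  congr 1
  funext j
  have h2 : (MeasurableEquiv.piCongrLeft (fun _ : Fin K => Z) e) z j = z (e.symm j) := by
    rw [MeasurableEquiv.coe_piCongrLeft]
    conv_lhs => rw [show j = e (e.symm j) from (e.apply_symm_apply j).symm]
    rw [Equiv.piCongrLeft_apply_apply]
  rw [h2]


theorem perx_iwae (ν : Measure Z) [SigmaFinite ν] (K : ℕ) [NeZero K]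
    (f g : Z → ℝ) (s : ℝ)
    (hf_int : Integrable f ν) (hg_int : Integrable g ν)
    (hf_pos : ∀ᵐ z ∂ν, 0 < f z) (hg_pos : ∀ᵐ z ∂ν, 0 < g z)
    (hg1 : ∫ z, g z ∂ν = 1) (hs : ∫ z, f z ∂ν = s) (hs_pos : 0 < s)
    (hfl_int : Integrable (fun z => f z * log (f z / g z)) ν)
    (hiw : Integrable (fun z : Fin K → Z =>
      (f (z 0) / s) * (∏ k ∈ Finset.univ.erase (0 : Fin K), g (z k)) *
        log ((1 / (K : ℝ)) * ∑ k, f (z k) / g (z k)))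
      (Measure.pi fun _ : Fin K => ν)) :
    ∫ z, f z * log (f z / g z) ∂ν ≤
      s * (∫ z : Fin K → Z,
        (f (z 0) / s) * (∏ k ∈ Finset.univ.erase (0 : Fin K), g (z k)) *
          log ((1 / (K : ℝ)) * ∑ k, f (z k) / g (z k))
        ∂(Measure.pi fun _ : Fin K => ν)) + s * log K := by
  set μK := (Measure.pi fun _ : Fin K => ν) with hμK
  have hK0 : 0 < (K : ℝ) := by
    have := Nat.pos_of_ne_zero (NeZero.ne K); exact_mod_cast this
  -- the weight function G
  set G : (Fin K → Z) → ℝ := fun z =>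
    (f (z 0) / s) * ∏ k ∈ Finset.univ.erase (0 : Fin K), g (z k) with hG
  -- ∫ G = 1
  have hG_int : Integrable G μK := pi_integrable_eval0 ν K _ g (hf_int.div_const s) hg_int
  have hG1 : ∫ z, G z ∂μK = 1 := by
    rw [hμK, hG]
    rw [pi_integral_eval0 ν K (fun z => f z / s) g hg1, integral_div, hs, div_self hs_pos.ne']
  -- ∫ G log r0 = (1/s) ∫ f log (f/g)
  have hA_int : Integrable (fun z : Fin K → Z =>
      G z * log (f (z 0) / g (z 0))) μK := by
    have h1 : Integrable (fun z => (f z / s) * log (f z / g z)) ν :=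
      (hfl_int.div_const s).congr (Filter.Eventually.of_forall fun z => by ring)
    exact (pi_integrable_eval0 ν K _ g h1 hg_int).congr
      (Filter.Eventually.of_forall fun z => by simp only [hG]; ring)
  have hA : ∫ z : Fin K → Z, G z * log (f (z 0) / g (z 0)) ∂μK
      = (1 / s) * ∫ z, f z * log (f z / g z) ∂ν := by
    have h1 : ∫ z : Fin K → Z, G z * log (f (z 0) / g (z 0)) ∂μK
        = ∫ z : Fin K → Z, (fun w => (f w / s) * log (f w / g w)) (z 0) *
            ∏ k ∈ Finset.univ.erase (0 : Fin K), g (z k) ∂μK :=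
      integral_congr_ae (Filter.Eventually.of_forall fun z => by simp only [hG]; ring)
    rw [h1, hμK, pi_integral_eval0 ν K (fun w => (f w / s) * log (f w / g w)) g hg1]
    rw [← integral_const_mul]
    exact integral_congr_ae (Filter.Eventually.of_forall fun z => by ring)
  -- a.e. positivity of all coordinates
  have hae : ∀ᵐ z : Fin K → Z ∂μK, ∀ k, 0 < f (z k) ∧ 0 < g (z k) :=
    pi_ae_all ν K (hf_pos.and hg_pos)
  -- pointwise comparison
  have hmono : (fun z : Fin K → Z => G z * log (f (z 0) / g (z 0))) ≤ᵐ[μK]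
      fun z => G z * log ((1 / (K : ℝ)) * ∑ k, f (z k) / g (z k)) + log K * G z := by
    filter_upwards [hae] with z hz
    have hGpos : 0 < G z := by
      apply mul_pos (div_pos (hz 0).1 hs_pos)
      exact Finset.prod_pos fun k _ => (hz k).2
    have hr : ∀ k : Fin K, 0 < f (z k) / g (z k) := fun k => div_pos (hz k).1 (hz k).2
    have hrs : 0 < ∑ k, f (z k) / g (z k) :=
      Finset.sum_pos (fun k _ => hr k) Finset.univ_nonempty
    have hle : f (z 0) / g (z 0) ≤ ∑ k, f (z k) / g (z k) :=
      Finset.single_le_sum (fun k _ => (hr k).le) (Finset.mem_univ 0)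
    have hlog : log ((1 / (K : ℝ)) * ∑ k, f (z k) / g (z k)) + log K
        = log (∑ k, f (z k) / g (z k)) := by
      rw [Real.log_mul (by positivity) hrs.ne', Real.log_div one_ne_zero hK0.ne',
        Real.log_one]
      ring
    have : G z * log (f (z 0) / g (z 0)) ≤ G z * log (∑ k, f (z k) / g (z k)) :=
      mul_le_mul_of_nonneg_left (Real.log_le_log (hr 0) hle) hGpos.le
    calc G z * log (f (z 0) / g (z 0)) ≤ G z * log (∑ k, f (z k) / g (z k)) := this
      _ = G z * log ((1 / (K : ℝ)) * ∑ k, f (z k) / g (z k)) + log K * G z := by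
          rw [← hlog]; ring
  -- integrate
  have hiw' : Integrable (fun z : Fin K → Z =>
      G z * log ((1 / (K : ℝ)) * ∑ k, f (z k) / g (z k)) + log K * G z) μK :=
    (hiw.congr (Filter.Eventually.of_forall fun z => rfl)).add (hG_int.const_mul _)
  have key := integral_mono_ae hA_int hiw' hmono
  rw [hA, integral_add (hiw.congr (Filter.Eventually.of_forall fun z => rfl))
    (hG_int.const_mul _), integral_const_mul, hG1, mul_one] at key
  have h2 := mul_le_mul_of_nonneg_left key hs_pos.le
  calc ∫ z, f z * log (f z / g z) ∂ν
      = s * ((1 / s) * ∫ z, f z * log (f z / g z) ∂ν) := by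
        field_simp
    _ ≤ s * ((∫ z : Fin K → Z, G z *
          log ((1 / (K : ℝ)) * ∑ k, f (z k) / g (z k)) ∂μK) + log K) := h2
    _ = s * (∫ z : Fin K → Z,
        (f (z 0) / s) * (∏ k ∈ Finset.univ.erase (0 : Fin K), g (z k)) *
          log ((1 / (K : ℝ)) * ∑ k, f (z k) / g (z k)) ∂μK) + s * log K := by
        simp only [hG]; ring


set_option maxHeartbeats 1000000 in
theorem perx_giwae (ν : Measure Z) [SigmaFinite ν] (K : ℕ) [NeZero K]
    (f g t : Z → ℝ) (s : ℝ)
    (hf_meas : Measurable f) (hg_meas : Measurable g) (ht_meas : Measurable t)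
    (hf_int : Integrable f ν) (hg_int : Integrable g ν)
    (hf_pos : ∀ᵐ z ∂ν, 0 < f z) (hg_pos : ∀ᵐ z ∂ν, 0 < g z)
    (hg1 : ∫ z, g z ∂ν = 1) (hs : ∫ z, f z ∂ν = s) (hs_pos : 0 < s)
    (hfl_int : Integrable (fun z => f z * log (f z / g z)) ν)
    (hiw : Integrable (fun z : Fin K → Z =>
      (f (z 0) / s) * (∏ k ∈ Finset.univ.erase (0 : Fin K), g (z k)) *
        log ((1 / (K : ℝ)) * ∑ k, f (z k) / g (z k)))
      (Measure.pi fun _ : Fin K => ν))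
    (hgw : Integrable (fun z : Fin K → Z =>
      (f (z 0) / s) * (∏ k ∈ Finset.univ.erase (0 : Fin K), g (z k)) *
        log (exp (t (z 0)) / ((1 / (K : ℝ)) * ∑ k, exp (t (z k)))))
      (Measure.pi fun _ : Fin K => ν)) :
    s * (∫ z : Fin K → Z,
        (f (z 0) / s) * (∏ k ∈ Finset.univ.erase (0 : Fin K), g (z k)) *
          log (exp (t (z 0)) / ((1 / (K : ℝ)) * ∑ k, exp (t (z k))))
        ∂(Measure.pi fun _ : Fin K => ν)) ≤
      (∫ z, f z * log (f z / g z) ∂ν) -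
      s * (∫ z : Fin K → Z,
        (f (z 0) / s) * (∏ k ∈ Finset.univ.erase (0 : Fin K), g (z k)) *
          log ((1 / (K : ℝ)) * ∑ k, f (z k) / g (z k))
        ∂(Measure.pi fun _ : Fin K => ν)) := by
  set μK := (Measure.pi fun _ : Fin K => ν) with hμK
  have hK0 : 0 < (K : ℝ) := by
    have := Nat.pos_of_ne_zero (NeZero.ne K); exact_mod_cast this
  set G : (Fin K → Z) → ℝ := fun z =>
    (f (z 0) / s) * ∏ k ∈ Finset.univ.erase (0 : Fin K), g (z k) with hG
  have hG_int : Integrable G μK := pi_integrable_eval0 ν K _ g (hf_int.div_const s) hg_int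
  have hG1 : ∫ z, G z ∂μK = 1 := by
    rw [hμK, hG]
    rw [pi_integral_eval0 ν K (fun z => f z / s) g hg1, integral_div, hs, div_self hs_pos.ne']
  have hA_int : Integrable (fun z : Fin K → Z =>
      G z * log (f (z 0) / g (z 0))) μK := by
    have h1 : Integrable (fun z => (f z / s) * log (f z / g z)) ν :=
      (hfl_int.div_const s).congr (Filter.Eventually.of_forall fun z => by ring)
    exact (pi_integrable_eval0 ν K _ g h1 hg_int).congr
      (Filter.Eventually.of_forall fun z => by simp only [hG]; ring)
  have hA : ∫ z : Fin K → Z, G z * log (f (z 0) / g (z 0)) ∂μK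
      = (1 / s) * ∫ z, f z * log (f z / g z) ∂ν := by
    have h1 : ∫ z : Fin K → Z, G z * log (f (z 0) / g (z 0)) ∂μK
        = ∫ z : Fin K → Z, (fun w => (f w / s) * log (f w / g w)) (z 0) *
            ∏ k ∈ Finset.univ.erase (0 : Fin K), g (z k) ∂μK :=
      integral_congr_ae (Filter.Eventually.of_forall fun z => by simp only [hG]; ring)
    rw [h1, hμK, pi_integral_eval0 ν K (fun w => (f w / s) * log (f w / g w)) g hg1]
    rw [← integral_const_mul]
    exact integral_congr_ae (Filter.Eventually.of_forall fun z => by ring)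
  have hae : ∀ᵐ z : Fin K → Z ∂μK, ∀ k, 0 < f (z k) ∧ 0 < g (z k) :=
    pi_ae_all ν K (hf_pos.and hg_pos)
  -- softmax terms
  set sm : Fin K → (Fin K → Z) → ℝ :=
    fun k z => exp (t (z k)) / ∑ j, exp (t (z j)) with hsm
  have hsum_pos : ∀ z : Fin K → Z, 0 < ∑ j, exp (t (z j)) :=
    fun z => Finset.sum_pos (fun j _ => exp_pos _) Finset.univ_nonempty
  have hsm_pos : ∀ k z, 0 < sm k z := fun k z => div_pos (exp_pos _) (hsum_pos z)
  have hsm_le : ∀ k z, sm k z ≤ 1 := fun k z => by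
    rw [hsm, div_le_one (hsum_pos z)]
    exact Finset.single_le_sum (fun j _ => (exp_pos (t (z j))).le) (Finset.mem_univ k)
  have hG_meas : Measurable G := by
    apply ((hf_meas.comp (measurable_pi_apply 0)).div_const s).mul
    exact Finset.measurable_prod _ fun k _ => hg_meas.comp (measurable_pi_apply k)
  have hsm_meas : ∀ k, Measurable (sm k) := fun k => by
    apply (Real.measurable_exp.comp (ht_meas.comp (measurable_pi_apply k))).div
    exact Finset.measurable_sum _ fun j _ =>
      Real.measurable_exp.comp (ht_meas.comp (measurable_pi_apply j))
  have hGsm_int : ∀ k, Integrable (fun z => G z * sm k z) μK := by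
    intro k
    refine hG_int.mono ((hG_meas.mul (hsm_meas k)).aestronglyMeasurable)
      (Filter.Eventually.of_forall fun z => ?_)
    rw [Real.norm_eq_abs, Real.norm_eq_abs, abs_mul]
    calc |G z| * |sm k z| ≤ |G z| * 1 := by
          apply mul_le_mul_of_nonneg_left _ (abs_nonneg _)
          rw [abs_of_pos (hsm_pos k z)]; exact hsm_le k z
      _ = |G z| := mul_one _
  -- the mixture terms
  set Bk : Fin K → (Fin K → Z) → ℝ := fun k z =>
    (f (z k) / s * ∏ j ∈ Finset.univ.erase k, g (z j)) * sm 0 z with hBk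
  have hcomp : ∀ k : Fin K, ∀ᵐ z : Fin K → Z ∂μK,
      Bk k (fun i => z ((Equiv.swap (0 : Fin K) k).symm i)) = G z * sm k z := by
    intro k
    filter_upwards [hae] with z hz
    set e := Equiv.swap (0 : Fin K) k with he
    have hesymm : e.symm = e := Equiv.symm_swap 0 k
    rw [hesymm]
    have hek : e k = 0 := Equiv.swap_apply_right 0 k
    have he0 : e 0 = k := Equiv.swap_apply_left 0 k
    have hprod : ∏ j ∈ Finset.univ.erase k, g (z (e j))
        = ∏ j ∈ Finset.univ.erase (0 : Fin K), g (z j) := by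
      have hfull : ∏ j : Fin K, g (z (e j)) = ∏ j : Fin K, g (z j) :=
        Equiv.prod_comp e fun j => g (z j)
      rw [← Finset.mul_prod_erase Finset.univ (fun j => g (z (e j))) (Finset.mem_univ k),
        ← Finset.mul_prod_erase Finset.univ (fun j => g (z j)) (Finset.mem_univ (0 : Fin K)),
        hek] at hfull
      exact mul_left_cancel₀ (hz 0).2.ne' hfull
    have hsumc : ∑ j, exp (t (z (e j))) = ∑ j, exp (t (z j)) :=
      Equiv.sum_comp e fun j => exp (t (z j))
    show (f (z (e k)) / s * ∏ j ∈ Finset.univ.erase k, g (z (e j))) *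
        (exp (t (z (e 0))) / ∑ j, exp (t (z (e j)))) = G z * sm k z
    rw [hek, he0, hprod, hsumc]
  have hBk_int : ∀ k, Integrable (Bk k) μK := by
    intro k
    refine pi_integrable_perm ν K (Equiv.swap 0 k) (Bk k) ?_
    exact (hGsm_int k).congr ((hcomp k).mono fun z h => h.symm)
  have hBk_eq : ∀ k, ∫ z, Bk k z ∂μK = ∫ z, G z * sm k z ∂μK := by
    intro k
    rw [← pi_integral_perm ν K (Equiv.swap 0 k) (Bk k)]
    exact integral_congr_ae (hcomp k)
  set B : (Fin K → Z) → ℝ := fun z => ∑ k, Bk k z with hB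
  have hB_int : Integrable B μK := integrable_finset_sum _ fun k _ => hBk_int k
  have hB1 : ∫ z, B z ∂μK = 1 := by
    rw [hB]
    rw [integral_finset_sum _ fun k _ => hBk_int k]
    have h1 : ∀ k ∈ Finset.univ, ∫ z, Bk k z ∂μK = ∫ z, G z * sm k z ∂μK :=
      fun k _ => hBk_eq k
    rw [Finset.sum_congr rfl h1, ← integral_finset_sum _ fun k _ => hGsm_int k]
    rw [← hG1]
    refine integral_congr_ae (Filter.Eventually.of_forall fun z => ?_)
    show ∑ k, G z * sm k z = G z
    rw [← Finset.mul_sum]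
    have : ∑ k, sm k z = 1 := by
      simp only [hsm]
      rw [← Finset.sum_div, div_self (hsum_pos z).ne']
    rw [this, mul_one]
  -- pointwise inequality
  have hptwise : ∀ᵐ z : Fin K → Z ∂μK, G z - B z ≤
      G z * log (f (z 0) / g (z 0)) -
      (f (z 0) / s) * (∏ k ∈ Finset.univ.erase (0 : Fin K), g (z k)) *
        log ((1 / (K : ℝ)) * ∑ k, f (z k) / g (z k)) -
      (f (z 0) / s) * (∏ k ∈ Finset.univ.erase (0 : Fin K), g (z k)) *
        log (exp (t (z 0)) / ((1 / (K : ℝ)) * ∑ k, exp (t (z k)))) := by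
    filter_upwards [hae] with z hz
    set S := ∑ j, exp (t (z j)) with hS
    set R := ∑ k, f (z k) / g (z k) with hR
    set P := ∏ j : Fin K, g (z j) with hP
    have hSpos : 0 < S := hsum_pos z
    have hr : ∀ k : Fin K, 0 < f (z k) / g (z k) := fun k => div_pos (hz k).1 (hz k).2
    have hRpos : 0 < R := Finset.sum_pos (fun k _ => hr k) Finset.univ_nonempty
    have hPpos : 0 < P := Finset.prod_pos fun j _ => (hz j).2
    have hGpos : 0 < G z :=
      mul_pos (div_pos (hz 0).1 hs_pos) (Finset.prod_pos fun k _ => (hz k).2)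
    -- closed forms
    have hGf : G z = (f (z 0) / g (z 0)) * P / s := by
      simp only [hG, hP]
      rw [← Finset.mul_prod_erase Finset.univ (fun j => g (z j)) (Finset.mem_univ (0 : Fin K))]
      field_simp [(hz 0).2.ne']
    have hBkf : ∀ k : Fin K, Bk k z = (f (z k) / g (z k)) * P / s * (exp (t (z 0)) / S) := by
      intro k
      simp only [hBk, hsm, hP, ← hS]
      rw [← Finset.mul_prod_erase Finset.univ (fun j => g (z j)) (Finset.mem_univ k)]
      field_simp [(hz k).2.ne', hSpos.ne']
    have hBf : B z = R * P / s * (exp (t (z 0)) / S) := by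
      simp only [hB]
      rw [Finset.sum_congr rfl fun k _ => hBkf k, hR]
      rw [← Finset.sum_mul, ← Finset.sum_div, ← Finset.sum_mul]
    have hBpos : 0 < B z := by
      rw [hBf]; positivity
    -- the log identity
    have hGB : G z / B z = (f (z 0) / g (z 0)) * S / (R * exp (t (z 0))) := by
      rw [hGf, hBf]
      field_simp [hPpos.ne', hSpos.ne', hRpos.ne', (hz 0).2.ne', (exp_pos (t (z 0))).ne']
    have hlogGB : log (G z / B z)
        = log (f (z 0) / g (z 0)) - log ((1 / (K : ℝ)) * R) -
          log (exp (t (z 0)) / ((1 / (K : ℝ)) * S)) := by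
      rw [hGB]
      rw [Real.log_div (mul_ne_zero (hr 0).ne' hSpos.ne') (mul_ne_zero hRpos.ne' (exp_pos _).ne'),
        Real.log_mul (hr 0).ne' hSpos.ne',
        Real.log_mul hRpos.ne' (exp_pos _).ne',
        Real.log_mul (one_div_ne_zero hK0.ne') hRpos.ne',
        Real.log_div (exp_pos _).ne' (mul_ne_zero (one_div_ne_zero hK0.ne') hSpos.ne'),
        Real.log_mul (one_div_ne_zero hK0.ne') hSpos.ne',
        Real.log_exp]
      ring
    -- factor out G z
    have hfactor : G z * log (f (z 0) / g (z 0)) -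
        (f (z 0) / s) * (∏ k ∈ Finset.univ.erase (0 : Fin K), g (z k)) *
          log ((1 / (K : ℝ)) * R) -
        (f (z 0) / s) * (∏ k ∈ Finset.univ.erase (0 : Fin K), g (z k)) *
          log (exp (t (z 0)) / ((1 / (K : ℝ)) * S))
        = G z * log (G z / B z) := by
      rw [hlogGB]
      simp only [hG]
      ring
    rw [hfactor]
    -- final convexity bound
    have h1 : log (B z / G z) ≤ B z / G z - 1 :=
      Real.log_le_sub_one_of_pos (div_pos hBpos hGpos)
    have h2 : G z * log (B z / G z) ≤ B z - G z := by
      have h3 := mul_le_mul_of_nonneg_left h1 hGpos.le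
      calc G z * log (B z / G z) ≤ G z * (B z / G z - 1) := h3
        _ = B z - G z := by field_simp
    have h4 : log (G z / B z) = - log (B z / G z) := by
      rw [← Real.log_inv, inv_div]
    rw [h4]
    nlinarith [h2]
  -- integrate the pointwise inequality
  have hD_int : Integrable (fun z : Fin K → Z =>
      G z * log (f (z 0) / g (z 0)) -
      (f (z 0) / s) * (∏ k ∈ Finset.univ.erase (0 : Fin K), g (z k)) *
        log ((1 / (K : ℝ)) * ∑ k, f (z k) / g (z k)) -
      (f (z 0) / s) * (∏ k ∈ Finset.univ.erase (0 : Fin K), g (z k)) *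
        log (exp (t (z 0)) / ((1 / (K : ℝ)) * ∑ k, exp (t (z k))))) μK :=
    (hA_int.sub hiw).sub hgw
  have hkey := integral_mono_ae (hG_int.sub hB_int) hD_int hptwise
  have h00 : ∫ z : Fin K → Z, (G z - B z) ∂μK = 0 := by
    rw [integral_sub hG_int hB_int, hG1, hB1, sub_self]
  have hDval : ∫ z : Fin K → Z,
      (G z * log (f (z 0) / g (z 0)) -
      (f (z 0) / s) * (∏ k ∈ Finset.univ.erase (0 : Fin K), g (z k)) *
        log ((1 / (K : ℝ)) * ∑ k, f (z k) / g (z k)) -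
      (f (z 0) / s) * (∏ k ∈ Finset.univ.erase (0 : Fin K), g (z k)) *
        log (exp (t (z 0)) / ((1 / (K : ℝ)) * ∑ k, exp (t (z k))))) ∂μK
      = (1 / s) * (∫ z, f z * log (f z / g z) ∂ν) -
        (∫ z : Fin K → Z,
          (f (z 0) / s) * (∏ k ∈ Finset.univ.erase (0 : Fin K), g (z k)) *
            log ((1 / (K : ℝ)) * ∑ k, f (z k) / g (z k)) ∂μK) -
        (∫ z : Fin K → Z,
          (f (z 0) / s) * (∏ k ∈ Finset.univ.erase (0 : Fin K), g (z k)) *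
            log (exp (t (z 0)) / ((1 / (K : ℝ)) * ∑ k, exp (t (z k)))) ∂μK) := by
    have e1 : ∫ z : Fin K → Z,
        (G z * log (f (z 0) / g (z 0)) -
        (f (z 0) / s) * (∏ k ∈ Finset.univ.erase (0 : Fin K), g (z k)) *
          log ((1 / (K : ℝ)) * ∑ k, f (z k) / g (z k)) -
        (f (z 0) / s) * (∏ k ∈ Finset.univ.erase (0 : Fin K), g (z k)) *
          log (exp (t (z 0)) / ((1 / (K : ℝ)) * ∑ k, exp (t (z k))))) ∂μK
        = (∫ z : Fin K → Z,
            (G z * log (f (z 0) / g (z 0)) -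
            (f (z 0) / s) * (∏ k ∈ Finset.univ.erase (0 : Fin K), g (z k)) *
              log ((1 / (K : ℝ)) * ∑ k, f (z k) / g (z k))) ∂μK) -
          ∫ z : Fin K → Z,
            (f (z 0) / s) * (∏ k ∈ Finset.univ.erase (0 : Fin K), g (z k)) *
              log (exp (t (z 0)) / ((1 / (K : ℝ)) * ∑ k, exp (t (z k)))) ∂μK :=
      integral_sub (hA_int.sub hiw) hgw
    have e2 : ∫ z : Fin K → Z,
        (G z * log (f (z 0) / g (z 0)) -
        (f (z 0) / s) * (∏ k ∈ Finset.univ.erase (0 : Fin K), g (z k)) *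
          log ((1 / (K : ℝ)) * ∑ k, f (z k) / g (z k))) ∂μK
        = (∫ z : Fin K → Z, G z * log (f (z 0) / g (z 0)) ∂μK) -
          ∫ z : Fin K → Z,
            (f (z 0) / s) * (∏ k ∈ Finset.univ.erase (0 : Fin K), g (z k)) *
              log ((1 / (K : ℝ)) * ∑ k, f (z k) / g (z k)) ∂μK :=
      integral_sub hA_int hiw
    rw [e1, e2, hA]
  have hkey' : (0:ℝ) ≤ (1 / s) * (∫ z, f z * log (f z / g z) ∂ν) -
        (∫ z : Fin K → Z,
          (f (z 0) / s) * (∏ k ∈ Finset.univ.erase (0 : Fin K), g (z k)) *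
            log ((1 / (K : ℝ)) * ∑ k, f (z k) / g (z k)) ∂μK) -
        (∫ z : Fin K → Z,
          (f (z 0) / s) * (∏ k ∈ Finset.univ.erase (0 : Fin K), g (z k)) *
            log (exp (t (z 0)) / ((1 / (K : ℝ)) * ∑ k, exp (t (z k)))) ∂μK) := by
    rw [← hDval]
    calc (0:ℝ) = ∫ z : Fin K → Z, (G z - B z) ∂μK := h00.symm
      _ ≤ _ := hkey
  have h5 := mul_le_mul_of_nonneg_left hkey' hs_pos.le
  rw [mul_zero] at h5
  have h6 : s * (1 / s * ∫ z, f z * log (f z / g z) ∂ν)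
      = ∫ z, f z * log (f z / g z) ∂ν := by field_simp
  nlinarith [h5]

end Stmt6Aux

/-- Logarithmic improvement of GIWAE over the Barber–Agakov bound. -/
theorem giwae_log_improvement
    (μX : Measure X) (μZ : Measure Z) [SigmaFinite μX] [SigmaFinite μZ]
    (p q : X × Z → ℝ)
    (hp_meas : Measurable p)
    (hp_pos : ∀ᵐ w ∂(μX.prod μZ), 0 < p w)
    (hp_int : Integrable p (μX.prod μZ))
    (hp_norm : ∫ w, p w ∂(μX.prod μZ) = 1)
    (hq_meas : Measurable q)
    (hq_pos : ∀ᵐ w ∂(μX.prod μZ), 0 < q w)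
    (hq_norm : ∀ x, ∫ z, q (x, z) ∂μZ = 1)
    (K : ℕ) [NeZero K]
    (h_int_ba : Integrable (fun w => p w * log (q w / pZ μX p w.2)) (μX.prod μZ))
    (h_int_h : Integrable (fun w => p w * log (p w / pZ μX p w.2)) (μX.prod μZ))
    (h_int_iwae_inner : ∀ x, Integrable
      (fun z : Fin K → Z =>
        (p (x, z 0) / pX μZ p x) * (∏ k ∈ Finset.univ.erase (0 : Fin K), q (x, z k)) *
          log ((1 / (K : ℝ)) * ∑ k, p (x, z k) / q (x, z k)))
      (Measure.pi fun _ : Fin K => μZ))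
    (h_int_iwae_outer : Integrable (fun x => pX μZ p x * iwaeInner μZ p q K x) μX) :
    (∀ T : X × Z → ℝ, Measurable T →
      (∀ x, Integrable
        (fun z : Fin K → Z =>
          (p (x, z 0) / pX μZ p x) * (∏ k ∈ Finset.univ.erase (0 : Fin K), q (x, z k)) *
            log (exp (T (x, z 0)) / ((1 / (K : ℝ)) * ∑ k, exp (T (x, z k)))))
        (Measure.pi fun _ : Fin K => μZ)) →
      Integrable (fun x => pX μZ p x * giwaeInner μZ p q T K x) μX →
      IGIWAEL μX μZ p q T K ≤ IIWAEL μX μZ p q K) ∧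
    IIWAEL μX μZ p q K ≤ IBAL μX μZ p q + log K ∧
    (∀ c : ℝ, IGIWAEL μX μZ p q (fun _ => c) K = IBAL μX μZ p q) ∧
    (∀ S : Set (X × Z → ℝ),
      (∀ T ∈ S, Measurable T ∧
        (∀ x, Integrable
          (fun z : Fin K → Z =>
            (p (x, z 0) / pX μZ p x) * (∏ k ∈ Finset.univ.erase (0 : Fin K), q (x, z k)) *
              log (exp (T (x, z 0)) / ((1 / (K : ℝ)) * ∑ k, exp (T (x, z k)))))
          (Measure.pi fun _ : Fin K => μZ)) ∧
        Integrable (fun x => pX μZ p x * giwaeInner μZ p q T K x) μX) →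
      (∃ c : ℝ, (fun _ => c) ∈ S) →
      sSup ((fun T => IGIWAEL μX μZ p q T K) '' S)
        ∈ Set.Icc (IBAL μX μZ p q) (IBAL μX μZ p q + log K)) := by
  -- the measures are nonzero thanks to the normalization of `p`
  have hXne : μX ≠ 0 := by
    intro h
    rw [h, Measure.zero_prod, integral_zero_measure] at hp_norm
    exact zero_ne_one hp_norm
  have hZne : μZ ≠ 0 := by
    intro h
    rw [h, Measure.prod_zero, integral_zero_measure] at hp_norm
    exact zero_ne_one hp_norm
  have hK1 : (1 : ℝ) ≤ (K : ℝ) := by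
    exact_mod_cast Nat.one_le_iff_ne_zero.mpr (NeZero.ne K)
  -- positivity of pZ almost everywhere
  have hzslice_int : ∀ᵐ z ∂μZ, Integrable (fun x => p (x, z)) μX :=
    hp_int.swap.prod_right_ae
  have hzslice_pos : ∀ᵐ z ∂μZ, ∀ᵐ x ∂μX, 0 < p (x, z) := by
    have hswap : ∀ᵐ w ∂(μZ.prod μX), 0 < p (w.2, w.1) := by
      rw [← Measure.prod_swap]
      have hmeas : MeasurableSet {w : Z × X | 0 < p (w.2, w.1)} :=
        measurableSet_lt measurable_const
          (hp_meas.comp (measurable_snd.prodMk measurable_fst))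
      rw [ae_map_iff measurable_swap.aemeasurable hmeas]
      exact hp_pos
    exact Measure.ae_ae_of_ae_prod hswap
  have hpZ_pos_z : ∀ᵐ z ∂μZ, 0 < pZ μX p z := by
    filter_upwards [hzslice_int, hzslice_pos] with z h1 h2
    exact Stmt6Aux.integral_pos_of_ae_pos hXne h1 h2
  have hpZ_pos : ∀ᵐ w ∂(μX.prod μZ), 0 < pZ μX p w.2 := by
    have hset : {w : X × Z | ¬ 0 < pZ μX p w.2}
        = Set.univ ×ˢ {z | ¬ 0 < pZ μX p z} := by
      ext w; simp [Set.mem_prod]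
    have hnull : (μX.prod μZ) {w : X × Z | ¬ 0 < pZ μX p w.2} = 0 := by
      rw [hset, Measure.prod_prod, ae_iff.mp hpZ_pos_z, mul_zero]
    exact ae_iff.mpr hnull
  -- the basic identity  HXZ - IBAL = ∫∫ p log (p/q)
  have hiden : (fun w => p w * log (p w / pZ μX p w.2) - p w * log (q w / pZ μX p w.2))
      =ᵐ[μX.prod μZ] fun w => p w * log (p w / q w) := by
    filter_upwards [hp_pos, hq_pos, hpZ_pos] with w h1 h2 h3
    rw [Real.log_div h1.ne' h3.ne', Real.log_div h2.ne' h3.ne', Real.log_div h1.ne' h2.ne']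
    ring
  have hpq_int : Integrable (fun w => p w * log (p w / q w)) (μX.prod μZ) :=
    (h_int_h.sub h_int_ba).congr hiden
  have e3 : ∫ w, (p w * log (p w / pZ μX p w.2) - p w * log (q w / pZ μX p w.2))
        ∂(μX.prod μZ)
      = (∫ w, p w * log (p w / pZ μX p w.2) ∂(μX.prod μZ))
        - ∫ w, p w * log (q w / pZ μX p w.2) ∂(μX.prod μZ) :=
    integral_sub h_int_h h_int_ba
  have hHI : HXZ μX μZ p - IBAL μX μZ p q
      = ∫ w, p w * log (p w / q w) ∂(μX.prod μZ) := by
    show (∫ w, p w * log (p w / pZ μX p w.2) ∂(μX.prod μZ))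
        - (∫ w, p w * log (q w / pZ μX p w.2) ∂(μX.prod μZ)) = _
    rw [← e3]
    exact integral_congr_ae hiden
  have hfub : ∫ w, p w * log (p w / q w) ∂(μX.prod μZ)
      = ∫ x, ∫ z, p (x, z) * log (p (x, z) / q (x, z)) ∂μZ ∂μX :=
    integral_prod _ hpq_int
  have hPhi_int : Integrable (fun x => ∫ z, p (x, z) * log (p (x, z) / q (x, z)) ∂μZ) μX :=
    hpq_int.integral_prod_left
  have hpX_int : Integrable (fun x => pX μZ p x) μX := hp_int.integral_prod_left
  have hpX1 : ∫ x, pX μZ p x ∂μX = 1 := by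
    rw [← hp_norm, integral_prod _ hp_int]
    rfl
  -- slice facts
  have hq_slice_int : ∀ x, Integrable (fun z => q (x, z)) μZ := by
    intro x
    by_contra h
    have h1 := hq_norm x
    rw [integral_undef h] at h1
    exact zero_ne_one h1
  have hslice_p_int : ∀ᵐ x ∂μX, Integrable (fun z => p (x, z)) μZ := hp_int.prod_right_ae
  have hslice_ppos : ∀ᵐ x ∂μX, ∀ᵐ z ∂μZ, 0 < p (x, z) := Measure.ae_ae_of_ae_prod hp_pos
  have hslice_qpos : ∀ᵐ x ∂μX, ∀ᵐ z ∂μZ, 0 < q (x, z) := Measure.ae_ae_of_ae_prod hq_pos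
  have hslice_pl_int : ∀ᵐ x ∂μX,
      Integrable (fun z => p (x, z) * log (p (x, z) / q (x, z))) μZ :=
    hpq_int.prod_right_ae
  have hpX_pos : ∀ᵐ x ∂μX, 0 < pX μZ p x := by
    filter_upwards [hslice_p_int, hslice_ppos] with x h1 h2
    exact Stmt6Aux.integral_pos_of_ae_pos hZne h1 h2
  -- a.e. pointwise inequality for part (ii)
  have haeQ : ∀ᵐ x ∂μX, (∫ z, p (x, z) * log (p (x, z) / q (x, z)) ∂μZ)
      ≤ pX μZ p x * iwaeInner μZ p q K x + pX μZ p x * log K := by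
    filter_upwards [hslice_p_int, hslice_ppos, hslice_qpos, hslice_pl_int, hpX_pos]
      with x h1 h2 h3 h4 h5
    have key : (∫ z, p (x, z) * log (p (x, z) / q (x, z)) ∂μZ)
        ≤ pX μZ p x * (∫ z : Fin K → Z,
            (p (x, z 0) / pX μZ p x) * (∏ k ∈ Finset.univ.erase (0 : Fin K), q (x, z k)) *
              log ((1 / (K : ℝ)) * ∑ k, p (x, z k) / q (x, z k))
            ∂(Measure.pi fun _ : Fin K => μZ)) + pX μZ p x * log K :=
      Stmt6Aux.perx_iwae μZ K (fun z => p (x, z)) (fun z => q (x, z)) (pX μZ p x)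
        h1 (hq_slice_int x) h2 h3 (hq_norm x) rfl h5 h4 (h_int_iwae_inner x)
    exact key
  -- part (ii)
  have hII : IIWAEL μX μZ p q K ≤ IBAL μX μZ p q + log K := by
    have hmono : (∫ x, ∫ z, p (x, z) * log (p (x, z) / q (x, z)) ∂μZ ∂μX)
        ≤ ∫ x, (pX μZ p x * iwaeInner μZ p q K x + pX μZ p x * log K) ∂μX :=
      integral_mono_ae hPhi_int (h_int_iwae_outer.add (hpX_int.mul_const (log K))) haeQ
    have hadd : ∫ x, (pX μZ p x * iwaeInner μZ p q K x + pX μZ p x * log K) ∂μX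
        = (∫ x, pX μZ p x * iwaeInner μZ p q K x ∂μX)
          + ∫ x, pX μZ p x * log K ∂μX :=
      integral_add h_int_iwae_outer (hpX_int.mul_const (log K))
    have hc : ∫ x, pX μZ p x * log K ∂μX = log K := by
      rw [integral_mul_const, hpX1, one_mul]
    show HXZ μX μZ p - (∫ x, pX μZ p x * iwaeInner μZ p q K x ∂μX)
        ≤ IBAL μX μZ p q + log K
    linarith [hHI, hfub, hmono, hadd, hc]
  -- part (i)
  have hI : ∀ T : X × Z → ℝ, Measurable T →
      (∀ x, Integrable
        (fun z : Fin K → Z =>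
          (p (x, z 0) / pX μZ p x) * (∏ k ∈ Finset.univ.erase (0 : Fin K), q (x, z k)) *
            log (exp (T (x, z 0)) / ((1 / (K : ℝ)) * ∑ k, exp (T (x, z k)))))
        (Measure.pi fun _ : Fin K => μZ)) →
      Integrable (fun x => pX μZ p x * giwaeInner μZ p q T K x) μX →
      IGIWAEL μX μZ p q T K ≤ IIWAEL μX μZ p q K := by
    intro T hTmeas hTinner hTouter
    have haeP : ∀ᵐ x ∂μX,
        pX μZ p x * giwaeInner μZ p q T K x + pX μZ p x * iwaeInner μZ p q K x
          ≤ ∫ z, p (x, z) * log (p (x, z) / q (x, z)) ∂μZ := by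
      filter_upwards [hslice_p_int, hslice_ppos, hslice_qpos, hslice_pl_int, hpX_pos]
        with x h1 h2 h3 h4 h5
      have key : pX μZ p x * (∫ z : Fin K → Z,
            (p (x, z 0) / pX μZ p x) * (∏ k ∈ Finset.univ.erase (0 : Fin K), q (x, z k)) *
              log (exp (T (x, z 0)) / ((1 / (K : ℝ)) * ∑ k, exp (T (x, z k))))
            ∂(Measure.pi fun _ : Fin K => μZ))
          ≤ (∫ z, p (x, z) * log (p (x, z) / q (x, z)) ∂μZ) -
            pX μZ p x * (∫ z : Fin K → Z,
              (p (x, z 0) / pX μZ p x) * (∏ k ∈ Finset.univ.erase (0 : Fin K), q (x, z k)) *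
                log ((1 / (K : ℝ)) * ∑ k, p (x, z k) / q (x, z k))
              ∂(Measure.pi fun _ : Fin K => μZ)) :=
        Stmt6Aux.perx_giwae μZ K (fun z => p (x, z)) (fun z => q (x, z))
          (fun z => T (x, z)) (pX μZ p x)
          (hp_meas.comp measurable_prodMk_left) (hq_meas.comp measurable_prodMk_left)
          (hTmeas.comp measurable_prodMk_left)
          h1 (hq_slice_int x) h2 h3 (hq_norm x) rfl h5 h4 (h_int_iwae_inner x) (hTinner x)
      have e1 : giwaeInner μZ p q T K x = ∫ z : Fin K → Z,
            (p (x, z 0) / pX μZ p x) * (∏ k ∈ Finset.univ.erase (0 : Fin K), q (x, z k)) *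
              log (exp (T (x, z 0)) / ((1 / (K : ℝ)) * ∑ k, exp (T (x, z k))))
            ∂(Measure.pi fun _ : Fin K => μZ) := rfl
      have e2 : iwaeInner μZ p q K x = ∫ z : Fin K → Z,
            (p (x, z 0) / pX μZ p x) * (∏ k ∈ Finset.univ.erase (0 : Fin K), q (x, z k)) *
              log ((1 / (K : ℝ)) * ∑ k, p (x, z k) / q (x, z k))
            ∂(Measure.pi fun _ : Fin K => μZ) := rfl
      rw [e1, e2]
      linarith [key]
    have hmono : (∫ x, (pX μZ p x * giwaeInner μZ p q T K x
          + pX μZ p x * iwaeInner μZ p q K x) ∂μX)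
        ≤ ∫ x, ∫ z, p (x, z) * log (p (x, z) / q (x, z)) ∂μZ ∂μX :=
      integral_mono_ae (hTouter.add h_int_iwae_outer) hPhi_int haeP
    have hadd2 : ∫ x, (pX μZ p x * giwaeInner μZ p q T K x
          + pX μZ p x * iwaeInner μZ p q K x) ∂μX
        = (∫ x, pX μZ p x * giwaeInner μZ p q T K x ∂μX)
          + ∫ x, pX μZ p x * iwaeInner μZ p q K x ∂μX :=
      integral_add hTouter h_int_iwae_outer
    show IBAL μX μZ p q + (∫ x, pX μZ p x * giwaeInner μZ p q T K x ∂μX)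
        ≤ HXZ μX μZ p - ∫ x, pX μZ p x * iwaeInner μZ p q K x ∂μX
    linarith [hHI, hfub, hmono, hadd2]
  -- part (iii)
  have hIII : ∀ c : ℝ, IGIWAEL μX μZ p q (fun _ => c) K = IBAL μX μZ p q := by
    intro c
    have hK0 : ((K : ℕ) : ℝ) ≠ 0 := by
      exact_mod_cast NeZero.ne K
    have hlog : log (exp c / ((1 / (K : ℝ)) * ∑ _k : Fin K, exp c)) = 0 := by
      rw [Finset.sum_const, Finset.card_univ, Fintype.card_fin, nsmul_eq_mul]
      rw [show (1 / (K : ℝ)) * ((K : ℝ) * exp c) = exp c by field_simp]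
      rw [div_self (exp_pos c).ne', Real.log_one]
    have hzero : ∀ x, giwaeInner μZ p q (fun _ => c) K x = 0 := by
      intro x
      have hfun : (fun z : Fin K → Z =>
          (p (x, z 0) / pX μZ p x) * (∏ k ∈ Finset.univ.erase (0 : Fin K), q (x, z k)) *
            log (exp ((fun _ : X × Z => c) (x, z 0)) /
              ((1 / (K : ℝ)) * ∑ k : Fin K, exp ((fun _ : X × Z => c) (x, z k)))))
          = fun _ => (0 : ℝ) := by
        funext z
        simp only
        rw [hlog, mul_zero]
      show ∫ z : Fin K → Z, _ ∂(Measure.pi fun _ : Fin K => μZ) = 0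
      rw [hfun, integral_zero]
    show IBAL μX μZ p q + (∫ x, pX μZ p x * giwaeInner μZ p q (fun _ => c) K x ∂μX)
        = IBAL μX μZ p q
    have : ∫ x, pX μZ p x * giwaeInner μZ p q (fun _ => c) K x ∂μX = 0 := by
      simp only [hzero, mul_zero, integral_zero]
    rw [this, add_zero]
  refine ⟨hI, hII, hIII, ?_⟩
  -- part (iv)
  intro S hS hc
  obtain ⟨c, hcS⟩ := hc
  have hmem : IBAL μX μZ p q ∈ (fun T => IGIWAEL μX μZ p q T K) '' S :=
    ⟨fun _ => c, hcS, hIII c⟩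
  have hub : ∀ v ∈ (fun T => IGIWAEL μX μZ p q T K) '' S,
      v ≤ IBAL μX μZ p q + log K := by
    rintro v ⟨T, hT, rfl⟩
    obtain ⟨hTm, hTi, hTo⟩ := hS T hT
    exact le_trans (hI T hTm hTi hTo) hII
  exact Set.mem_Icc.mpr
    ⟨le_csSup ⟨IBAL μX μZ p q + log K, fun v hv => hub v hv⟩ hmem,
     csSup_le ⟨_, hmem⟩ hub⟩

end Stmt6
end
end
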